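/- arXiv:math/9812111 — 10 statements merged into one kernel-verified Lean document; each statement's English description precedes it below -/
import Mathlib

section
/- Let b > 0 and let (f_n) be a sequence of entire functions with ‖f_n‖_b < ∞ for every n which is Cauchy with respect to the norm ‖·‖_b. Then there exists an entire function f with ‖f‖_b < ∞ such that ‖f_n − f‖_b → 0; moreover f_n → f uniformly on every compact subset of ℂ. In particular, the space B_b = {f entire : ‖f‖_b < ∞} with the norm ‖·‖_b is complete. -/
open Filter Topology Nat
open scoped ENNReal

/-- The norm `‖f‖_b = sup_{k} b^{-k} |f^{(k)}(0)|`, valued in `ℝ≥0∞`. -/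
noncomputable def normB (b : ℝ) (f : ℂ → ℂ) : ℝ≥0∞ :=
  ⨆ k : ℕ, ENNReal.ofReal (‖iteratedDeriv k f 0‖ / b ^ k)

lemma coeff_le_of_normB_lt {b : ℝ} (hb : 0 < b) {h : ℂ → ℂ} {ε : ℝ} (hε : 0 < ε)
    (hlt : normB b h < ENNReal.ofReal ε) (k : ℕ) :
    ‖iteratedDeriv k h 0‖ ≤ ε * b ^ k := by
  have h1 : ENNReal.ofReal (‖iteratedDeriv k h 0‖ / b ^ k) < ENNReal.ofReal ε :=
    lt_of_le_of_lt (le_iSup (fun k => ENNReal.ofReal (‖iteratedDeriv k h 0‖ / b ^ k)) k) hlt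
  have h2 : ‖iteratedDeriv k h 0‖ / b ^ k < ε := (ENNReal.ofReal_lt_ofReal_iff hε).mp h1
  have hbk : (0:ℝ) < b ^ k := pow_pos hb k
  calc ‖iteratedDeriv k h 0‖ = ‖iteratedDeriv k h 0‖ / b ^ k * b ^ k := by field_simp
    _ ≤ ε * b ^ k := by nlinarith

lemma entire_bound {b C : ℝ} {h : ℂ → ℂ} (hh : Differentiable ℂ h)
    (hcoef : ∀ k, ‖iteratedDeriv k h 0‖ ≤ C * b ^ k) (z : ℂ) :
    ‖h z‖ ≤ C * Real.exp (b * ‖z‖) := by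
  have hs := Complex.hasSum_taylorSeries_of_entire hh 0 z
  have hexp : HasSum (fun n : ℕ => C * ((b * ‖z‖) ^ n / (n ! : ℝ))) (C * Real.exp (b * ‖z‖)) := by
    have := NormedSpace.expSeries_div_hasSum_exp (b * ‖z‖)
    rw [← Real.exp_eq_exp_ℝ] at this
    exact this.mul_left C
  have hb1 : ∀ n : ℕ, ‖(n ! : ℂ)⁻¹ • (z - 0) ^ n • iteratedDeriv n h 0‖
      ≤ C * ((b * ‖z‖) ^ n / (n ! : ℝ)) := by
    intro n
    rw [norm_smul, norm_smul, norm_inv, norm_pow, sub_zero]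
    have h0 : ‖(n ! : ℂ)‖ = (n ! : ℝ) := by
      rw [Complex.norm_natCast]
    rw [h0, mul_pow]
    have hfact : (0:ℝ) < (n ! : ℝ) := by positivity
    have h2 := hcoef n
    have h3 : ‖z‖ ^ n * ‖iteratedDeriv n h 0‖ ≤ ‖z‖ ^ n * (C * b ^ n) := by
      have : (0:ℝ) ≤ ‖z‖ ^ n := by positivity
      nlinarith
    calc ((n !:ℝ))⁻¹ * (‖z‖ ^ n * ‖iteratedDeriv n h 0‖)
        ≤ ((n !:ℝ))⁻¹ * (‖z‖ ^ n * (C * b ^ n)) := by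
          apply mul_le_mul_of_nonneg_left h3 (by positivity)
      _ = C * (b ^ n * ‖z‖ ^ n / n !) := by ring
  calc ‖h z‖ = ‖∑' n : ℕ, (n ! : ℂ)⁻¹ • (z - 0) ^ n • iteratedDeriv n h 0‖ := by
        rw [hs.tsum_eq]
    _ ≤ C * Real.exp (b * ‖z‖) := tsum_of_norm_bounded hexp hb1

lemma diff_iteratedDeriv {h : ℂ → ℂ} (hh : Differentiable ℂ h) (k : ℕ) :
    Differentiable ℂ (iteratedDeriv k h) := by
  induction k with
  | zero => simpa using hh
  | succ k ih =>
    rw [iteratedDeriv_succ]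
    exact Complex.analyticOnNhd_univ_iff_differentiable.mp
      (Complex.analyticOnNhd_univ_iff_differentiable.mpr ih).deriv

lemma iteratedDeriv_sub' {h g : ℂ → ℂ} (hh : Differentiable ℂ h) (hg : Differentiable ℂ g)
    (k : ℕ) (x : ℂ) :
    iteratedDeriv k (h - g) x = iteratedDeriv k h x - iteratedDeriv k g x := by
  rw [← iteratedDerivWithin_univ, ← iteratedDerivWithin_univ, ← iteratedDerivWithin_univ]
  exact iteratedDerivWithin_sub (Set.mem_univ x) uniqueDiffOn_univ
    ((Complex.analyticOnNhd_univ_iff_differentiable.mpr hh).contDiff.contDiffWithinAt)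
    ((Complex.analyticOnNhd_univ_iff_differentiable.mpr hg).contDiff.contDiffWithinAt)
theorem stmt_0 (b : ℝ) (hb : 0 < b) (f : ℕ → ℂ → ℂ)
    (hdiff : ∀ n, Differentiable ℂ (f n))
    (hfin : ∀ n, normB b (f n) < ⊤)
    (hcauchy : ∀ ε : ℝ, 0 < ε → ∃ N : ℕ, ∀ m ≥ N, ∀ p ≥ N,
      normB b (f m - f p) < ENNReal.ofReal ε) :
    ∃ g : ℂ → ℂ, Differentiable ℂ g ∧ normB b g < ⊤ ∧
      Tendsto (fun n => normB b (f n - g)) atTop (nhds 0) ∧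
      ∀ K : Set ℂ, IsCompact K → TendstoUniformlyOn (fun n => f n) g atTop K := by
  -- uniform bound on differences
  have key : ∀ ε : ℝ, 0 < ε → ∃ N : ℕ, ∀ m ≥ N, ∀ p ≥ N, ∀ z : ℂ,
      ‖f m z - f p z‖ ≤ ε * Real.exp (b * ‖z‖) := by
    intro ε hε
    obtain ⟨N, hN⟩ := hcauchy ε hε
    refine ⟨N, fun m hm p hp z => ?_⟩
    have hd : Differentiable ℂ (f m - f p) := (hdiff m).sub (hdiff p)
    have hc : ∀ k, ‖iteratedDeriv k (f m - f p) 0‖ ≤ ε * b ^ k :=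
      coeff_le_of_normB_lt hb hε (hN m hm p hp)
    simpa using entire_bound hd hc z
  -- pointwise Cauchy
  have hcau : ∀ z : ℂ, CauchySeq (fun n => f n z) := by
    intro z
    rw [Metric.cauchySeq_iff]
    intro δ hδ
    set E := Real.exp (b * ‖z‖) with hEdef
    have hE : 0 < E := Real.exp_pos _
    obtain ⟨N, hN⟩ := key (δ / (2 * E)) (by positivity)
    refine ⟨N, fun m hm p hp => ?_⟩
    have h1 := hN m hm p hp z
    rw [dist_eq_norm]
    have h2 : δ / (2 * E) * E = δ / 2 := by field_simp
    calc ‖f m z - f p z‖ ≤ δ / (2 * E) * E := h1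
      _ = δ / 2 := h2
      _ < δ := by linarith
  choose g hg using fun z => cauchySeq_tendsto_of_complete (hcau z)
  -- uniform Cauchy on compacts
  have hUC : ∀ K : Set ℂ, IsCompact K → UniformCauchySeqOn f atTop K := by
    intro K hK
    obtain ⟨R, hR⟩ := hK.isBounded.exists_norm_le
    rw [Metric.uniformCauchySeqOn_iff]
    intro δ hδ
    set E := Real.exp (b * |R|) with hEdef
    have hE : 0 < E := Real.exp_pos _
    obtain ⟨N, hN⟩ := key (δ / (2 * E)) (by positivity)
    refine ⟨N, fun m hm p hp z hz => ?_⟩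
    have h1 := hN m hm p hp z
    have hEz : Real.exp (b * ‖z‖) ≤ E := by
      apply Real.exp_le_exp.mpr
      have := hR z hz
      have : ‖z‖ ≤ |R| := le_trans this (le_abs_self R)
      nlinarith
    rw [dist_eq_norm]
    have h2 : δ / (2 * E) * E = δ / 2 := by field_simp
    calc ‖f m z - f p z‖ ≤ δ / (2 * E) * Real.exp (b * ‖z‖) := h1
      _ ≤ δ / (2 * E) * E := by
          apply mul_le_mul_of_nonneg_left hEz (by positivity)
      _ = δ / 2 := h2
      _ < δ := by linarith
  have hTU : ∀ K : Set ℂ, IsCompact K → TendstoUniformlyOn f g atTop K :=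
    fun K hK => (hUC K hK).tendstoUniformlyOn_of_tendsto (fun z _ => hg z)
  have hTLU : TendstoLocallyUniformly f g atTop :=
    tendstoLocallyUniformly_iff_forall_isCompact.mpr hTU
  have hTLUOn : TendstoLocallyUniformlyOn f g atTop Set.univ :=
    (tendstoLocallyUniformlyOn_univ).mpr hTLU
  have hgdiff : Differentiable ℂ g := by
    have h1 := hTLUOn.differentiableOn
      (Eventually.of_forall fun n => (hdiff n).differentiableOn) isOpen_univ
    exact differentiableOn_univ.mp h1
  -- derivative convergence
  have hder : ∀ k : ℕ, TendstoLocallyUniformlyOn (fun n => iteratedDeriv k (f n))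
      (iteratedDeriv k g) atTop Set.univ := by
    intro k
    induction k with
    | zero => simpa [iteratedDeriv_zero] using hTLUOn
    | succ k ih =>
      have h1 := ih.deriv
        (Eventually.of_forall fun n => (diff_iteratedDeriv (hdiff n) k).differentiableOn)
        isOpen_univ
      simpa [iteratedDeriv_succ, Function.comp_def] using h1
  have hptwise : ∀ k : ℕ, Tendsto (fun n => iteratedDeriv k (f n) 0) atTop
      (𝓝 (iteratedDeriv k g 0)) :=
    fun k => (hder k).tendsto_at (Set.mem_univ (0 : ℂ))
  -- coefficient bounds for f m - g
  have hnbcoef : ∀ ε : ℝ, 0 < ε → ∃ N : ℕ, ∀ m ≥ N, ∀ k : ℕ,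
      ‖iteratedDeriv k (f m) 0 - iteratedDeriv k g 0‖ ≤ ε * b ^ k := by
    intro ε hε
    obtain ⟨N, hN⟩ := hcauchy ε hε
    refine ⟨N, fun m hm k => ?_⟩
    have hlim : Tendsto (fun p => ‖iteratedDeriv k (f m) 0 - iteratedDeriv k (f p) 0‖) atTop
        (𝓝 ‖iteratedDeriv k (f m) 0 - iteratedDeriv k g 0‖) :=
      (tendsto_const_nhds.sub (hptwise k)).norm
    apply le_of_tendsto hlim
    filter_upwards [eventually_ge_atTop N] with p hp
    have h1 := coeff_le_of_normB_lt hb hε (hN m hm p hp) k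
    rwa [iteratedDeriv_sub' (hdiff m) (hdiff p)] at h1
  have hnb : ∀ ε : ℝ, 0 < ε → ∃ N : ℕ, ∀ m ≥ N,
      normB b (f m - g) ≤ ENNReal.ofReal ε := by
    intro ε hε
    obtain ⟨N, hN⟩ := hnbcoef ε hε
    refine ⟨N, fun m hm => ?_⟩
    apply iSup_le
    intro k
    rw [iteratedDeriv_sub' (hdiff m) hgdiff]
    apply ENNReal.ofReal_le_ofReal
    rw [div_le_iff₀ (pow_pos hb k)]
    exact hN m hm k
  -- tendsto 0
  have hT : Tendsto (fun n => normB b (f n - g)) atTop (𝓝 0) := by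
    rw [ENNReal.tendsto_nhds_zero]
    intro ε' hε'
    obtain ⟨r, hr0, hrle⟩ : ∃ r : ℝ, 0 < r ∧ ENNReal.ofReal r ≤ ε' := by
      rcases eq_or_ne ε' ⊤ with h | h
      · exact ⟨1, one_pos, by simp [h]⟩
      · exact ⟨ε'.toReal, ENNReal.toReal_pos hε'.ne' h, by rw [ENNReal.ofReal_toReal h]⟩
    obtain ⟨N, hN⟩ := hnb r hr0
    filter_upwards [eventually_ge_atTop N] with m hm
    exact le_trans (hN m hm) hrle
  -- finiteness
  have hfinite : normB b g < ⊤ := by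
    obtain ⟨N, hN⟩ := hnbcoef 1 one_pos
    have hle : normB b g ≤ normB b (f N) + ENNReal.ofReal 1 := by
      apply iSup_le
      intro k
      have h1 := hN N le_rfl k
      have h2 : ‖iteratedDeriv k g 0‖ ≤ ‖iteratedDeriv k (f N) 0‖ + 1 * b ^ k := by
        have h3 := norm_sub_norm_le (iteratedDeriv k g 0) (iteratedDeriv k (f N) 0)
        rw [norm_sub_rev] at h3
        linarith
      have h4 : ‖iteratedDeriv k g 0‖ / b ^ k ≤ ‖iteratedDeriv k (f N) 0‖ / b ^ k + 1 := by
        rw [div_add' _ _ _ (pow_pos hb k).ne', div_le_div_iff_of_pos_right (pow_pos hb k)]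
        linarith
      calc ENNReal.ofReal (‖iteratedDeriv k g 0‖ / b ^ k)
          ≤ ENNReal.ofReal (‖iteratedDeriv k (f N) 0‖ / b ^ k + 1) :=
            ENNReal.ofReal_le_ofReal h4
        _ ≤ ENNReal.ofReal (‖iteratedDeriv k (f N) 0‖ / b ^ k) + ENNReal.ofReal 1 :=
            ENNReal.ofReal_add_le
        _ ≤ normB b (f N) + ENNReal.ofReal 1 := by
            gcongr
            exact le_iSup (fun k => ENNReal.ofReal (‖iteratedDeriv k (f N) 0‖ / b ^ k)) k
    exact lt_of_le_of_lt hle (ENNReal.add_lt_top.mpr ⟨hfin N, ENNReal.ofReal_lt_top⟩)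
  exact ⟨g, hgdiff, hfinite, hT, hTU⟩
end

section
/- Let a ≥ 0 and let (f_n) be a sequence of entire functions which is bounded in A_a, i.e. for every b > a one has sup_n ‖f_n‖_b < ∞. If f_n converges uniformly on every compact subset of ℂ to an entire function f, then f ∈ A_a and ‖f_n − f‖_b → 0 for every b > a. (On bounded subsets of A_a the topology of A_a coincides with the topology of uniform convergence on compact subsets of ℂ.) -/
open Filter Topology
open scoped ENNReal
open scoped Nat NNReal

/-- Cauchy estimate for the iterated derivative at 0. -/
lemma cauchy_est {h : ℂ → ℂ} (hh : Differentiable ℂ h) {r C : ℝ} (hr : 0 < r)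
    (hC : ∀ z ∈ Metric.sphere (0:ℂ) r, ‖h z‖ ≤ C) (k : ℕ) :
    ‖iteratedDeriv k h 0‖ ≤ (k ! : ℝ) * C / r ^ k := by
  have hrmem : (r : ℂ) ∈ Metric.sphere (0:ℂ) r := by
    simp [Real.norm_eq_abs, abs_of_pos hr]
  have hC0 : 0 ≤ C := le_trans (norm_nonneg _) (hC _ hrmem)
  set R : ℝ≥0 := ⟨r, hr.le⟩ with hRdef
  have hRpos : (0 : ℝ≥0) < R := hr
  have hps := hh.hasFPowerSeriesOnBall 0 hRpos
  set p := cauchyPowerSeries h 0 (R : ℝ) with hp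
  have hfs := hps.factorial_smul (1 : ℂ) k
  have h1 : iteratedDeriv k h 0 = (k ! : ℂ) * (p k fun _ => (1:ℂ)) := by
    rw [iteratedDeriv_eq_iteratedFDeriv, ← hfs, nsmul_eq_mul]
  have h2 : ‖p k fun _ => (1:ℂ)‖ ≤ ‖p k‖ := by
    have := (p k).le_opNorm fun _ => (1:ℂ)
    simpa using this
  have h3 : ‖p k‖ ≤ ((2 * Real.pi)⁻¹ * ∫ θ : ℝ in (0)..2 * Real.pi,
      ‖h (circleMap 0 (R:ℝ) θ)‖) * |(R:ℝ)|⁻¹ ^ k := norm_cauchyPowerSeries_le h 0 (R:ℝ) k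
  have hint : (∫ θ : ℝ in (0)..2 * Real.pi, ‖h (circleMap 0 (R:ℝ) θ)‖) ≤ 2 * Real.pi * C := by
    have hbound : ∀ θ ∈ Set.Icc (0:ℝ) (2 * Real.pi), ‖h (circleMap 0 (R:ℝ) θ)‖ ≤ C := by
      intro θ _
      exact hC _ (circleMap_mem_sphere (0:ℂ) hr.le θ)
    calc (∫ θ : ℝ in (0)..2 * Real.pi, ‖h (circleMap 0 (R:ℝ) θ)‖)
        ≤ ∫ _ : ℝ in (0)..2 * Real.pi, C := by
          apply intervalIntegral.integral_mono_on Real.two_pi_pos.le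
          · exact ((hh.continuous.comp (continuous_circleMap 0 (R:ℝ))).norm).intervalIntegrable _ _
          · exact intervalIntegrable_const
          · exact hbound
      _ = 2 * Real.pi * C := by simp [mul_comm]
  have hRr : |(R : ℝ)| = r := abs_of_pos hr
  have h4 : ‖p k‖ ≤ C / r ^ k := by
    calc ‖p k‖ ≤ ((2 * Real.pi)⁻¹ * (2 * Real.pi * C)) * |(R:ℝ)|⁻¹ ^ k := by
          refine le_trans h3 ?_
          gcongr
      _ = C / r ^ k := by
          rw [hRr, inv_mul_cancel_left₀ Real.two_pi_pos.ne', inv_pow, div_eq_mul_inv]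
  calc ‖iteratedDeriv k h 0‖ = (k ! : ℝ) * ‖p k fun _ => (1:ℂ)‖ := by
        rw [h1, norm_mul]; simp
    _ ≤ (k ! : ℝ) * (C / r ^ k) := by
        have := h2.trans h4
        gcongr
    _ = (k ! : ℝ) * C / r ^ k := by ring

lemma iteratedDeriv_sub'' {u v : ℂ → ℂ} (hu : Differentiable ℂ u) (hv : Differentiable ℂ v)
    (k : ℕ) (x : ℂ) :
    iteratedDeriv k (u - v) x = iteratedDeriv k u x - iteratedDeriv k v x := by
  have h1 : u - v = u + (-v) := sub_eq_add_neg u v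
  have hnv : ContDiff ℂ (k : ℕ) (-v) := by exact hv.contDiff.neg
  rw [iteratedDeriv_eq_iteratedFDeriv, iteratedDeriv_eq_iteratedFDeriv,
    iteratedDeriv_eq_iteratedFDeriv, h1, iteratedFDeriv_add_apply hu.contDiff.contDiffAt hnv.contDiffAt,
    iteratedFDeriv_neg_apply]
  simp [sub_eq_add_neg]

/-- `f ∈ A_a`: `f` is entire and `‖f‖_b < ∞` for every `b > a`. -/
def InA (a : ℝ) (f : ℂ → ℂ) : Prop :=
  Differentiable ℂ f ∧ ∀ b > a, normB b f < ⊤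

theorem stmt_2 (a : ℝ) (ha : 0 ≤ a) (f : ℕ → ℂ → ℂ) (g : ℂ → ℂ)
    (hdiff : ∀ n, Differentiable ℂ (f n)) (hg : Differentiable ℂ g)
    (hbdd : ∀ b > a, (⨆ n, normB b (f n)) < ⊤)
    (hconv : ∀ K : Set ℂ, IsCompact K → TendstoUniformlyOn (fun n => f n) g atTop K) :
    InA a g ∧ ∀ b > a, Tendsto (fun n => normB b (f n - g)) atTop (nhds 0) := by
  -- uniform bound on derivatives of the f n
  have hfb : ∀ b, a < b → ∀ n k, ‖iteratedDeriv k (f n) 0‖ ≤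
      (⨆ m, normB b (f m)).toReal * b ^ k := by
    intro b hb n k
    have hbpos : 0 < b := lt_of_le_of_lt ha hb
    have hpk : (0:ℝ) < b ^ k := pow_pos hbpos k
    have h1 : ENNReal.ofReal (‖iteratedDeriv k (f n) 0‖ / b ^ k) ≤ ⨆ m, normB b (f m) := by
      refine le_trans ?_ (le_iSup (fun m => normB b (f m)) n)
      exact le_iSup (fun j => ENNReal.ofReal (‖iteratedDeriv j (f n) 0‖ / b ^ j)) k
    have h2 : ‖iteratedDeriv k (f n) 0‖ / b ^ k ≤ (⨆ m, normB b (f m)).toReal := by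
      have h3 := ENNReal.toReal_mono (hbdd b hb).ne h1
      rwa [ENNReal.toReal_ofReal (by positivity)] at h3
    exact (div_le_iff₀ hpk).1 h2
  -- pointwise convergence of derivatives at 0
  have hDconv : ∀ k : ℕ, Tendsto
      (fun n => ‖iteratedDeriv k (f n) 0 - iteratedDeriv k g 0‖) atTop (𝓝 0) := by
    intro k
    rw [NormedAddCommGroup.tendsto_nhds_zero]
    intro ε hε
    have hsc : IsCompact (Metric.sphere (0:ℂ) 1) := isCompact_sphere 0 1
    have huc := hconv _ hsc
    rw [Metric.tendstoUniformlyOn_iff] at huc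
    have hε' : (0:ℝ) < ε / (2 * k !) := by positivity
    filter_upwards [huc _ hε'] with n hn
    have hbnd : ∀ z ∈ Metric.sphere (0:ℂ) 1, ‖(f n - g) z‖ ≤ ε / (2 * k !) := by
      intro z hz
      have h5 := hn z hz
      rw [dist_comm, dist_eq_norm] at h5
      exact h5.le
    have hest := cauchy_est (h := f n - g) ((hdiff n).sub hg) one_pos hbnd k
    rw [iteratedDeriv_sub'' (hdiff n) hg] at hest
    have hkne : (k ! : ℝ) ≠ 0 := by positivity
    have heq : (k ! : ℝ) * (ε / (2 * k !)) / 1 ^ k = ε / 2 := by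
      field_simp
      ring
    rw [heq] at hest
    calc ‖‖iteratedDeriv k (f n) 0 - iteratedDeriv k g 0‖‖
        = ‖iteratedDeriv k (f n) 0 - iteratedDeriv k g 0‖ := by
          rw [Real.norm_eq_abs, abs_of_nonneg (norm_nonneg _)]
      _ ≤ ε / 2 := hest
      _ < ε := by linarith
  -- bound on derivatives of g
  have hgb : ∀ b, a < b → ∀ k, ‖iteratedDeriv k g 0‖ ≤
      (⨆ m, normB b (f m)).toReal * b ^ k := by
    intro b hb k
    set M := (⨆ m, normB b (f m)).toReal
    have hlim : Tendsto (fun n => M * b ^ k + ‖iteratedDeriv k (f n) 0 - iteratedDeriv k g 0‖)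
        atTop (𝓝 (M * b ^ k)) := by
      simpa using (tendsto_const_nhds (x := M * b ^ k)).add (hDconv k)
    refine ge_of_tendsto hlim (Eventually.of_forall fun n => ?_)
    calc ‖iteratedDeriv k g 0‖
        = ‖iteratedDeriv k (f n) 0 - (iteratedDeriv k (f n) 0 - iteratedDeriv k g 0)‖ := by
          congr 1; ring
      _ ≤ ‖iteratedDeriv k (f n) 0‖ + ‖iteratedDeriv k (f n) 0 - iteratedDeriv k g 0‖ :=
          norm_sub_le _ _
      _ ≤ M * b ^ k + ‖iteratedDeriv k (f n) 0 - iteratedDeriv k g 0‖ :=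
          add_le_add_left (hfb b hb n k) _
  constructor
  · refine ⟨hg, fun b hb => ?_⟩
    have hbpos : 0 < b := lt_of_le_of_lt ha hb
    have hle : normB b g ≤ ENNReal.ofReal ((⨆ m, normB b (f m)).toReal) := by
      refine iSup_le fun k => ENNReal.ofReal_le_ofReal ?_
      rw [div_le_iff₀ (pow_pos hbpos k)]
      exact hgb b hb k
    exact lt_of_le_of_lt hle ENNReal.ofReal_lt_top
  · intro b hb
    have hbpos : 0 < b := lt_of_le_of_lt ha hb
    obtain ⟨b', hab', hb'b⟩ : ∃ b', a < b' ∧ b' < b :=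
      ⟨(a + b) / 2, by constructor <;> linarith⟩
    have hb'pos : 0 < b' := lt_of_le_of_lt ha hab'
    set M := (⨆ m, normB b' (f m)).toReal with hMdef
    have hM0 : 0 ≤ M := ENNReal.toReal_nonneg
    rw [ENNReal.tendsto_nhds_zero]
    intro ε hε
    rcases eq_or_ne ε ⊤ with rfl | hεtop
    · exact Eventually.of_forall fun n => le_top
    set δ := ε.toReal with hδdef
    have hδpos : 0 < δ := ENNReal.toReal_pos hε.ne' hεtop
    have hratio : b' / b < 1 := (div_lt_one hbpos).2 hb'b
    have htail : Tendsto (fun k : ℕ => 2 * M * (b' / b) ^ k) atTop (𝓝 0) := by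
      simpa using (tendsto_pow_atTop_nhds_zero_of_lt_one (by positivity) hratio).const_mul (2 * M)
    obtain ⟨K, hK⟩ := eventually_atTop.1 (htail.eventually_le_const hδpos)
    have hsmall : ∀ k ∈ Finset.range K, ∀ᶠ n in atTop,
        ‖iteratedDeriv k (f n) 0 - iteratedDeriv k g 0‖ ≤ δ * b ^ k := fun k _ =>
      (hDconv k).eventually_le_const (by positivity)
    rw [← Filter.eventually_all_finset] at hsmall
    filter_upwards [hsmall] with n hn
    rw [normB]
    refine iSup_le fun k => ?_
    have hkey : ‖iteratedDeriv k (f n - g) 0‖ / b ^ k ≤ δ := by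
      rw [iteratedDeriv_sub'' (hdiff n) hg]
      rcases lt_or_ge k K with hk | hk
      · rw [div_le_iff₀ (pow_pos hbpos k)]
        exact hn k (Finset.mem_range.2 hk)
      · calc ‖iteratedDeriv k (f n) 0 - iteratedDeriv k g 0‖ / b ^ k
            ≤ (M * b' ^ k + M * b' ^ k) / b ^ k := by
              gcongr
              exact (norm_sub_le _ _).trans (add_le_add (hfb b' hab' n k) (hgb b' hab' k))
          _ = 2 * M * (b' / b) ^ k := by
              rw [div_pow]
              ring
          _ ≤ δ := hK k hk
    calc ENNReal.ofReal (‖iteratedDeriv k (f n - g) 0‖ / b ^ k)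
        ≤ ENNReal.ofReal δ := ENNReal.ofReal_le_ofReal hkey
      _ = ε := ENNReal.ofReal_toReal hεtop
end

section
/- Let a, b ≥ 0. Suppose f_n, f ∈ A_a with ‖f_n − f‖_{a'} → 0 for every a' > a, and g_n, g ∈ A_b with ‖g_n − g‖_{b'} → 0 for every b' > b. Then f_n g_n and fg belong to A_{a+b} and ‖f_n g_n − fg‖_c → 0 for every c > a + b. -/
open Filter Topology
open scoped ENNReal

lemma le_normB (b : ℝ) (f : ℂ → ℂ) (k : ℕ) :
    ENNReal.ofReal (‖iteratedDeriv k f 0‖ / b ^ k) ≤ normB b f := by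
  unfold normB
  exact le_iSup (fun k => ENNReal.ofReal (‖iteratedDeriv k f 0‖ / b ^ k)) k

lemma coeff_le {b : ℝ} (hb : 0 < b) {f : ℂ → ℂ} (hfin : normB b f ≠ ⊤) (k : ℕ) :
    ‖iteratedDeriv k f 0‖ ≤ (normB b f).toReal * b ^ k := by
  have h1 : ENNReal.ofReal (‖iteratedDeriv k f 0‖ / b ^ k) ≤ normB b f := le_normB b f k
  have h2 : ‖iteratedDeriv k f 0‖ / b ^ k ≤ (normB b f).toReal :=
    (ENNReal.ofReal_le_iff_le_toReal hfin).mp h1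
  have hbk : (0:ℝ) < b ^ k := pow_pos hb k
  calc ‖iteratedDeriv k f 0‖ = ‖iteratedDeriv k f 0‖ / b ^ k * b ^ k := by
        field_simp
    _ ≤ (normB b f).toReal * b ^ k := by
        exact mul_le_mul_of_nonneg_right h2 hbk.le

lemma normB_mul_le {a' b' c : ℝ} (ha : 0 < a') (hb : 0 < b') (hc : a' + b' ≤ c)
    {f g : ℂ → ℂ} (hf : Differentiable ℂ f) (hg : Differentiable ℂ g)
    (hfa : normB a' f ≠ ⊤) (hgb : normB b' g ≠ ⊤) :
    normB c (fun z => f z * g z) ≤ normB a' f * normB b' g := by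
  set Mf := (normB a' f).toReal with hMfdef
  set Mg := (normB b' g).toReal with hMgdef
  have hMf : 0 ≤ Mf := ENNReal.toReal_nonneg
  have hMg : 0 ≤ Mg := ENNReal.toReal_nonneg
  have hc0 : 0 < c := lt_of_lt_of_le (by linarith) hc
  refine iSup_le fun k => ?_
  have key : ‖iteratedDeriv k (fun z => f z * g z) 0‖ ≤ Mf * Mg * c ^ k := by
    rw [← norm_iteratedFDeriv_eq_norm_iteratedDeriv]
    calc ‖iteratedFDeriv ℂ k (fun z => f z * g z) 0‖
        ≤ ∑ i ∈ Finset.range (k + 1), (k.choose i : ℝ) * ‖iteratedFDeriv ℂ i f 0‖ *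
            ‖iteratedFDeriv ℂ (k - i) g 0‖ :=
          norm_iteratedFDeriv_mul_le (N := ⊤) hf.contDiff hg.contDiff 0 le_top
      _ ≤ ∑ i ∈ Finset.range (k + 1),
            (k.choose i : ℝ) * (Mf * a' ^ i) * (Mg * b' ^ (k - i)) := by
          refine Finset.sum_le_sum fun i _ => ?_
          have h1 : ‖iteratedFDeriv ℂ i f 0‖ ≤ Mf * a' ^ i := by
            rw [norm_iteratedFDeriv_eq_norm_iteratedDeriv]; exact coeff_le ha hfa i
          have h2 : ‖iteratedFDeriv ℂ (k - i) g 0‖ ≤ Mg * b' ^ (k - i) := by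
            rw [norm_iteratedFDeriv_eq_norm_iteratedDeriv]; exact coeff_le hb hgb (k - i)
          have hn : (0:ℝ) ≤ (k.choose i : ℝ) := Nat.cast_nonneg _
          calc (k.choose i : ℝ) * ‖iteratedFDeriv ℂ i f 0‖ * ‖iteratedFDeriv ℂ (k - i) g 0‖
              ≤ (k.choose i : ℝ) * (Mf * a' ^ i) * ‖iteratedFDeriv ℂ (k - i) g 0‖ := by
                exact mul_le_mul_of_nonneg_right (mul_le_mul_of_nonneg_left h1 hn) (norm_nonneg _)
            _ ≤ (k.choose i : ℝ) * (Mf * a' ^ i) * (Mg * b' ^ (k - i)) := by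
                exact mul_le_mul_of_nonneg_left h2 (by positivity)
      _ = Mf * Mg * (a' + b') ^ k := by
          rw [add_pow, Finset.mul_sum]
          refine Finset.sum_congr rfl fun i _ => ?_
          ring
      _ ≤ Mf * Mg * c ^ k := by
          have : (a' + b') ^ k ≤ c ^ k := pow_le_pow_left₀ (by linarith) hc k
          exact mul_le_mul_of_nonneg_left this (by positivity)
  have hdiv : ‖iteratedDeriv k (fun z => f z * g z) 0‖ / c ^ k ≤ Mf * Mg := by
    rw [div_le_iff₀ (pow_pos hc0 k)]; exact key
  calc ENNReal.ofReal (‖iteratedDeriv k (fun z => f z * g z) 0‖ / c ^ k)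
      ≤ ENNReal.ofReal (Mf * Mg) := ENNReal.ofReal_le_ofReal hdiv
    _ = normB a' f * normB b' g := by
        rw [ENNReal.ofReal_mul hMf, hMfdef, hMgdef, ENNReal.ofReal_toReal hfa,
          ENNReal.ofReal_toReal hgb]

lemma iteratedDeriv_add' {k : ℕ} {f g : ℂ → ℂ} (hf : Differentiable ℂ f)
    (hg : Differentiable ℂ g) :
    iteratedDeriv k (fun z => f z + g z) 0 = iteratedDeriv k f 0 + iteratedDeriv k g 0 := by
  have : (fun z => f z + g z) = f + g := rfl
  rw [this, iteratedDeriv_eq_iteratedFDeriv, iteratedDeriv_eq_iteratedFDeriv,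
    iteratedDeriv_eq_iteratedFDeriv,
    iteratedFDeriv_add_apply (hf.contDiff (n := (k : WithTop ℕ∞))).contDiffAt
      (hg.contDiff (n := (k : WithTop ℕ∞))).contDiffAt]
  rfl

lemma normB_add_le {c : ℝ} (hc : 0 < c) {f g : ℂ → ℂ} (hf : Differentiable ℂ f)
    (hg : Differentiable ℂ g) :
    normB c (fun z => f z + g z) ≤ normB c f + normB c g := by
  refine iSup_le fun k => ?_
  rw [iteratedDeriv_add' hf hg]
  have h1 : ‖iteratedDeriv k f 0 + iteratedDeriv k g 0‖ / c ^ k ≤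
      ‖iteratedDeriv k f 0‖ / c ^ k + ‖iteratedDeriv k g 0‖ / c ^ k := by
    rw [← add_div]
    exact div_le_div_of_nonneg_right (norm_add_le _ _) (pow_pos hc k).le
  calc ENNReal.ofReal (‖iteratedDeriv k f 0 + iteratedDeriv k g 0‖ / c ^ k)
      ≤ ENNReal.ofReal (‖iteratedDeriv k f 0‖ / c ^ k + ‖iteratedDeriv k g 0‖ / c ^ k) :=
        ENNReal.ofReal_le_ofReal h1
    _ ≤ ENNReal.ofReal (‖iteratedDeriv k f 0‖ / c ^ k) +
        ENNReal.ofReal (‖iteratedDeriv k g 0‖ / c ^ k) := ENNReal.ofReal_add_le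
    _ ≤ normB c f + normB c g := add_le_add (le_normB _ _ k) (le_normB _ _ k)

lemma normB_neg (c : ℝ) (f : ℂ → ℂ) : normB c (fun z => -f z) = normB c f := by
  unfold normB
  congr 1
  funext k
  have : iteratedDeriv k (fun z => -f z) 0 = -iteratedDeriv k f 0 := by
    rw [iteratedDeriv_eq_iteratedFDeriv, iteratedDeriv_eq_iteratedFDeriv]
    have : (fun z => -f z) = -f := rfl
    rw [this, iteratedFDeriv_neg_apply]
    rfl
  rw [this, norm_neg]

lemma normB_sub_le {c : ℝ} (hc : 0 < c) {f g : ℂ → ℂ} (hf : Differentiable ℂ f)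
    (hg : Differentiable ℂ g) :
    normB c (fun z => f z - g z) ≤ normB c f + normB c g := by
  have h : (fun z => f z - g z) = (fun z => f z + (fun w => -g w) z) := by
    funext z; simp [sub_eq_add_neg]
  rw [h]
  calc normB c _ ≤ normB c f + normB c (fun z => -g z) :=
        normB_add_le hc hf hg.neg
    _ = normB c f + normB c g := by rw [normB_neg]

theorem stmt_4 (a b : ℝ) (ha : 0 ≤ a) (hb : 0 ≤ b)
    (f : ℕ → ℂ → ℂ) (F : ℂ → ℂ) (g : ℕ → ℂ → ℂ) (G : ℂ → ℂ)
    (hf : ∀ n, InA a (f n)) (hF : InA a F)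
    (hg : ∀ n, InA b (g n)) (hG : InA b G)
    (hfc : ∀ a' > a, Tendsto (fun n => normB a' (f n - F)) atTop (nhds 0))
    (hgc : ∀ b' > b, Tendsto (fun n => normB b' (g n - G)) atTop (nhds 0)) :
    (∀ n, InA (a + b) (fun z => f n z * g n z)) ∧
    InA (a + b) (fun z => F z * G z) ∧
    ∀ c > a + b,
      Tendsto (fun n => normB c (fun z => f n z * g n z - F z * G z)) atTop (nhds 0) := by
  have prodInA : ∀ (u v : ℂ → ℂ), InA a u → InA b v → InA (a + b) (fun z => u z * v z) := by
    intro u v hu hv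
    refine ⟨hu.1.mul hv.1, fun c hc => ?_⟩
    have hd0 : 0 < (c - (a + b)) / 2 := by linarith
    set d := (c - (a + b)) / 2
    have h1 : normB (a + d) u ≠ ⊤ := (hu.2 (a + d) (by linarith)).ne
    have h2 : normB (b + d) v ≠ ⊤ := (hv.2 (b + d) (by linarith)).ne
    have := normB_mul_le (a' := a + d) (b' := b + d) (c := c) (by linarith) (by linarith)
      (by simp only [d]; ring_nf; linarith) hu.1 hv.1 h1 h2
    exact lt_of_le_of_lt this (ENNReal.mul_lt_top (hu.2 _ (by linarith)) (hv.2 _ (by linarith)))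
  refine ⟨fun n => prodInA _ _ (hf n) (hg n), prodInA _ _ hF hG, fun c hc => ?_⟩
  have hd0 : 0 < (c - (a + b)) / 2 := by linarith
  set d := (c - (a + b)) / 2 with hddef
  set a' := a + d with ha'def
  set b' := b + d with hb'def
  have ha' : a < a' := by simp [ha'def]; linarith
  have hb' : b < b' := by simp [hb'def]; linarith
  have ha'0 : 0 < a' := lt_of_le_of_lt ha ha'
  have hb'0 : 0 < b' := lt_of_le_of_lt hb hb'
  have hc0 : 0 < c := by linarith
  have hsum : a' + b' ≤ c := by simp [ha'def, hb'def, hddef]; linarith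
  have hFfin : normB a' F ≠ ⊤ := (hF.2 a' ha').ne
  have hGfin : normB b' G ≠ ⊤ := (hG.2 b' hb').ne
  have hfnFdiff : ∀ n, Differentiable ℂ (f n - F) := fun n => (hf n).1.sub hF.1
  have hgnGdiff : ∀ n, Differentiable ℂ (g n - G) := fun n => (hg n).1.sub hG.1
  have hfnFfin : ∀ n, normB a' (f n - F) ≠ ⊤ := by
    intro n
    have : normB a' (f n - F) ≤ normB a' (f n) + normB a' F := by
      have h : (f n - F) = (fun z => f n z - F z) := rfl
      rw [h]
      exact normB_sub_le ha'0 (hf n).1 hF.1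
    exact (lt_of_le_of_lt this (ENNReal.add_lt_top.mpr
      ⟨(hf n).2 a' ha', hF.2 a' ha'⟩)).ne
  have hgnfin : ∀ n, normB b' (g n) ≠ ⊤ := fun n => ((hg n).2 b' hb').ne
  have hgnGfin : ∀ n, normB b' (g n - G) ≠ ⊤ := by
    intro n
    have : normB b' (g n - G) ≤ normB b' (g n) + normB b' G := by
      have h : (g n - G) = (fun z => g n z - G z) := rfl
      rw [h]
      exact normB_sub_le hb'0 (hg n).1 hG.1
    exact (lt_of_le_of_lt this (ENNReal.add_lt_top.mpr
      ⟨(hg n).2 b' hb', hG.2 b' hb'⟩)).ne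
  -- the key pointwise estimate
  have key : ∀ n, normB c (fun z => f n z * g n z - F z * G z) ≤
      normB a' (f n - F) * normB b' (g n) + normB a' F * normB b' (g n - G) := by
    intro n
    have heq : (fun z => f n z * g n z - F z * G z) =
        (fun z => ((f n - F) z * g n z) + (F z * (g n - G) z)) := by
      funext z
      simp only [Pi.sub_apply]
      ring
    rw [heq]
    calc normB c (fun z => ((f n - F) z * g n z) + (F z * (g n - G) z))
        ≤ normB c (fun z => (f n - F) z * g n z) + normB c (fun z => F z * (g n - G) z) :=
          normB_add_le hc0 ((hfnFdiff n).mul (hg n).1) (hF.1.mul (hgnGdiff n))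
      _ ≤ normB a' (f n - F) * normB b' (g n) + normB a' F * normB b' (g n - G) :=
          add_le_add
            (normB_mul_le ha'0 hb'0 hsum (hfnFdiff n) (hg n).1 (hfnFfin n) (hgnfin n))
            (normB_mul_le ha'0 hb'0 hsum hF.1 (hgnGdiff n) hFfin (hgnGfin n))
  -- eventual bound on normB b' (g n)
  set M : ℝ≥0∞ := 1 + normB b' G with hMdef
  have hMfin : M ≠ ⊤ := by
    simp only [hMdef]
    exact (ENNReal.add_lt_top.mpr ⟨ENNReal.one_lt_top, hG.2 b' hb'⟩).ne
  have hev : ∀ᶠ n in atTop, normB b' (g n) ≤ M := by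
    filter_upwards [(hgc b' hb').eventually_lt_const (zero_lt_one (α := ℝ≥0∞))] with n hn
    have hgn : (g n : ℂ → ℂ) = (fun z => (g n - G) z + G z) := by
      funext z; simp
    rw [hgn]
    calc normB b' (fun z => (g n - G) z + G z) ≤ normB b' (g n - G) + normB b' G :=
          normB_add_le hb'0 (hgnGdiff n) hG.1
      _ ≤ 1 + normB b' G := add_le_add hn.le le_rfl
  -- the dominating sequence tends to 0
  have hlim : Tendsto (fun n => normB a' (f n - F) * M + normB a' F * normB b' (g n - G))
      atTop (nhds 0) := by
    have h1 : Tendsto (fun n => normB a' (f n - F) * M) atTop (nhds (0 * M)) :=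
      ENNReal.Tendsto.mul_const (hfc a' ha') (Or.inr hMfin)
    have h2 : Tendsto (fun n => normB a' F * normB b' (g n - G)) atTop
        (nhds (normB a' F * 0)) :=
      ENNReal.Tendsto.const_mul (hgc b' hb') (Or.inr hFfin)
    have := h1.add h2
    simpa using this
  refine tendsto_of_tendsto_of_tendsto_of_le_of_le' tendsto_const_nhds hlim
    (Eventually.of_forall fun n => zero_le) ?_
  filter_upwards [hev] with n hn
  calc normB c (fun z => f n z * g n z - F z * G z)
      ≤ normB a' (f n - F) * normB b' (g n) + normB a' F * normB b' (g n - G) := key n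
    _ ≤ normB a' (f n - F) * M + normB a' F * normB b' (g n - G) :=
        add_le_add (mul_le_mul_right hn _) le_rfl
end

section
/- For every entire function f and every b > 0 one has N_b(f) ≤ ‖f‖_b. Moreover, for every b > 0 and every ε ∈ (0, b) there exists a constant C(b,ε), depending only on b and ε, such that every entire function f with N_{b−ε}(f) < ∞ satisfies ‖f‖_b ≤ C(b,ε) · N_{b−ε}(f); in particular ‖f‖_b < ∞. -/
open Filter Topology Metric
open scoped ENNReal Nat

/-- The norm `N_b(f) = sup_{z ∈ ℂ} |f(z)| e^{-b|z|}`, valued in `ℝ≥0∞`. -/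
noncomputable def normN (b : ℝ) (f : ℂ → ℂ) : ℝ≥0∞ :=
  ⨆ z : ℂ, ENNReal.ofReal (‖f z‖ * Real.exp (-b * ‖z‖))

private lemma hasSum_exp_real (x : ℝ) : HasSum (fun n : ℕ => x ^ n / n !) (Real.exp x) := by
  have h : Real.exp x = ∑' n : ℕ, x ^ n / n ! := by
    rw [Real.exp_eq_exp_ℝ, NormedSpace.exp_eq_tsum_div]
  exact h ▸ (Real.summable_pow_div_factorial x).hasSum

private lemma fact_le (n : ℕ) (hn : 1 ≤ n) :
    (n ! : ℝ) * Real.exp 1 ^ n ≤ Real.exp 1 * n * (n : ℝ) ^ n := by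
  have hn' : (1 : ℝ) ≤ (n : ℝ) := by exact_mod_cast hn
  have hnpos : (0 : ℝ) < n := by linarith
  have h1 : Stirling.stirlingSeq n ≤ Real.exp 1 / Real.sqrt 2 := by
    obtain ⟨m, rfl⟩ := Nat.exists_eq_add_of_le hn
    rw [← Stirling.stirlingSeq_one]
    simpa [Function.comp, Nat.add_comm] using Stirling.stirlingSeq'_antitone (Nat.zero_le m)
  have hd : 0 < Real.sqrt (2 * n) * ((n : ℝ) / Real.exp 1) ^ n := by positivity
  rw [Stirling.stirlingSeq, div_le_iff₀ hd] at h1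
  have hsq : Real.sqrt (2 * (n:ℝ)) = Real.sqrt 2 * Real.sqrt n := Real.sqrt_mul (by norm_num) _
  have hsqn : Real.sqrt (n : ℝ) ≤ (n : ℝ) := by
    have h := Real.sqrt_le_sqrt (by nlinarith : (n:ℝ) ≤ (n:ℝ)^2)
    rwa [Real.sqrt_sq hnpos.le] at h
  have hepos : (0:ℝ) < Real.exp 1 := Real.exp_pos 1
  have hs2 : (0:ℝ) < Real.sqrt 2 := by positivity
  calc (n ! : ℝ) * Real.exp 1 ^ n
      ≤ (Real.exp 1 / Real.sqrt 2 * (Real.sqrt (2 * n) * ((n:ℝ) / Real.exp 1) ^ n))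
          * Real.exp 1 ^ n := by gcongr
    _ = Real.exp 1 * Real.sqrt (n:ℝ) * (n:ℝ) ^ n := by
        rw [hsq, div_pow]
        field_simp
    _ ≤ Real.exp 1 * (n:ℝ) * (n:ℝ) ^ n := by gcongr

private lemma cauchy_est_s5 {f : ℂ → ℂ} (hf : Differentiable ℂ f) {R M : ℝ} (hR : 0 < R)
    (hbd : ∀ z : ℂ, ‖z‖ = R → ‖f z‖ ≤ M) (n : ℕ) :
    ‖iteratedDeriv n f 0‖ * R ^ n ≤ n ! * M := by
  have hM : 0 ≤ M := le_trans (norm_nonneg _)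
    (hbd (R : ℂ) (by simp [Complex.norm_real, abs_of_pos hR]))
  lift R to NNReal using hR.le with R'
  have hR0 : 0 < R' := by exact_mod_cast hR
  have h : HasFPowerSeriesOnBall f (cauchyPowerSeries f 0 R') 0 R' :=
    (hf.differentiableOn (s := closedBall 0 (R' : ℝ))).hasFPowerSeriesOnBall hR0
  have key := h.factorial_smul (y := (1 : ℂ)) n
  have e0 : iteratedDeriv n f 0 = iteratedFDeriv ℂ n f 0 (fun _ => 1) :=
    iteratedDeriv_eq_iteratedFDeriv
  have e1 : ‖iteratedDeriv n f 0‖ = (n ! : ℝ) * ‖cauchyPowerSeries f 0 R' n (fun _ => 1)‖ := by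
    rw [e0, ← key, ← Nat.cast_smul_eq_nsmul ℝ, norm_smul]
    simp
  have e2 : ‖cauchyPowerSeries f 0 (R' : ℝ) n (fun _ => (1:ℂ))‖
      ≤ ‖cauchyPowerSeries f 0 (R' : ℝ) n‖ := by
    simpa using (cauchyPowerSeries f 0 (R' : ℝ) n).le_opNorm (fun _ => (1:ℂ))
  have hint : ∫ θ : ℝ in (0)..2 * Real.pi, ‖f (circleMap 0 R' θ)‖ ≤ 2 * Real.pi * M := by
    have := intervalIntegral.integral_mono_on (a := 0) (b := 2 * Real.pi)
      (f := fun θ => ‖f (circleMap 0 R' θ)‖) (g := fun _ => M)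
      Real.two_pi_pos.le
      ((hf.continuous.comp (continuous_circleMap 0 R')).norm.intervalIntegrable _ _)
      (intervalIntegrable_const : IntervalIntegrable (fun _ => M) MeasureTheory.volume 0 (2*Real.pi))
      (fun θ _ => hbd _ (by simp [norm_circleMap_zero, abs_of_pos hR]))
    simpa using this
  have e3 : ‖cauchyPowerSeries f 0 (R' : ℝ) n‖ ≤ M * ((R' : ℝ)⁻¹) ^ n := by
    refine (norm_cauchyPowerSeries_le f 0 R' n).trans ?_
    rw [abs_of_pos hR]
    refine mul_le_mul_of_nonneg_right ?_ (by positivity)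
    rw [inv_mul_le_iff₀ Real.two_pi_pos]
    linarith [hint]
  have hRn : (0:ℝ) < (R' : ℝ) ^ n := pow_pos hR n
  calc ‖iteratedDeriv n f 0‖ * (R' : ℝ) ^ n
      ≤ ((n ! : ℝ) * (M * ((R' : ℝ)⁻¹) ^ n)) * (R' : ℝ) ^ n := by
        rw [e1]; gcongr
        exact e2.trans e3
    _ = n ! * M := by
        rw [inv_pow]
        field_simp

theorem stmt_5 :
    (∀ b : ℝ, 0 < b → ∀ f : ℂ → ℂ, Differentiable ℂ f → normN b f ≤ normB b f) ∧
    (∀ b ε : ℝ, 0 < ε → ε < b → ∃ C : ℝ, 0 < C ∧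
      ∀ f : ℂ → ℂ, Differentiable ℂ f → normN (b - ε) f < ⊤ →
        normB b f ≤ ENNReal.ofReal C * normN (b - ε) f ∧ normB b f < ⊤) := by
  constructor
  · intro b hb f hf
    by_cases hB : normB b f = ⊤
    · exact hB ▸ le_top
    set S := (normB b f).toReal with hS
    have hSk : ∀ k : ℕ, ‖iteratedDeriv k f 0‖ ≤ S * b ^ k := by
      intro k
      have h1 : ENNReal.ofReal (‖iteratedDeriv k f 0‖ / b ^ k) ≤ normB b f :=
        le_iSup (fun k => ENNReal.ofReal (‖iteratedDeriv k f 0‖ / b ^ k)) k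
      have h2 : ‖iteratedDeriv k f 0‖ / b ^ k ≤ S := (ENNReal.ofReal_le_iff_le_toReal hB).mp h1
      have hbk : (0:ℝ) < b ^ k := pow_pos hb k
      calc ‖iteratedDeriv k f 0‖ = ‖iteratedDeriv k f 0‖ / b ^ k * b ^ k := by field_simp
        _ ≤ S * b ^ k := by gcongr
    refine iSup_le fun z => ?_
    have hmaj : HasSum (fun n : ℕ => S * ((b * ‖z‖) ^ n / n !)) (S * Real.exp (b * ‖z‖)) :=
      (hasSum_exp_real (b * ‖z‖)).mul_left S
    have hfz : ‖f z‖ ≤ S * Real.exp (b * ‖z‖) := by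
      rw [← Complex.taylorSeries_eq_of_entire' 0 z hf]
      refine tsum_of_norm_bounded hmaj fun n => ?_
      have hb1 : ‖(n ! : ℂ)⁻¹ * iteratedDeriv n f 0 * (z - 0) ^ n‖
          = (n ! : ℝ)⁻¹ * ‖iteratedDeriv n f 0‖ * ‖z‖ ^ n := by
        simp [norm_mul, norm_pow, norm_inv]
      rw [hb1]
      have he : S * ((b * ‖z‖) ^ n / n !) = (n ! : ℝ)⁻¹ * (S * b ^ n) * ‖z‖ ^ n := by
        rw [mul_pow]; field_simp
      rw [he]
      gcongr
      exact hSk n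
    have hle : ‖f z‖ * Real.exp (-b * ‖z‖) ≤ S := by
      have h3 := mul_le_mul_of_nonneg_right hfz (Real.exp_pos (-b * ‖z‖)).le
      rwa [mul_assoc, ← Real.exp_add, (by ring : b * ‖z‖ + -b * ‖z‖ = 0), Real.exp_zero,
        mul_one] at h3
    calc ENNReal.ofReal (‖f z‖ * Real.exp (-b * ‖z‖)) ≤ ENNReal.ofReal S :=
          ENNReal.ofReal_le_ofReal hle
      _ = normB b f := ENNReal.ofReal_toReal hB
  · intro b ε hε hεb
    have hb : 0 < b := hε.trans hεb
    set a := b - ε with ha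
    have ha0 : 0 < a := sub_pos.mpr hεb
    have hr1 : a / b < 1 := (div_lt_one hb).mpr (by simp [ha]; linarith)
    have hr0 : 0 ≤ a / b := by positivity
    obtain ⟨D, hD⟩ := (tendsto_pow_const_mul_const_pow_of_lt_one 1 hr0 hr1).bddAbove_range
    have hDn : ∀ n : ℕ, (n : ℝ) * (a / b) ^ n ≤ D := by
      intro n
      have := hD (Set.mem_range_self n)
      simpa using this
    have hD0 : 0 ≤ D := by simpa using hDn 0
    refine ⟨Real.exp 1 * D + 1, by positivity, ?_⟩
    intro f hf hN
    set M := (normN a f).toReal with hM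
    have hM0 : 0 ≤ M := ENNReal.toReal_nonneg
    have hpt : ∀ z : ℂ, ‖f z‖ ≤ M * Real.exp (a * ‖z‖) := by
      intro z
      have h1 : ENNReal.ofReal (‖f z‖ * Real.exp (-a * ‖z‖)) ≤ normN a f :=
        le_iSup (fun z => ENNReal.ofReal (‖f z‖ * Real.exp (-a * ‖z‖))) z
      have h2 : ‖f z‖ * Real.exp (-a * ‖z‖) ≤ M := (ENNReal.ofReal_le_iff_le_toReal hN.ne).mp h1
      have h3 := mul_le_mul_of_nonneg_right h2 (Real.exp_pos (a * ‖z‖)).le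
      rwa [mul_assoc, ← Real.exp_add, (by ring : -a * ‖z‖ + a * ‖z‖ = 0), Real.exp_zero,
        mul_one] at h3
    have hkey : ∀ k : ℕ, ‖iteratedDeriv k f 0‖ / b ^ k ≤ (Real.exp 1 * D + 1) * M := by
      intro k
      have hbk : (0:ℝ) < b ^ k := pow_pos hb k
      rw [div_le_iff₀ hbk]
      rcases Nat.eq_zero_or_pos k with rfl | hk
      · have h0 : ‖f 0‖ ≤ M := by simpa using hpt 0
        have : ‖iteratedDeriv 0 f 0‖ ≤ M := by simpa [iteratedDeriv_zero] using h0
        have hC1 : (1:ℝ) ≤ Real.exp 1 * D + 1 := by nlinarith [Real.exp_pos 1]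
        calc ‖iteratedDeriv 0 f 0‖ ≤ M := this
          _ ≤ (Real.exp 1 * D + 1) * M := by nlinarith
          _ = (Real.exp 1 * D + 1) * M * b ^ 0 := by ring
      · set R := (k : ℝ) / a with hR
        have hk' : (1:ℝ) ≤ (k:ℝ) := by exact_mod_cast hk
        have hkpos : (0:ℝ) < (k:ℝ) := by linarith
        have hRpos : 0 < R := by positivity
        have haR : a * R = (k:ℝ) := by rw [hR]; field_simp
        have hbd : ∀ z : ℂ, ‖z‖ = R → ‖f z‖ ≤ M * Real.exp 1 ^ k := by
          intro z hz
          have h1 := hpt z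
          rwa [hz, haR, ← Real.exp_one_pow] at h1
        have h1 := cauchy_est_s5 hf hRpos hbd k
        have hfct := fact_le k hk
        have hRk : R ^ k = (k:ℝ) ^ k / a ^ k := by rw [hR, div_pow]
        have hak : (0:ℝ) < a ^ k := pow_pos ha0 k
        have hkk : (0:ℝ) < (k:ℝ) ^ k := pow_pos hkpos k
        have h2 : ‖iteratedDeriv k f 0‖ * (k:ℝ) ^ k
            ≤ (Real.exp 1 * (k:ℝ) * M * a ^ k) * (k:ℝ) ^ k := by
          calc ‖iteratedDeriv k f 0‖ * (k:ℝ) ^ k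
              = ‖iteratedDeriv k f 0‖ * R ^ k * a ^ k := by rw [hRk]; field_simp
            _ ≤ ((k ! : ℝ) * (M * Real.exp 1 ^ k)) * a ^ k := by gcongr
            _ = ((k ! : ℝ) * Real.exp 1 ^ k) * M * a ^ k := by ring
            _ ≤ (Real.exp 1 * (k:ℝ) * (k:ℝ) ^ k) * M * a ^ k := by gcongr
            _ = (Real.exp 1 * (k:ℝ) * M * a ^ k) * (k:ℝ) ^ k := by ring
        have h3 : ‖iteratedDeriv k f 0‖ ≤ Real.exp 1 * (k:ℝ) * M * a ^ k :=
          le_of_mul_le_mul_right h2 hkk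
        have h4 : Real.exp 1 * (k:ℝ) * M * a ^ k
            = Real.exp 1 * M * ((k:ℝ) * (a / b) ^ k) * b ^ k := by
          rw [div_pow]; field_simp
        calc ‖iteratedDeriv k f 0‖ ≤ Real.exp 1 * M * ((k:ℝ) * (a / b) ^ k) * b ^ k := by
              rw [← h4]; exact h3
          _ ≤ Real.exp 1 * M * D * b ^ k := by gcongr; exact hDn k
          _ ≤ (Real.exp 1 * D + 1) * M * b ^ k := by nlinarith [Real.exp_pos 1]
    have hmain : normB b f ≤ ENNReal.ofReal ((Real.exp 1 * D + 1) * M) :=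
      iSup_le fun k => ENNReal.ofReal_le_ofReal (hkey k)
    have heq : ENNReal.ofReal ((Real.exp 1 * D + 1) * M)
        = ENNReal.ofReal (Real.exp 1 * D + 1) * normN a f := by
      rw [ENNReal.ofReal_mul (by positivity), hM, ENNReal.ofReal_toReal hN.ne]
    refine ⟨heq ▸ hmain, lt_of_le_of_lt (heq ▸ hmain) ?_⟩
    exact ENNReal.mul_lt_top ENNReal.ofReal_lt_top hN
end

section
/- Let a ≥ 0, let f ∈ A_a, let g be an entire function, and let r_0 ≥ 0. If there exists a constant Λ such that M_g(r) ≤ Λ · M_f(r + r_0) for all r ≥ 0, then g ∈ A_a. -/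
open Filter Topology
open scoped ENNReal

/-- `M_f(r) = sup_{|z| ≤ r} |f(z)|`. -/
noncomputable def Msup (f : ℂ → ℂ) (r : ℝ) : ℝ :=
  sSup ((fun z => ‖f z‖) '' Metric.closedBall (0 : ℂ) r)

open Metric in
lemma le_Msup {f : ℂ → ℂ} (hf : Continuous f) {r : ℝ} {z : ℂ}
    (hz : z ∈ Metric.closedBall (0 : ℂ) r) : ‖f z‖ ≤ Msup f r := by
  refine le_csSup ?_ ⟨z, hz, rfl⟩
  exact ((isCompact_closedBall 0 r).image (hf.norm)).bddAbove

lemma Msup_le {f : ℂ → ℂ} {r C : ℝ} (hr : 0 ≤ r)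
    (h : ∀ z ∈ Metric.closedBall (0 : ℂ) r, ‖f z‖ ≤ C) : Msup f r ≤ C := by
  refine csSup_le ⟨‖f 0‖, 0, by simpa using hr, rfl⟩ ?_
  rintro x ⟨z, hz, rfl⟩
  exact h z hz

lemma Msup_nonneg {f : ℂ → ℂ} (hf : Continuous f) {r : ℝ} (hr : 0 ≤ r) :
    0 ≤ Msup f r :=
  le_trans (norm_nonneg (f 0)) (le_Msup hf (by simpa using hr))

open Metric in
lemma cauchy_est_s6 {g : ℂ → ℂ} (hg : Differentiable ℂ g) {R : ℝ} (hR : 0 < R) (n : ℕ) :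
    ‖iteratedDeriv n g 0‖ ≤ (n.factorial : ℝ) * Msup g R / R ^ n := by
  lift R to NNReal using hR.le with R'
  have hR0 : (0 : NNReal) < R' := by exact_mod_cast hR
  have h := hg.hasFPowerSeriesOnBall 0 hR0
  have key := h.factorial_smul (1 : ℂ) n
  have h1 : iteratedFDeriv ℂ n g 0 (fun _ ↦ (1:ℂ)) = iteratedDeriv n g 0 := by
    rw [iteratedFDeriv_apply_eq_iteratedDeriv_mul_prod]
    simp
  rw [h1] at key
  have hM : ∀ θ : ℝ, ‖g (circleMap 0 (R' : ℝ) θ)‖ ≤ Msup g R' := fun θ =>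
    le_Msup hg.continuous (circleMap_mem_closedBall 0 R'.coe_nonneg θ)
  have hInt : (∫ θ : ℝ in (0)..2 * Real.pi, ‖g (circleMap 0 (R' : ℝ) θ)‖)
      ≤ 2 * Real.pi * Msup g R' := by
    have := intervalIntegral.integral_mono_on (a := 0) (b := 2 * Real.pi)
      Real.two_pi_pos.le
      ((hg.continuous.comp (continuous_circleMap 0 (R' : ℝ))).norm.intervalIntegrable 0
        (2 * Real.pi))
      (intervalIntegrable_const :
        IntervalIntegrable (fun _ => Msup g R') MeasureTheory.volume 0 (2*Real.pi))
      (fun θ _ => hM θ)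
    simpa using this
  have hp := norm_cauchyPowerSeries_le g 0 (R' : ℝ) n
  have hpn : ‖cauchyPowerSeries g 0 (R' : ℝ) n‖ ≤ Msup g R' / (R' : ℝ) ^ n := by
    have h2 : ((2 * Real.pi)⁻¹ * ∫ θ : ℝ in (0)..2 * Real.pi, ‖g (circleMap 0 (R' : ℝ) θ)‖)
        ≤ Msup g R' := by
      rw [inv_mul_le_iff₀ Real.two_pi_pos]
      linarith [hInt]
    calc ‖cauchyPowerSeries g 0 (R' : ℝ) n‖
        ≤ ((2 * Real.pi)⁻¹ * ∫ θ : ℝ in (0)..2 * Real.pi, ‖g (circleMap 0 (R' : ℝ) θ)‖) *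
          |(R' : ℝ)|⁻¹ ^ n := hp
      _ ≤ Msup g R' * |(R' : ℝ)|⁻¹ ^ n := by
          apply mul_le_mul_of_nonneg_right h2 (by positivity)
      _ = Msup g R' / (R' : ℝ) ^ n := by
          rw [abs_of_nonneg R'.coe_nonneg, div_eq_mul_inv, inv_pow]
  calc ‖iteratedDeriv n g 0‖
      = ‖(n.factorial : ℕ) • cauchyPowerSeries g 0 (R' : ℝ) n (fun _ ↦ (1:ℂ))‖ := by
        rw [key]
    _ = n.factorial * ‖cauchyPowerSeries g 0 (R' : ℝ) n (fun _ ↦ (1:ℂ))‖ := by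
        simp [nsmul_eq_mul]
    _ ≤ n.factorial * ‖cauchyPowerSeries g 0 (R' : ℝ) n‖ := by
        apply mul_le_mul_of_nonneg_left _ (by positivity)
        have := (cauchyPowerSeries g 0 (R' : ℝ) n).le_opNorm (fun _ ↦ (1:ℂ))
        simpa using this
    _ ≤ n.factorial * (Msup g R' / (R' : ℝ) ^ n) := by
        apply mul_le_mul_of_nonneg_left hpn (by positivity)
    _ = n.factorial * Msup g R' / (R' : ℝ) ^ n := by ring

lemma aux_exp (n : ℕ) : Real.exp 1 * ((n:ℝ)+1) ^ (n+2) ≤ ((n:ℝ)+2) ^ (n+2) := by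
  have h2 : (0:ℝ) < (n:ℝ) + 2 := by positivity
  have h1 : (0:ℝ) < (n:ℝ) + 1 := by positivity
  have key : Real.exp (1/((n:ℝ)+2)) ≤ ((n:ℝ)+2)/((n:ℝ)+1) := by
    have h := Real.add_one_le_exp (-(1/((n:ℝ)+2)))
    have hpos : (0:ℝ) < -(1/((n:ℝ)+2)) + 1 := by
      have : 1/((n:ℝ)+2) < 1 := by
        rw [div_lt_one h2]; linarith
      linarith
    have h' : (-(1/((n:ℝ)+2)) + 1)⁻¹ ≥ (Real.exp (-(1/((n:ℝ)+2))))⁻¹ := by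
      apply inv_anti₀ hpos h
    rw [← Real.exp_neg, neg_neg] at h'
    have heq : (-(1/((n:ℝ)+2)) + 1)⁻¹ = ((n:ℝ)+2)/((n:ℝ)+1) := by
      rw [neg_add_eq_sub, one_sub_div h2.ne']
      rw [inv_div]
      ring_nf
    linarith [heq ▸ h']
  have kpow := pow_le_pow_left₀ (Real.exp_pos _).le key (n+2)
  rw [← Real.exp_nat_mul] at kpow
  have hmul : ((n:ℝ)+2) * (1/((n:ℝ)+2)) = 1 := by field_simp
  rw [show ((n+2 : ℕ):ℝ) = (n:ℝ)+2 by push_cast; ring, hmul] at kpow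
  have := mul_le_mul_of_nonneg_right kpow (le_of_lt (pow_pos h1 (n+2)))
  calc Real.exp 1 * ((n:ℝ)+1)^(n+2) ≤ (((n:ℝ)+2)/((n:ℝ)+1))^(n+2) * ((n:ℝ)+1)^(n+2) := this
    _ = ((n:ℝ)+2)^(n+2) := by rw [div_pow]; field_simp

lemma fact_le_s6 (k : ℕ) : (k.factorial : ℝ) * Real.exp 1 ^ k ≤ Real.exp 1 * ((k:ℝ)+1)^(k+1) := by
  induction k with
  | zero => simpa using Real.one_le_exp (le_refl 0)
  | succ n ih =>
    calc ((n+1).factorial : ℝ) * Real.exp 1 ^ (n+1)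
        = ((n:ℝ)+1) * Real.exp 1 * ((n.factorial : ℝ) * Real.exp 1 ^ n) := by
          push_cast [Nat.factorial_succ]; ring
      _ ≤ ((n:ℝ)+1) * Real.exp 1 * (Real.exp 1 * ((n:ℝ)+1)^(n+1)) := by
          apply mul_le_mul_of_nonneg_left ih (by positivity)
      _ = Real.exp 1 * (Real.exp 1 * ((n:ℝ)+1)^(n+2)) := by ring
      _ ≤ Real.exp 1 * ((n:ℝ)+2)^(n+2) := by
          apply mul_le_mul_of_nonneg_left (aux_exp n) (Real.exp_pos 1).le
      _ = Real.exp 1 * (((n:ℝ)+1)+1)^((n+1)+1) := by ring_nf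
      _ = Real.exp 1 * ((((n:ℕ)+1:ℕ):ℝ)+1)^((n+1)+1) := by push_cast; ring_nf

lemma Msup_le_exp {f : ℂ → ℂ} (hf : Differentiable ℂ f) {C b : ℝ}
    (hder : ∀ k : ℕ, ‖iteratedDeriv k f 0‖ ≤ C * b ^ k) {r : ℝ} (hr : 0 ≤ r) :
    Msup f r ≤ C * Real.exp (b * r) := by
  apply Msup_le hr
  intro z hz
  have hzr : ‖z‖ ≤ r := by simpa using hz
  have hsum := Complex.hasSum_taylorSeries_of_entire hf 0 z
  have hb1 : ∀ n : ℕ, ‖(n.factorial : ℂ)⁻¹ • (z - 0) ^ n • iteratedDeriv n f 0‖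
      ≤ C * (b * r) ^ n / n.factorial := by
    intro n
    rw [norm_smul, norm_smul, norm_inv, norm_pow]
    have hfn : (0:ℝ) < n.factorial := by positivity
    calc ‖(n.factorial : ℂ)‖⁻¹ * (‖z - 0‖ ^ n * ‖iteratedDeriv n f 0‖)
        = ‖z‖ ^ n * ‖iteratedDeriv n f 0‖ / n.factorial := by
          simp [Complex.norm_natCast, div_eq_inv_mul]
      _ ≤ r ^ n * (C * b ^ n) / n.factorial := by
          have h1 : ‖z - 0‖ ^ n ≤ r ^ n := by
            rw [sub_zero]
            exact pow_le_pow_left₀ (norm_nonneg z) hzr n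
          have h2 := hder n
          gcongr
      _ = C * (b * r) ^ n / n.factorial := by ring
  have hs2 : Summable (fun n : ℕ => C * (b * r) ^ n / n.factorial) := by
    have := (Real.summable_pow_div_factorial (b * r)).mul_left C
    simpa [mul_div_assoc] using this
  have hnorm : ‖f z‖ ≤ ∑' n : ℕ, C * (b * r) ^ n / n.factorial := by
    rw [← hsum.tsum_eq]
    exact tsum_of_norm_bounded hs2.hasSum hb1
  calc ‖f z‖ ≤ ∑' n : ℕ, C * (b * r) ^ n / n.factorial := hnorm
    _ = C * ∑' n : ℕ, (b * r) ^ n / n.factorial := by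
        rw [← tsum_mul_left]; simp [mul_div_assoc]
    _ = C * Real.exp (b * r) := by
        rw [Real.exp_eq_exp_ℝ, NormedSpace.exp_eq_tsum_div]

theorem stmt_6 (a : ℝ) (ha : 0 ≤ a) (f g : ℂ → ℂ) (hf : InA a f)
    (hg : Differentiable ℂ g) (r₀ : ℝ) (hr₀ : 0 ≤ r₀) (Λ : ℝ)
    (hΛ : ∀ r : ℝ, 0 ≤ r → Msup g r ≤ Λ * Msup f (r + r₀)) :
    InA a g := by
  refine ⟨hg, fun b' hb' => ?_⟩
  set b : ℝ := (a + b') / 2 with hbdef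
  have hab : a < b := by simp only [hbdef]; linarith
  have hbb' : b < b' := by simp only [hbdef]; linarith
  have hb0 : 0 < b := lt_of_le_of_lt ha hab
  have hb'0 : 0 < b' := lt_trans hb0 hbb'
  -- extract coefficient bound for f
  have hfb := hf.2 b hab
  set C : ℝ := (normB b f).toReal with hCdef
  have hC0 : 0 ≤ C := ENNReal.toReal_nonneg
  have hder : ∀ k : ℕ, ‖iteratedDeriv k f 0‖ ≤ C * b ^ k := by
    intro k
    have hk : ENNReal.ofReal (‖iteratedDeriv k f 0‖ / b ^ k) ≤ normB b f :=
      le_iSup (fun k : ℕ => ENNReal.ofReal (‖iteratedDeriv k f 0‖ / b ^ k)) k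
    have := ENNReal.toReal_mono hfb.ne hk
    rw [ENNReal.toReal_ofReal (by positivity)] at this
    calc ‖iteratedDeriv k f 0‖ = ‖iteratedDeriv k f 0‖ / b ^ k * b ^ k := by
          field_simp
      _ ≤ C * b ^ k := by
          apply mul_le_mul_of_nonneg_right this (by positivity)
  -- growth bound for g
  set D : ℝ := max Λ 0 * (C * Real.exp (b * r₀)) with hDdef
  have hD0 : 0 ≤ D := mul_nonneg (le_max_right _ _) (by positivity)
  have hMg : ∀ r : ℝ, 0 ≤ r → Msup g r ≤ D * Real.exp (b * r) := by
    intro r hr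
    have h1 := hΛ r hr
    have h2 : Msup f (r + r₀) ≤ C * Real.exp (b * (r + r₀)) :=
      Msup_le_exp hf.1 hder (by linarith)
    have h3 : 0 ≤ Msup f (r + r₀) := Msup_nonneg hf.1.continuous (by linarith)
    calc Msup g r ≤ Λ * Msup f (r + r₀) := h1
      _ ≤ max Λ 0 * Msup f (r + r₀) :=
          mul_le_mul_of_nonneg_right (le_max_left _ _) h3
      _ ≤ max Λ 0 * (C * Real.exp (b * (r + r₀))) :=
          mul_le_mul_of_nonneg_left h2 (le_max_right _ _)
      _ = D * Real.exp (b * r) := by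
          rw [hDdef, mul_add, Real.exp_add]; ring
  -- coefficient bound for g
  have hgder : ∀ k : ℕ, ‖iteratedDeriv k g 0‖
      ≤ D * Real.exp 1 ^ 2 * ((k:ℝ)+1) * b ^ k := by
    intro k
    have hRpos : (0:ℝ) < ((k:ℝ)+1)/b := by positivity
    have h1 := cauchy_est_s6 hg hRpos k
    have hbR : b * (((k:ℝ)+1)/b) = (k:ℝ)+1 := by field_simp
    have h2 : Msup g (((k:ℝ)+1)/b) ≤ D * Real.exp 1 ^ (k+1) := by
      have := hMg (((k:ℝ)+1)/b) hRpos.le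
      rw [hbR] at this
      have hexp : Real.exp ((k:ℝ)+1) = Real.exp 1 ^ (k+1) := by
        rw [← Real.exp_nat_mul]
        push_cast
        ring_nf
      rwa [hexp] at this
    have hfact := fact_le_s6 k
    have hMg0 : 0 ≤ Msup g (((k:ℝ)+1)/b) := Msup_nonneg hg.continuous hRpos.le
    calc ‖iteratedDeriv k g 0‖
        ≤ (k.factorial : ℝ) * Msup g (((k:ℝ)+1)/b) / (((k:ℝ)+1)/b) ^ k := h1
      _ ≤ (k.factorial : ℝ) * (D * Real.exp 1 ^ (k+1)) / (((k:ℝ)+1)/b) ^ k := by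
          gcongr
      _ ≤ D * Real.exp 1 ^ 2 * ((k:ℝ)+1) * b ^ k := by
          rw [div_le_iff₀ (by positivity)]
          have hpow : b ^ k * (((k:ℝ)+1)/b) ^ k = ((k:ℝ)+1) ^ k := by
            rw [← mul_pow, mul_div_cancel₀ _ hb0.ne']
          have key : (k.factorial : ℝ) * Real.exp 1 ^ (k+1)
              ≤ Real.exp 1 ^ 2 * (((k:ℝ)+1) * ((k:ℝ)+1) ^ k) := by
            have := mul_le_mul_of_nonneg_right hfact (Real.exp_pos 1).le
            calc (k.factorial : ℝ) * Real.exp 1 ^ (k+1)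
                = (k.factorial : ℝ) * Real.exp 1 ^ k * Real.exp 1 := by ring
              _ ≤ Real.exp 1 * ((k:ℝ)+1) ^ (k+1) * Real.exp 1 := this
              _ = Real.exp 1 ^ 2 * (((k:ℝ)+1) * ((k:ℝ)+1) ^ k) := by ring
          calc (k.factorial : ℝ) * (D * Real.exp 1 ^ (k+1))
              = D * ((k.factorial : ℝ) * Real.exp 1 ^ (k+1)) := by ring
            _ ≤ D * (Real.exp 1 ^ 2 * (((k:ℝ)+1) * ((k:ℝ)+1) ^ k)) :=
                mul_le_mul_of_nonneg_left key hD0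
            _ = D * Real.exp 1 ^ 2 * ((k:ℝ)+1) * ((k:ℝ)+1) ^ k := by ring
            _ = D * Real.exp 1 ^ 2 * ((k:ℝ)+1) * b ^ k * (((k:ℝ)+1)/b) ^ k := by
                rw [mul_assoc (D * Real.exp 1 ^ 2 * ((k:ℝ)+1)), hpow]
  -- summable bound
  set x : ℝ := b / b' with hxdef
  have hx0 : 0 ≤ x := by positivity
  have hx1 : x < 1 := by
    rw [hxdef, div_lt_one hb'0]; exact hbb'
  have hxnorm : ‖x‖ < 1 := by rwa [Real.norm_eq_abs, abs_of_nonneg hx0]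
  set u : ℕ → ℝ := fun k => D * Real.exp 1 ^ 2 * ((k:ℝ) ^ 1 * x ^ k + x ^ k) with hudef
  have hsumu : Summable u := by
    apply Summable.mul_left
    exact (summable_pow_mul_geometric_of_norm_lt_one 1 hxnorm).add
      (summable_geometric_of_lt_one hx0 hx1)
  have hfinal : ∀ k : ℕ, ‖iteratedDeriv k g 0‖ / b' ^ k ≤ ∑' n, u n := by
    intro k
    have hunn : ∀ j, 0 ≤ u j := by
      intro j
      apply mul_nonneg (mul_nonneg hD0 (by positivity))
      have := pow_nonneg hx0 j
      positivity
    refine le_trans ?_ (Summable.le_tsum hsumu k fun j _ => hunn j)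
    rw [div_le_iff₀ (by positivity)]
    have hxk : x ^ k * b' ^ k = b ^ k := by
      rw [← mul_pow, hxdef, div_mul_cancel₀ _ hb'0.ne']
    calc ‖iteratedDeriv k g 0‖ ≤ D * Real.exp 1 ^ 2 * ((k:ℝ)+1) * b ^ k := hgder k
      _ = D * Real.exp 1 ^ 2 * ((k:ℝ) ^ 1 * x ^ k + x ^ k) * b' ^ k := by
          rw [← hxk]; ring
      _ = u k * b' ^ k := by rw [hudef]
  calc normB b' g ≤ ENNReal.ofReal (∑' n, u n) := by
        refine iSup_le fun k => ENNReal.ofReal_le_ofReal (hfinal k)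
    _ < ⊤ := ENNReal.ofReal_lt_top
end

section
/- Let a ≥ 0 and let f ∈ L^+ with f ∈ A_a. Then for every b > a and every ε > 0 there exists a polynomial p of the form p(z) = C z^l ∏_{j=1}^m (1 + β_j z) with C ∈ ℂ, l, m ∈ ℕ and β_1, …, β_m ≥ 0 (i.e. a polynomial all of whose zeros are real and nonpositive) such that ‖f − p‖_b < ε. -/
open Polynomial Filter Topology

namespace Stmt8Aux

/-- Nonnegative coefficients predicate. -/
def NN (p : ℝ[X]) : Prop := ∀ k, 0 ≤ p.coeff k

lemma NN.mul {p q : ℝ[X]} (hp : NN p) (hq : NN q) : NN (p * q) := by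
  intro k
  rw [Polynomial.coeff_mul]
  exact Finset.sum_nonneg fun x _ => mul_nonneg (hp _) (hq _)

lemma NN.one : NN (1 : ℝ[X]) := by
  intro k
  rcases eq_or_ne k 0 with rfl | h
  · simp
  · simp [Polynomial.coeff_one, h]

lemma NN.prod {s : Finset ℕ} {F : ℕ → ℝ[X]} (h : ∀ i ∈ s, NN (F i)) :
    NN (∏ i ∈ s, F i) :=
  Finset.prod_induction F NN (fun _ _ => NN.mul) NN.one h

lemma NN.pow {p : ℝ[X]} (hp : NN p) (n : ℕ) : NN (p ^ n) := by
  induction n with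
  | zero => simpa using NN.one
  | succ n ih => rw [pow_succ]; exact ih.mul hp

lemma NN.X_pow (l : ℕ) : NN ((X : ℝ[X]) ^ l) := by
  intro k
  rw [Polynomial.coeff_X_pow]
  positivity

lemma NN.one_add_CX {c : ℝ} (hc : 0 ≤ c) : NN (1 + C c * X) := by
  intro k
  rcases k with _ | k
  · simp
  · rcases k with _ | k <;>
      simp [Polynomial.coeff_one, Polynomial.coeff_C_mul, Polynomial.coeff_X, hc]

/-- coefficientwise ≤ -/
def CLE (p q : ℝ[X]) : Prop := ∀ k, p.coeff k ≤ q.coeff k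

lemma CLE.refl (p : ℝ[X]) : CLE p p := fun _ => le_rfl

lemma CLE.mul {p p' q q' : ℝ[X]} (hp' : NN p') (hq : NN q)
    (h1 : CLE p p') (h2 : CLE q q') : CLE (p * q) (p' * q') := by
  intro k
  rw [Polynomial.coeff_mul, Polynomial.coeff_mul]
  refine Finset.sum_le_sum fun x _ => mul_le_mul (h1 _) (h2 _) (hq _) (hp' _)

lemma NN.CX {c : ℝ} (hc : 0 ≤ c) : NN (C c * X) := by
  intro k
  rcases k with _ | k
  · simp
  · rcases k with _ | k <;>
      simp [Polynomial.coeff_C_mul, Polynomial.coeff_X, hc]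

lemma CLE.mul_one_add_CX {p : ℝ[X]} {c : ℝ} (hp : NN p) (hc : 0 ≤ c) :
    CLE p (p * (1 + C c * X)) := by
  intro k
  rw [mul_add, mul_one, Polynomial.coeff_add]
  have h2 : 0 ≤ (p * (C c * X)).coeff k := (hp.mul (NN.CX hc)) k
  linarith

lemma coeff_one_add_CX_pow (c : ℝ) (N k : ℕ) :
    ((1 + C c * X) ^ N).coeff k = (N.choose k : ℝ) * c ^ k := by
  rw [add_comm (1 : ℝ[X]) (C c * X), add_pow]
  rw [Polynomial.finset_sum_coeff]
  have hterm : ∀ i ∈ Finset.range (N + 1),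
      ((C c * X) ^ i * 1 ^ (N - i) * ((N.choose i : ℕ) : ℝ[X])).coeff k
        = if k = i then (N.choose i : ℝ) * c ^ i else 0 := by
    intro i _
    rw [one_pow, mul_one, mul_pow, ← Polynomial.C_pow, ← Polynomial.C_eq_natCast,
      mul_comm, ← mul_assoc, ← Polynomial.C_mul, Polynomial.coeff_C_mul_X_pow]
  rw [Finset.sum_congr rfl hterm, Finset.sum_ite_eq (Finset.range (N+1)) k
    (fun i => (N.choose i : ℝ) * c ^ i)]
  by_cases hk : k ∈ Finset.range (N + 1)
  · simp [hk]
  · have hNk : N < k := by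
      by_contra h
      exact hk (Finset.mem_range.mpr (by omega))
    simp [hk, Nat.choose_eq_zero_of_lt hNk]



lemma nat_ineq (N k : ℕ) : N.descFactorial k * (N+1)^k ≤ (N+1).descFactorial k * N^k := by
  have e1 : (N+1)^k = ∏ _i ∈ Finset.range k, (N+1) := by simp
  have e2 : N^k = ∏ _i ∈ Finset.range k, N := by simp
  rw [Nat.descFactorial_eq_prod_range, Nat.descFactorial_eq_prod_range, e1, e2,
    ← Finset.prod_mul_distrib, ← Finset.prod_mul_distrib]
  refine Finset.prod_le_prod' fun i _ => ?_
  rcases le_or_gt i N with h | h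
  · have h1 : N + 1 - i = (N - i) + 1 := by omega
    have h2 : N - i ≤ N := Nat.sub_le _ _
    calc (N - i) * (N + 1) = (N - i) * N + (N - i) := by ring
    _ ≤ (N - i) * N + N := by omega
    _ = ((N - i) + 1) * N := by ring
    _ = (N + 1 - i) * N := by rw [h1]
  · have : N - i = 0 := by omega
    simp [this]

lemma nat_ineq_choose (N k : ℕ) : N.choose k * (N+1)^k ≤ (N+1).choose k * N^k := by
  have h := nat_ineq N k
  rw [Nat.descFactorial_eq_factorial_mul_choose, Nat.descFactorial_eq_factorial_mul_choose,
    mul_assoc, mul_assoc] at h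
  exact Nat.le_of_mul_le_mul_left h (Nat.factorial_pos k)

lemma choose_mono_real {α : ℝ} (hα : 0 ≤ α) (N k : ℕ) (hN : 1 ≤ N) :
    (N.choose k : ℝ) * (α / N) ^ k ≤ ((N+1).choose k : ℝ) * (α / (N+1)) ^ k := by
  have hN0 : (0:ℝ) < (N:ℝ) := by exact_mod_cast hN
  have hN1 : (0:ℝ) < ((N:ℝ)+1) := by linarith
  rw [div_pow, div_pow, ← mul_div_assoc, ← mul_div_assoc,
    div_le_div_iff₀ (by positivity) (by positivity)]
  have hnat : ((N.choose k * (N+1)^k : ℕ) : ℝ) ≤ (((N+1).choose k * N^k : ℕ) : ℝ) := by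
    exact_mod_cast nat_ineq_choose N k
  push_cast at hnat
  calc (N.choose k : ℝ) * α ^ k * ((N:ℝ)+1) ^ k
      = ((N.choose k : ℝ) * ((N:ℝ)+1) ^ k) * α ^ k := by ring
    _ ≤ (((N+1).choose k : ℝ) * (N:ℝ) ^ k) * α ^ k := by
        apply mul_le_mul_of_nonneg_right _ (by positivity)
        exact_mod_cast hnat
    _ = ((N+1).choose k : ℝ) * α ^ k * (N:ℝ) ^ k := by ring


open Polynomial

/-- the real model polynomial -/
noncomputable def sP (l : ℕ) (α : ℝ) (β : ℕ → ℝ) (n : ℕ) : ℝ[X] :=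
  X ^ l * (1 + C (α / (n+1)) * X) ^ (n+1) * ∏ j ∈ Finset.range (n+1), (1 + C (β j) * X)

variable {l : ℕ} {α : ℝ} {β : ℕ → ℝ}

lemma NN_sP (hα : 0 ≤ α) (hβ : ∀ j, 0 ≤ β j) (n : ℕ) : NN (sP l α β n) := by
  refine ((NN.X_pow l).mul ((NN.one_add_CX (by positivity)).pow _)).mul
    (NN.prod fun j _ => NN.one_add_CX (hβ j))

lemma CLE_sP (hα : 0 ≤ α) (hβ : ∀ j, 0 ≤ β j) (n : ℕ) :
    CLE (sP l α β n) (sP l α β (n+1)) := by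
  unfold sP
  have hA : NN ((X:ℝ[X]) ^ l) := NN.X_pow l
  have hBn : ∀ m : ℕ, NN ((1 + C (α / (m+1)) * X) ^ (m+1)) :=
    fun m => (NN.one_add_CX (by positivity)).pow _
  have hPn : ∀ m : ℕ, NN (∏ j ∈ Finset.range m, (1 + C (β j) * X)) :=
    fun m => NN.prod fun j _ => NN.one_add_CX (hβ j)
  have h1 : CLE ((X:ℝ[X]) ^ l * (1 + C (α / ((n:ℝ)+1)) * X) ^ (n+1))
      ((X:ℝ[X]) ^ l * (1 + C (α / (((n+1 : ℕ):ℝ)+1)) * X) ^ ((n+1)+1)) := by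
    refine CLE.mul hA (hBn n) (CLE.refl _) ?_
    intro k
    rw [coeff_one_add_CX_pow, coeff_one_add_CX_pow]
    have h := choose_mono_real hα (n+1) k (by omega)
    exact_mod_cast h
  have h2 : CLE (∏ j ∈ Finset.range (n+1), (1 + C (β j) * X))
      (∏ j ∈ Finset.range (n+2), (1 + C (β j) * X)) := by
    rw [Finset.prod_range_succ (n := n+1)]
    exact CLE.mul_one_add_CX (hPn (n+1)) (hβ (n+1))
  refine CLE.mul (hA.mul (hBn (n+1))) (hPn (n+1)) h1 h2

lemma monotone_coeff_sP (hα : 0 ≤ α) (hβ : ∀ j, 0 ≤ β j) (k : ℕ) :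
    Monotone (fun n => (sP l α β n).coeff k) :=
  monotone_nat_of_le_succ fun n => CLE_sP hα hβ n k

lemma iteratedDeriv_polyEval (p : ℂ[X]) (k : ℕ) :
    iteratedDeriv k (fun z => p.eval z) = fun z => (Polynomial.derivative^[k] p).eval z := by
  induction k with
  | zero => simp
  | succ k ih =>
    rw [iteratedDeriv_succ, ih]
    funext z
    rw [Function.iterate_succ_apply']
    exact Polynomial.deriv _

lemma iteratedDeriv_polyEval_zero (p : ℂ[X]) (k : ℕ) :
    iteratedDeriv k (fun z => p.eval z) 0 = (k.factorial : ℂ) * p.coeff k := by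
  rw [iteratedDeriv_polyEval]
  show Polynomial.eval 0 (Polynomial.derivative^[k] p) = _
  rw [← Polynomial.coeff_zero_eq_eval_zero, Polynomial.coeff_iterate_derivative]
  simp [Nat.descFactorial_self, nsmul_eq_mul]

/-- the approximating entire (polynomial) function -/
noncomputable def gA (Cc : ℂ) (l : ℕ) (α : ℝ) (β : ℕ → ℝ) (n : ℕ) : ℂ → ℂ :=
  fun z => Cc * z ^ l * (1 + ((α / (n+1) : ℝ) : ℂ) * z) ^ (n+1) *
    ∏ j ∈ Finset.range (n+1), (1 + (β j : ℂ) * z)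

lemma gA_eq_eval (Cc : ℂ) (l : ℕ) (α : ℝ) (β : ℕ → ℝ) (n : ℕ) :
    gA Cc l α β n = fun z =>
      (Polynomial.C Cc * (sP l α β n).map (algebraMap ℝ ℂ)).eval z := by
  funext z
  simp only [gA, sP, Polynomial.map_mul, Polynomial.map_pow, Polynomial.map_prod,
    Polynomial.map_add, Polynomial.map_one, Polynomial.map_X, Polynomial.map_C,
    Polynomial.eval_mul, Polynomial.eval_pow, Polynomial.eval_prod, Polynomial.eval_add,
    Polynomial.eval_one, Polynomial.eval_C, Polynomial.eval_X, Complex.coe_algebraMap]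
  push_cast
  ring

lemma norm_iteratedDeriv_gA (Cc : ℂ) {l : ℕ} {α : ℝ} {β : ℕ → ℝ}
    (hα : 0 ≤ α) (hβ : ∀ j, 0 ≤ β j) (n k : ℕ) :
    ‖iteratedDeriv k (gA Cc l α β n) 0‖ = (k.factorial : ℝ) * ‖Cc‖ * (sP l α β n).coeff k := by
  rw [gA_eq_eval, iteratedDeriv_polyEval_zero]
  rw [Polynomial.coeff_C_mul, Polynomial.coeff_map, Complex.coe_algebraMap]
  rw [norm_mul, norm_mul, Complex.norm_real]
  rw [Real.norm_eq_abs, abs_of_nonneg (NN_sP hα hβ n k)]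
  norm_num [mul_assoc]

section Analysis
open Filter Topology

lemma entire_deriv {h : ℂ → ℂ} (hh : Differentiable ℂ h) : Differentiable ℂ (deriv h) := by
  have h2 : ContDiff ℂ ((⊤:ℕ∞) : WithTop ℕ∞) h := hh.contDiff
  exact (contDiff_infty_iff_deriv.mp h2).2.differentiable (by simp)

lemma entire_iteratedDeriv {h : ℂ → ℂ} (hh : Differentiable ℂ h) (k : ℕ) :
    Differentiable ℂ (iteratedDeriv k h) := by
  induction k with
  | zero => simpa using hh
  | succ k ih => rw [iteratedDeriv_succ]; exact entire_deriv ih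

lemma iteratedDeriv_sub' {F G : ℂ → ℂ} (hF : Differentiable ℂ F) (hG : Differentiable ℂ G)
    (k : ℕ) : iteratedDeriv k (F - G) = iteratedDeriv k F - iteratedDeriv k G := by
  induction k with
  | zero => simp
  | succ k ih =>
    rw [iteratedDeriv_succ, ih, iteratedDeriv_succ, iteratedDeriv_succ]
    funext x
    have hd : deriv (fun y => iteratedDeriv k F y - iteratedDeriv k G y) x
        = deriv (iteratedDeriv k F) x - deriv (iteratedDeriv k G) x :=
      deriv_sub ((entire_iteratedDeriv hF k) x) ((entire_iteratedDeriv hG k) x)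
    exact hd

lemma tlu_iteratedDeriv {G : ℕ → ℂ → ℂ} {F : ℂ → ℂ} (hG : ∀ n, Differentiable ℂ (G n))
    (hF : Differentiable ℂ F) (h : TendstoLocallyUniformly G F atTop) (k : ℕ) :
    TendstoLocallyUniformly (fun n => iteratedDeriv k (G n)) (iteratedDeriv k F) atTop := by
  induction k with
  | zero => simpa using h
  | succ k ih =>
    have h1 := (tendstoLocallyUniformlyOn_univ.mpr ih).deriv
      (Filter.Eventually.of_forall fun n => (entire_iteratedDeriv (hG n) k).differentiableOn)
      isOpen_univ
    have h2 := tendstoLocallyUniformlyOn_univ.mp h1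
    simp only [iteratedDeriv_succ]
    exact h2

lemma norm_prod_one_add_sub_one_le (s : Finset ℕ) (u : ℕ → ℂ) :
    ‖∏ j ∈ s, (1 + u j) - 1‖ ≤ ∏ j ∈ s, (1 + ‖u j‖) - 1 := by
  induction s using Finset.cons_induction with
  | empty => simp
  | cons a s ha ih =>
    rw [Finset.prod_cons, Finset.prod_cons]
    have hQ : (1 : ℝ) ≤ ∏ j ∈ s, (1 + ‖u j‖) := by
      have h := Finset.prod_le_prod (s := s) (f := fun _ => (1:ℝ))
        (g := fun j => 1 + ‖u j‖) (fun j _ => by norm_num)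
        (fun j _ => by simpa using norm_nonneg (u j))
      simpa using h
    have key : (1 + u a) * (∏ j ∈ s, (1 + u j)) - 1
        = (1 + u a) * ((∏ j ∈ s, (1 + u j)) - 1) + u a := by ring
    rw [key]
    calc ‖(1 + u a) * ((∏ j ∈ s, (1 + u j)) - 1) + u a‖
        ≤ ‖1 + u a‖ * ‖(∏ j ∈ s, (1 + u j)) - 1‖ + ‖u a‖ := by
          refine (norm_add_le _ _).trans ?_
          rw [norm_mul]
      _ ≤ (1 + ‖u a‖) * ((∏ j ∈ s, (1 + ‖u j‖)) - 1) + ‖u a‖ := by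
          have h1 : ‖(1 : ℂ) + u a‖ ≤ 1 + ‖u a‖ := (norm_add_le _ _).trans (by simp)
          have h2 := ih
          have h3 : (0:ℝ) ≤ 1 + ‖u a‖ := by positivity
          have := mul_le_mul h1 h2 (norm_nonneg _) h3
          linarith
      _ = (1 + ‖u a‖) * (∏ j ∈ s, (1 + ‖u j‖)) - 1 := by ring
  
lemma norm_prod_one_add_le (s : Finset ℕ) (u : ℕ → ℂ) :
    ‖∏ j ∈ s, (1 + u j)‖ ≤ ∏ j ∈ s, (1 + ‖u j‖) := by
  have h := norm_prod_one_add_sub_one_le s u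
  have := norm_sub_norm_le (∏ j ∈ s, (1 + u j)) 1
  simp only [norm_one] at this
  linarith

lemma prod_one_add_le_exp (s : Finset ℕ) (v : ℕ → ℝ) (hv : ∀ j, 0 ≤ v j) :
    ∏ j ∈ s, (1 + v j) ≤ Real.exp (∑ j ∈ s, v j) := by
  rw [Real.exp_sum]
  refine Finset.prod_le_prod (fun j _ => by linarith [hv j]) fun j _ => ?_
  have := Real.add_one_le_exp (v j)
  linarith

lemma multipliable_one_add {β : ℕ → ℝ} (hβ : ∀ j, 0 ≤ β j) (hs : Summable β) (z : ℂ) :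
    Multipliable (fun j => 1 + (β j : ℂ) * z) := by
  by_cases hz : ∃ j₀, 1 + (β j₀ : ℂ) * z = 0
  · obtain ⟨j₀, h0⟩ := hz
    refine ⟨0, ?_⟩
    have hev : ∀ᶠ (s : Finset ℕ) in atTop, ({j₀} : Finset ℕ) ≤ s := eventually_ge_atTop _
    refine Tendsto.congr' ?_ tendsto_const_nhds
    filter_upwards [hev] with s hs'
    have hj : j₀ ∈ s := hs' (Finset.mem_singleton_self j₀)
    exact (Finset.prod_eq_zero hj h0).symm
  · push_neg at hz
    refine Complex.multipliable_of_summable_log (f := fun j => 1 + (β j : ℂ) * z) ?_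
    have htend : Tendsto (fun j => β j * ‖z‖) atTop (𝓝 0) := by
      simpa using hs.tendsto_atTop_zero.mul_const ‖z‖
    obtain ⟨n₀, hn₀⟩ : ∃ n₀, ∀ j ≥ n₀, β j * ‖z‖ ≤ 1/2 := by
      have := htend.eventually_le_const (show (0:ℝ) < 1/2 by norm_num)
      exact eventually_atTop.mp this
    rw [← summable_nat_add_iff n₀]
    have hnorm : ∀ j : ℕ, ‖((β (j + n₀) : ℂ) * z)‖ = β (j + n₀) * ‖z‖ := by
      intro j
      rw [norm_mul, Complex.norm_real, Real.norm_eq_abs, abs_of_nonneg (hβ _)]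
    refine Summable.of_norm_bounded (g := fun j => 3/2 * (β (j + n₀) * ‖z‖)) ?_ fun j => ?_
    · exact ((((summable_nat_add_iff n₀).2 hs).mul_right ‖z‖).mul_left _)
    · have hb : ‖((β (j + n₀) : ℂ) * z)‖ ≤ 1/2 := by
        rw [hnorm]; exact hn₀ _ (Nat.le_add_left _ _)
      calc ‖Complex.log (1 + (β (j + n₀) : ℂ) * z)‖
          ≤ 3/2 * ‖((β (j + n₀) : ℂ) * z)‖ := Complex.norm_log_one_add_half_le_self hb
        _ = 3/2 * (β (j + n₀) * ‖z‖) := by rw [hnorm]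

end Analysis

section Conv
open Filter Topology

variable {Cc : ℂ} {l : ℕ} {α : ℝ} {β : ℕ → ℝ} {f : ℂ → ℂ}

lemma finprod_norm_le (hβ : ∀ j, 0 ≤ β j) (hs : Summable β) {z : ℂ} {R : ℝ}
    (hz : ‖z‖ ≤ R) (s : Finset ℕ) :
    ‖∏ j ∈ s, (1 + (β j : ℂ) * z)‖ ≤ Real.exp ((∑' j, β j) * R) := by
  have hR0 : 0 ≤ R := le_trans (norm_nonneg z) hz
  calc ‖∏ j ∈ s, (1 + (β j : ℂ) * z)‖ ≤ ∏ j ∈ s, (1 + ‖(β j : ℂ) * z‖) :=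
        norm_prod_one_add_le s _
    _ ≤ ∏ j ∈ s, (1 + β j * R) := by
        refine Finset.prod_le_prod (fun j _ => by positivity) fun j _ => ?_
        rw [norm_mul, Complex.norm_real, Real.norm_eq_abs, abs_of_nonneg (hβ j)]
        have := mul_le_mul_of_nonneg_left hz (hβ j)
        linarith
    _ ≤ Real.exp (∑ j ∈ s, β j * R) := prod_one_add_le_exp s _ (fun j => by
        have := hβ j; positivity)
    _ ≤ Real.exp ((∑' j, β j) * R) := by
        apply Real.exp_le_exp.mpr
        rw [← Finset.sum_mul]
        exact mul_le_mul_of_nonneg_right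
          (Summable.sum_le_tsum s (fun j _ => hβ j) hs) hR0

lemma main_tlu (hα : 0 ≤ α) (hβ : ∀ j, 0 ≤ β j) (hs : Summable β)
    (hf : ∀ z, f z = Cc * z ^ l * Complex.exp ((α : ℂ) * z) * ∏' j : ℕ, (1 + (β j : ℂ) * z)) :
    TendstoLocallyUniformly (fun n => gA Cc l α β n) f atTop := by
  rw [tendstoLocallyUniformly_iff_forall_isCompact]
  intro K hK
  obtain ⟨r, hr⟩ := hK.isBounded.subset_closedBall 0
  set R : ℝ := max r 0 with hRdef
  have hR0 : 0 ≤ R := le_max_right _ _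
  have hKR : K ⊆ Metric.closedBall 0 R :=
    hr.trans (Metric.closedBall_subset_closedBall (le_max_left _ _))
  refine TendstoUniformlyOn.mono ?_ hKR
  rw [Metric.tendstoUniformlyOn_iff]
  intro ε hε
  set S : ℝ := ∑' j, β j with hSdef
  have hS0 : 0 ≤ S := tsum_nonneg hβ
  set KK : ℝ := ‖Cc‖ * R ^ l * Real.exp (α * R) * Real.exp (S * R) + 1 with hKKdef
  have hKK0 : 0 < KK := by positivity
  -- the quantitative pointwise bound
  have key : ∀ n : ℕ, α * R / (n + 1) ≤ 1 → ∀ z ∈ Metric.closedBall (0:ℂ) R,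
      ‖f z - gA Cc l α β n z‖ ≤
        KK * ((α * R) ^ 2 / (n + 1) + (Real.exp ((∑' j, β (j + (n+1))) * R) - 1)) := by
    intro n hn z hzK
    have hz : ‖z‖ ≤ R := by
      simpa [Complex.dist_eq] using Metric.mem_closedBall.mp hzK
    have hNpos : (0:ℝ) < (n:ℝ) + 1 := by positivity
    have hNne : ((n:ℝ) + 1) ≠ 0 := ne_of_gt hNpos
    have hNCne : (((n:ℕ) + 1 : ℕ) : ℂ) ≠ 0 := by exact_mod_cast Nat.succ_ne_zero n
    set T : ℝ := ∑' j, β (j + (n+1)) with hTdef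
    have hTsummable : Summable (fun j => β (j + (n+1))) := (summable_nat_add_iff (n+1)).2 hs
    have hT0 : 0 ≤ T := tsum_nonneg fun j => hβ _
    have hmult := multipliable_one_add hβ hs z
    have hprod := hmult.hasProd
    set P : ℂ := ∏' j : ℕ, (1 + (β j : ℂ) * z) with hPdef
    set Pn : ℂ := ∏ j ∈ Finset.range (n+1), (1 + (β j : ℂ) * z) with hPndef
    set w : ℂ := (α : ℂ) * z / ((n:ℂ) + 1) with hwdef
    have hcast : (((n:ℕ) + 1 : ℕ) : ℂ) = (n : ℂ) + 1 := by push_cast; ring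
    have hwnorm : ‖w‖ ≤ α * R / ((n:ℝ) + 1) := by
      rw [hwdef, norm_div, norm_mul]
      have h1 : ‖(α:ℂ)‖ = α := by
        rw [Complex.norm_real, Real.norm_eq_abs, abs_of_nonneg hα]
      have h2 : ‖((n:ℂ) + 1)‖ = (n:ℝ) + 1 := by
        have : ((n:ℂ) + 1) = (((n:ℝ) + 1 : ℝ) : ℂ) := by push_cast; ring
        rw [this, Complex.norm_real, Real.norm_eq_abs, abs_of_nonneg (by positivity)]
      rw [h1, h2]
      gcongr
    have hw1 : ‖w‖ ≤ 1 := hwnorm.trans hn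
    set E : ℂ := (1 + ((α / (n+1) : ℝ) : ℂ) * z) ^ (n+1) with hEdef
    have hwz : ((α / (n+1) : ℝ) : ℂ) * z = w := by
      rw [hwdef]; push_cast; ring
    have hEw : E = (1 + w) ^ (n+1) := by rw [hEdef, hwz]
    have hNCne' : ((n:ℂ) + 1) ≠ 0 := by
      rw [← hcast]; exact_mod_cast hNCne
    have hexpw : Complex.exp ((α:ℂ) * z) = Complex.exp w ^ (n+1) := by
      rw [← Complex.exp_nat_mul]
      congr 1
      rw [hwdef]
      push_cast
      field_simp
    set M : ℝ := Real.exp (α * R / ((n:ℝ)+1)) with hMdef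
    have hM1 : (1:ℝ) ≤ M := Real.one_le_exp (by positivity)
    have hM0 : (0:ℝ) ≤ M := by linarith
    have hx : ‖Complex.exp w‖ ≤ M := by
      rw [Complex.norm_exp]
      apply Real.exp_le_exp.mpr
      exact (Complex.re_le_norm w).trans hwnorm
    have hy : ‖1 + w‖ ≤ M := by
      refine (norm_add_le _ _).trans ?_
      rw [norm_one]
      have := Real.add_one_le_exp (α * R / ((n:ℝ)+1))
      have hw' := hwnorm
      rw [hMdef]
      linarith
    have hxy : ‖Complex.exp w - (1 + w)‖ ≤ ‖w‖^2 := by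
      have h := Complex.norm_exp_sub_one_sub_id_le (x := w) hw1
      calc ‖Complex.exp w - (1 + w)‖ = ‖Complex.exp w - 1 - w‖ := by
            congr 1; ring
        _ ≤ ‖w‖ ^ 2 := h
    have hgeom : ‖Complex.exp ((α:ℂ)*z) - E‖ ≤ ((n:ℝ)+1) * M^n * ‖w‖^2 := by
      rw [hexpw, hEw, ← geom_sum₂_mul (Complex.exp w) (1+w) (n+1), norm_mul]
      have hsum : ‖∑ i ∈ Finset.range (n+1), Complex.exp w ^ i * (1+w) ^ (n+1-1-i)‖
          ≤ ((n:ℝ)+1) * M^n := by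
        refine (norm_sum_le _ _).trans ?_
        have hterm : ∀ i ∈ Finset.range (n+1),
            ‖Complex.exp w ^ i * (1+w)^(n+1-1-i)‖ ≤ M^n := by
          intro i hi
          rw [norm_mul, norm_pow, norm_pow]
          have hi' : i ≤ n := by
            have := Finset.mem_range.mp hi; omega
          have e : i + (n + 1 - 1 - i) = n := by omega
          calc ‖Complex.exp w‖^i * ‖1+w‖^(n+1-1-i)
              ≤ M^i * M^(n+1-1-i) :=
                mul_le_mul (pow_le_pow_left₀ (norm_nonneg _) hx i)
                  (pow_le_pow_left₀ (norm_nonneg _) hy _) (by positivity) (by positivity)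
            _ = M ^ n := by rw [← pow_add, e]
        refine (Finset.sum_le_sum hterm).trans ?_
        rw [Finset.sum_const, Finset.card_range, nsmul_eq_mul]
        push_cast
        exact le_refl _
      exact mul_le_mul hsum hxy (norm_nonneg _) (by positivity)
    have hgeom2 : ‖Complex.exp ((α:ℂ)*z) - E‖ ≤ Real.exp (α*R) * ((α*R)^2/((n:ℝ)+1)) := by
      refine hgeom.trans ?_
      have h1 : M ^ n ≤ Real.exp (α * R) := by
        rw [hMdef, ← Real.exp_nat_mul]
        apply Real.exp_le_exp.mpr
        rw [mul_div_assoc']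
        rw [div_le_iff₀ hNpos]
        have hαR : 0 ≤ α * R := by positivity
        nlinarith [Nat.cast_nonneg (α := ℝ) n]
      have h2 : ‖w‖^2 ≤ (α*R/((n:ℝ)+1))^2 := pow_le_pow_left₀ (norm_nonneg _) hwnorm 2
      calc ((n:ℝ)+1) * M^n * ‖w‖^2
          ≤ (((n:ℝ)+1) * Real.exp (α*R)) * ((α*R/((n:ℝ)+1))^2) :=
            mul_le_mul (mul_le_mul_of_nonneg_left h1 (by positivity)) h2
              (by positivity) (by positivity)
        _ = Real.exp (α*R) * ((α*R)^2/((n:ℝ)+1)) := by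
            field_simp
    have hPnorm : ‖P‖ ≤ Real.exp (S*R) := by
      have ht0 : Filter.Tendsto (fun s : Finset ℕ => ∏ j ∈ s, (1 + (β j:ℂ)*z))
          atTop (𝓝 P) := hprod
      have ht := ht0.norm
      exact le_of_tendsto ht (Filter.Eventually.of_forall fun s => finprod_norm_le hβ hs hz s)
    have hPnnorm : ‖Pn‖ ≤ Real.exp (S*R) := finprod_norm_le hβ hs hz _
    have hEnorm : ‖E‖ ≤ Real.exp (α*R) := by
      rw [hEw, norm_pow]
      calc ‖1+w‖^(n+1) ≤ M^(n+1) := pow_le_pow_left₀ (norm_nonneg _) hy _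
        _ = Real.exp ((((n:ℕ)+1 : ℕ):ℝ) * (α*R/((n:ℝ)+1))) := by
            rw [← Real.exp_nat_mul]
        _ = Real.exp (α*R) := by
            congr 1
            push_cast
            field_simp
    have htailbound : ∀ d : ℕ,
        ‖(∏ j ∈ Finset.range (d + (n+1)), (1 + (β j:ℂ)*z)) - Pn‖
          ≤ Real.exp (S*R) * (Real.exp (T*R) - 1) := by
      intro d
      rw [Nat.add_comm d (n+1), Finset.prod_range_add]
      have hQle : ‖(∏ x ∈ Finset.range d, (1 + (β ((n+1)+x) : ℂ)*z)) - 1‖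
          ≤ Real.exp (T*R) - 1 := by
        refine (norm_prod_one_add_sub_one_le _ _).trans ?_
        have hchain : ∏ x ∈ Finset.range d, (1 + ‖(β ((n+1)+x):ℂ)*z‖)
            ≤ Real.exp (T*R) := by
          calc ∏ x ∈ Finset.range d, (1 + ‖(β ((n+1)+x):ℂ)*z‖)
              ≤ ∏ x ∈ Finset.range d, (1 + β ((n+1)+x) * R) := by
                refine Finset.prod_le_prod (fun x _ => by positivity) fun x _ => ?_
                rw [norm_mul, Complex.norm_real, Real.norm_eq_abs, abs_of_nonneg (hβ _)]
                have := mul_le_mul_of_nonneg_left hz (hβ ((n+1)+x))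
                linarith
            _ ≤ Real.exp (∑ x ∈ Finset.range d, β ((n+1)+x) * R) :=
                prod_one_add_le_exp _ _ (fun x => by
                  have := hβ ((n+1)+x); positivity)
            _ ≤ Real.exp (T*R) := by
                apply Real.exp_le_exp.mpr
                rw [← Finset.sum_mul]
                refine mul_le_mul_of_nonneg_right ?_ hR0
                have hsum := Summable.sum_le_tsum (Finset.range d)
                  (fun j _ => hβ (j + (n+1))) hTsummable
                rw [hTdef]
                refine le_trans (le_of_eq ?_) hsum
                refine Finset.sum_congr rfl fun x _ => ?_
                rw [Nat.add_comm]
        linarith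
      calc ‖Pn * (∏ x ∈ Finset.range d, (1 + (β ((n+1)+x) : ℂ)*z)) - Pn‖
          = ‖Pn‖ * ‖(∏ x ∈ Finset.range d, (1 + (β ((n+1)+x) : ℂ)*z)) - 1‖ := by
            rw [← norm_mul]
            congr 1
            ring
        _ ≤ Real.exp (S*R) * (Real.exp (T*R) - 1) := by
            have h0 : (0:ℝ) ≤ Real.exp (T*R) - 1 := by
              have := Real.one_le_exp (x := T*R) (by positivity)
              linarith
            exact mul_le_mul hPnnorm hQle (norm_nonneg _) (by positivity)
    have hPtail : ‖P - Pn‖ ≤ Real.exp (S*R) * (Real.exp (T*R) - 1) := by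
      have hlim : Filter.Tendsto (fun d => ∏ j ∈ Finset.range (d + (n+1)), (1 + (β j:ℂ)*z))
          atTop (𝓝 P) := hprod.tendsto_prod_nat.comp (tendsto_add_atTop_nat (n+1))
      have hlim2 := (hlim.sub_const Pn).norm
      exact le_of_tendsto hlim2 (Filter.Eventually.of_forall htailbound)
    have hsplit : f z - gA Cc l α β n z
        = Cc * z^l * ((Complex.exp ((α:ℂ)*z) - E) * P + E * (P - Pn)) := by
      rw [hf z]
      show _ - Cc * z ^ l * (1 + ((α / (n+1) : ℝ) : ℂ) * z) ^ (n+1) *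
        (∏ j ∈ Finset.range (n+1), (1 + (β j : ℂ) * z)) = _
      rw [← hEdef, ← hPdef, ← hPndef]
      ring
    rw [hsplit]
    have hzl : ‖z‖^l ≤ R^l := pow_le_pow_left₀ (norm_nonneg _) hz l
    have hexpT1 : (0:ℝ) ≤ Real.exp (T*R) - 1 := by
      have := Real.one_le_exp (x := T*R) (by positivity)
      linarith
    have hn1 : ‖(Complex.exp ((α:ℂ)*z) - E) * P‖
        ≤ (Real.exp (α*R) * ((α*R)^2/((n:ℝ)+1))) * Real.exp (S*R) := by
      rw [norm_mul]
      exact mul_le_mul hgeom2 hPnorm (norm_nonneg _) (by positivity)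
    have hn2 : ‖E * (P - Pn)‖ ≤ Real.exp (α*R) * (Real.exp (S*R) * (Real.exp (T*R) - 1)) := by
      rw [norm_mul]
      exact mul_le_mul hEnorm hPtail (norm_nonneg _) (by positivity)
    have hfinal : ‖Cc * z^l * ((Complex.exp ((α:ℂ)*z) - E) * P + E * (P - Pn))‖
        ≤ (‖Cc‖ * R^l) * ((Real.exp (α*R) * ((α*R)^2/((n:ℝ)+1))) * Real.exp (S*R)
            + Real.exp (α*R) * (Real.exp (S*R) * (Real.exp (T*R) - 1))) := by
      rw [norm_mul, norm_mul, norm_pow, mul_assoc, mul_assoc]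
      refine mul_le_mul_of_nonneg_left ?_ (norm_nonneg Cc)
      refine mul_le_mul hzl ((norm_add_le _ _).trans (add_le_add hn1 hn2)) (norm_nonneg _)
        (by positivity)
    refine hfinal.trans ?_
    have hX1 : (0:ℝ) ≤ (α*R)^2/((n:ℝ)+1) := by positivity
    have halg : (‖Cc‖ * R^l) * ((Real.exp (α*R) * ((α*R)^2/((n:ℝ)+1))) * Real.exp (S*R)
            + Real.exp (α*R) * (Real.exp (S*R) * (Real.exp (T*R) - 1)))
        = (‖Cc‖ * R^l * Real.exp (α*R) * Real.exp (S*R))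
            * ((α*R)^2/((n:ℝ)+1) + (Real.exp (T*R) - 1)) := by ring
    rw [halg, hKKdef]
    refine mul_le_mul_of_nonneg_right (by linarith) (by linarith)
  -- now the limit argument
  have t1 : Filter.Tendsto (fun n : ℕ => (α*R)^2/((n:ℝ)+1)) atTop (𝓝 0) := by
    have h := (tendsto_const_div_atTop_nhds_zero_nat ((α*R)^2)).comp (tendsto_add_atTop_nat 1)
    have : (fun n : ℕ => (α*R)^2/((n:ℝ)+1)) = (fun n : ℕ => (α*R)^2 / (n:ℝ)) ∘ (fun n => n + 1) := by
      funext n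
      simp [Function.comp]
    rw [this]
    exact h
  have t2 : Filter.Tendsto (fun n : ℕ => Real.exp ((∑' j, β (j + (n+1))) * R) - 1)
      atTop (𝓝 0) := by
    have h0 : Filter.Tendsto (fun n : ℕ => ∑' j, β (j + (n+1))) atTop (𝓝 0) :=
      (tendsto_sum_nat_add β).comp (tendsto_add_atTop_nat 1)
    have h1 : Filter.Tendsto (fun n : ℕ => (∑' j, β (j + (n+1))) * R) atTop (𝓝 0) := by
      simpa using h0.mul_const R
    have h2 := (Real.continuous_exp.tendsto 0).comp h1
    simp only [Real.exp_zero] at h2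
    simpa using h2.sub_const 1
  have t3 : Filter.Tendsto
      (fun n : ℕ => KK * ((α * R) ^ 2 / ((n:ℝ) + 1) + (Real.exp ((∑' j, β (j + (n+1))) * R) - 1)))
      atTop (𝓝 0) := by
    have := (t1.add t2).const_mul KK
    simpa using this
  have ev1 : ∀ᶠ n : ℕ in atTop,
      KK * ((α * R) ^ 2 / ((n:ℝ) + 1) + (Real.exp ((∑' j, β (j + (n+1))) * R) - 1)) < ε :=
    t3.eventually_lt_const hε
  have ev2 : ∀ᶠ n : ℕ in atTop, α * R / ((n:ℝ) + 1) ≤ 1 := by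
    have h := (tendsto_const_div_atTop_nhds_zero_nat (α*R)).comp (tendsto_add_atTop_nat 1)
    have heq : (fun n : ℕ => α*R/((n:ℝ)+1)) = (fun n : ℕ => α*R / (n:ℝ)) ∘ (fun n => n + 1) := by
      funext n
      simp [Function.comp]
    have h2 : Filter.Tendsto (fun n : ℕ => α*R/((n:ℝ)+1)) atTop (𝓝 0) := by rw [heq]; exact h
    exact h2.eventually_le_const (by norm_num)
  filter_upwards [ev1, ev2] with n h1 h2
  intro z hzK
  rw [dist_eq_norm]
  calc ‖f z - gA Cc l α β n z‖
      ≤ KK * ((α * R) ^ 2 / ((n:ℝ) + 1) + (Real.exp ((∑' j, β (j + (n+1))) * R) - 1)) := by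
        have := key n (by exact_mod_cast h2) z hzK
        exact_mod_cast this
    _ < ε := h1

end Conv

section Final
open Filter Topology

lemma gA_form (Cc : ℂ) (l : ℕ) (α : ℝ) (β : ℕ → ℝ) (n : ℕ) :
    (fun z : ℂ => Cc * z ^ l * ∏ j ∈ Finset.range ((n+1)+(n+1)),
      (1 + (((fun j => if j < n+1 then α/(n+1) else β (j - (n+1))) j : ℝ) : ℂ) * z))
      = gA Cc l α β n := by
  funext z
  rw [Finset.prod_range_add]
  have h1 : ∏ j ∈ Finset.range (n+1),
      (1 + (((if j < n+1 then α/(n+1) else β (j - (n+1))) : ℝ) : ℂ) * z)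
      = (1 + ((α / (n+1) : ℝ) : ℂ) * z) ^ (n+1) := by
    rw [Finset.prod_congr rfl (fun j hj => by
      rw [if_pos (Finset.mem_range.mp hj)]), Finset.prod_const, Finset.card_range]
  have h2 : ∏ x ∈ Finset.range (n+1),
      (1 + (((if (n+1)+x < n+1 then α/(n+1) else β ((n+1)+x - (n+1))) : ℝ) : ℂ) * z)
      = ∏ j ∈ Finset.range (n+1), (1 + ((β j : ℝ) : ℂ) * z) := by
    refine Finset.prod_congr rfl fun x _ => ?_
    rw [if_neg (by omega), Nat.add_sub_cancel_left]
  rw [h1, h2, gA]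
  ring

lemma entire_gA (Cc : ℂ) (l : ℕ) (α : ℝ) (β : ℕ → ℝ) (n : ℕ) :
    Differentiable ℂ (gA Cc l α β n) := by
  rw [gA_eq_eval]
  exact (Polynomial.C Cc * (sP l α β n).map (algebraMap ℝ ℂ)).differentiable

end Final

end Stmt8Aux

open Filter Topology
open scoped ENNReal

/-- The Laguerre class `L⁺`: `f(z) = C z^l e^{αz} ∏_{j} (1 + β_j z)` with `α ≥ 0` and
`(β_j)` a nonincreasing summable sequence of nonnegative reals. -/
def LaguerrePlus (f : ℂ → ℂ) : Prop :=
  ∃ (C : ℂ) (l : ℕ) (α : ℝ) (β : ℕ → ℝ),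
    0 ≤ α ∧ (∀ j, 0 ≤ β j) ∧ (∀ j, β (j + 1) ≤ β j) ∧ Summable β ∧
    ∀ z : ℂ, f z = C * z ^ l * Complex.exp ((α : ℂ) * z) * ∏' j : ℕ, (1 + (β j : ℂ) * z)

theorem stmt_8 (a : ℝ) (ha : 0 ≤ a) (f : ℂ → ℂ)
    (hfL : LaguerrePlus f) (hfA : InA a f) :
    ∀ b > a, ∀ ε : ℝ, 0 < ε →
      ∃ (C : ℂ) (l m : ℕ) (β : ℕ → ℝ), (∀ j, 0 ≤ β j) ∧
        normB b (f - fun z => C * z ^ l * ∏ j ∈ Finset.range m, (1 + (β j : ℂ) * z)) <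
          ENNReal.ofReal ε := by
  intro b hb ε hε
  obtain ⟨Cc, l, α, β, hα, hβ, hmonoβ, hsum, hfeq⟩ := hfL
  have hfdiff : Differentiable ℂ f := hfA.1
  set b' : ℝ := (a + b) / 2 with hb'def
  have hab' : a < b' := by rw [hb'def]; linarith
  have hb'b : b' < b := by rw [hb'def]; linarith
  have hb'0 : (0:ℝ) < b' := lt_of_le_of_lt ha hab'
  have hb0 : (0:ℝ) < b := lt_trans hb'0 hb'b
  have hfin : normB b' f < ⊤ := hfA.2 b' hab'
  set M : ℝ := (normB b' f).toReal with hMdef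
  have hM0 : 0 ≤ M := ENNReal.toReal_nonneg
  have hM : ∀ k, ‖iteratedDeriv k f 0‖ ≤ M * b' ^ k := by
    intro k
    have h1 : ENNReal.ofReal (‖iteratedDeriv k f 0‖ / b' ^ k) ≤ normB b' f :=
      le_iSup (fun k => ENNReal.ofReal (‖iteratedDeriv k f 0‖ / b' ^ k)) k
    have h2 : ‖iteratedDeriv k f 0‖ / b' ^ k ≤ M := by
      have h3 := ENNReal.toReal_mono hfin.ne h1
      rwa [ENNReal.toReal_ofReal (by positivity)] at h3
    rw [div_le_iff₀ (pow_pos hb'0 k)] at h2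
    linarith
  -- convergence of all derivatives at 0
  have htlu := Stmt8Aux.main_tlu hα hβ hsum hfeq
  have hgdiff : ∀ n, Differentiable ℂ (Stmt8Aux.gA Cc l α β n) := Stmt8Aux.entire_gA Cc l α β
  have hder : ∀ k, Tendsto (fun n => iteratedDeriv k (Stmt8Aux.gA Cc l α β n) 0)
      atTop (𝓝 (iteratedDeriv k f 0)) := by
    intro k
    have h := Stmt8Aux.tlu_iteratedDeriv hgdiff hfdiff htlu k
    exact (tendstoLocallyUniformlyOn_univ.mpr h).tendsto_at (Set.mem_univ 0)
  -- domination
  have hmono2 : ∀ k, Monotone (fun n => ‖iteratedDeriv k (Stmt8Aux.gA Cc l α β n) 0‖) := by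
    intro k n m hnm
    simp only [Stmt8Aux.norm_iteratedDeriv_gA Cc hα hβ]
    have h := Stmt8Aux.monotone_coeff_sP (l := l) hα hβ k hnm
    have h0 : (0:ℝ) ≤ (k.factorial : ℝ) * ‖Cc‖ := by positivity
    exact mul_le_mul_of_nonneg_left h h0
  have hdom : ∀ n k, ‖iteratedDeriv k (Stmt8Aux.gA Cc l α β n) 0‖ ≤ ‖iteratedDeriv k f 0‖ :=
    fun n k => (hmono2 k).ge_of_tendsto ((hder k).norm) n
  -- choose K for the tail
  set r : ℝ := b' / b with hrdef
  have hr0 : 0 < r := by positivity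
  have hr1 : r < 1 := (div_lt_one hb0).mpr hb'b
  have hgeo : Tendsto (fun k : ℕ => 2 * M * r ^ k) atTop (𝓝 0) := by
    have := (tendsto_pow_atTop_nhds_zero_of_lt_one (le_of_lt hr0) hr1).const_mul (2 * M)
    simpa using this
  obtain ⟨K, hK⟩ : ∃ K : ℕ, ∀ k ≥ K, 2 * M * r ^ k < ε / 2 :=
    eventually_atTop.mp (hgeo.eventually_lt_const (by positivity))
  -- choose n for the head
  have hsub : ∀ n k, iteratedDeriv k (f - Stmt8Aux.gA Cc l α β n) 0
      = iteratedDeriv k f 0 - iteratedDeriv k (Stmt8Aux.gA Cc l α β n) 0 := by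
    intro n k
    have h := Stmt8Aux.iteratedDeriv_sub' hfdiff (hgdiff n) k
    have h2 := congrFun h 0
    simpa [Pi.sub_apply] using h2
  have hhead : ∀ᶠ n in atTop, ∀ k ∈ Finset.range K,
      ‖iteratedDeriv k f 0 - iteratedDeriv k (Stmt8Aux.gA Cc l α β n) 0‖ / b ^ k < ε / 2 := by
    rw [Filter.eventually_all_finset]
    intro k _
    have ht : Tendsto (fun n => ‖iteratedDeriv k f 0 - iteratedDeriv k (Stmt8Aux.gA Cc l α β n) 0‖ / b ^ k)
        atTop (𝓝 0) := by
      have h1 := (tendsto_const_nhds (x := iteratedDeriv k f 0)).sub (hder k)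
      simp only [sub_self] at h1
      have h2 := h1.norm
      simp only [norm_zero] at h2
      have h3 := h2.div_const (b ^ k)
      simpa using h3
    exact ht.eventually_lt_const (by positivity)
  obtain ⟨n, hn⟩ := hhead.exists
  -- produce the answer
  refine ⟨Cc, l, (n+1)+(n+1), fun j => if j < n+1 then α/(n+1) else β (j - (n+1)),
    fun j => ?_, ?_⟩
  · dsimp only
    split
    · positivity
    · exact hβ _
  · rw [show (f - fun z => Cc * z ^ l * ∏ j ∈ Finset.range ((n+1)+(n+1)),
        (1 + (((fun j => if j < n+1 then α/(n+1) else β (j - (n+1))) j : ℝ) : ℂ) * z))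
        = f - Stmt8Aux.gA Cc l α β n by rw [Stmt8Aux.gA_form]]
    have hbound : ∀ k, ‖iteratedDeriv k (f - Stmt8Aux.gA Cc l α β n) 0‖ / b ^ k ≤ ε / 2 := by
      intro k
      rw [hsub n k]
      rcases lt_or_ge k K with hk | hk
      · exact le_of_lt (hn k (Finset.mem_range.mpr hk))
      · have h1 : ‖iteratedDeriv k f 0 - iteratedDeriv k (Stmt8Aux.gA Cc l α β n) 0‖
            ≤ 2 * (M * b' ^ k) := by
          have := norm_sub_le (iteratedDeriv k f 0) (iteratedDeriv k (Stmt8Aux.gA Cc l α β n) 0)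
          have h2 := hdom n k
          have h3 := hM k
          linarith
        have h4 : ‖iteratedDeriv k f 0 - iteratedDeriv k (Stmt8Aux.gA Cc l α β n) 0‖ / b ^ k
            ≤ 2 * M * r ^ k := by
          rw [div_le_iff₀ (by positivity)]
          have : 2 * M * r ^ k * b ^ k = 2 * (M * b' ^ k) := by
            have hbk : (b:ℝ) ^ k ≠ 0 := by positivity
            rw [hrdef, div_pow]
            field_simp
          rw [this]
          exact h1
        exact h4.trans (le_of_lt (hK k hk))
    refine lt_of_le_of_lt (iSup_le fun k => ?_)
      ((ENNReal.ofReal_lt_ofReal_iff hε).mpr (half_lt_self hε))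
    exact ENNReal.ofReal_le_ofReal (hbound k)
end

section
/- Let (f_n) be a sequence of entire functions of the form f_n(z) = C_n z^{l_n} e^{α_n z} ∏_{j=1}^∞ (1 + β_j(n) z), where C_n ∈ ℂ, l_n ∈ ℕ, α_n ∈ ℝ, and (β_j(n))_{j≥1} is a summable sequence of nonnegative reals. Suppose there exist a > 0, C > 0 and l ∈ ℕ such that for all n: |α_n| + Σ_{j=1}^∞ β_j(n) ≤ a, |C_n| ≤ C, and l_n ≤ l. Then the sequence (f_n) is bounded in A_a, i.e. for every b > a there exists K such that ‖f_n‖_b ≤ K for all n. -/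
open Filter Topology
open scoped ENNReal

section Aux
open Finset


-- L0
lemma aux_norm_prod_sub_one (s : Finset ℕ) (x : ℕ → ℂ) :
    ‖(∏ j ∈ s, (1 + x j)) - 1‖ ≤ (∏ j ∈ s, (1 + ‖x j‖)) - 1 := by
  induction s using Finset.induction_on with
  | empty => simp
  | @insert i s hi ih =>
    rw [Finset.prod_insert hi, Finset.prod_insert hi]
    have key : (1 + x i) * (∏ j ∈ s, (1 + x j)) - 1
        = (1 + x i) * ((∏ j ∈ s, (1 + x j)) - 1) + x i := by ring
    rw [key]
    have h1 : ‖(1 + x i) * ((∏ j ∈ s, (1 + x j)) - 1) + x i‖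
        ≤ ‖1 + x i‖ * ‖(∏ j ∈ s, (1 + x j)) - 1‖ + ‖x i‖ := by
      refine (norm_add_le _ _).trans ?_
      rw [norm_mul]
    have h2 : ‖1 + x i‖ ≤ 1 + ‖x i‖ := (norm_add_le _ _).trans (by simp)
    have hP : (1:ℝ) ≤ ∏ j ∈ s, (1 + ‖x j‖) := by
      calc (1:ℝ) = ∏ _j ∈ s, 1 := by simp
        _ ≤ ∏ j ∈ s, (1 + ‖x j‖) :=
          Finset.prod_le_prod (by intros; norm_num)
            (fun j _ => by linarith [norm_nonneg (x j)])
    nlinarith [norm_nonneg ((∏ j ∈ s, (1 + x j)) - 1), norm_nonneg (x i),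
      mul_le_mul h2 ih (norm_nonneg _) (by positivity : (0:ℝ) ≤ 1 + ‖x i‖)]

-- L1
lemma aux_prod_one_add_le_exp (s : Finset ℕ) (y : ℕ → ℝ) (hy : ∀ j, 0 ≤ y j) :
    (∏ j ∈ s, (1 + y j)) ≤ Real.exp (∑ j ∈ s, y j) := by
  rw [Real.exp_sum]
  exact Finset.prod_le_prod (fun j _ => by linarith [hy j]) fun j _ => by
    linarith [Real.add_one_le_exp (y j)]

lemma aux_tail (β : ℕ → ℝ) (hβ0 : ∀ j, 0 ≤ β j) (hs : Summable β) (N : ℕ)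
    (t : Finset ℕ) (ht : ∀ j ∈ t, N ≤ j) :
    ∑ j ∈ t, β j ≤ ∑' k, β (k + N) := by
  have hγ : Summable (fun k => β (k + N)) := (summable_nat_add_iff N).2 hs
  have himg : ∑ k ∈ t.image (fun j => j - N), β (k + N) = ∑ j ∈ t, β j := by
    rw [Finset.sum_image]
    · exact Finset.sum_congr rfl fun j hj => by
        rw [Nat.sub_add_cancel (ht j hj)]
    · intro x hx y hy hxy
      have := ht x hx; have := ht y hy; simp only at hxy; omega
  rw [← himg]
  exact Summable.sum_le_tsum _ (fun k _ => hβ0 _) hγ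

lemma aux_KE (β : ℕ → ℝ) (hβ0 : ∀ j, 0 ≤ β j) (hs : Summable β) (z : ℂ)
    (s t : Finset ℕ) (hst : s ⊆ t) :
    ‖(∏ j ∈ t, (1 + (β j : ℂ) * z)) - ∏ j ∈ s, (1 + (β j : ℂ) * z)‖ ≤
      Real.exp ((∑' j, β j) * ‖z‖) *
        (Real.exp ((∑ j ∈ t \ s, β j) * ‖z‖) - 1) := by
  have hnorm : ∀ j, ‖(β j : ℂ) * z‖ = β j * ‖z‖ := fun j => by
    rw [norm_mul, Complex.norm_real, Real.norm_eq_abs, abs_of_nonneg (hβ0 j)]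
  have hsplit : (∏ j ∈ t, (1 + (β j : ℂ) * z)) - ∏ j ∈ s, (1 + (β j : ℂ) * z)
      = (∏ j ∈ s, (1 + (β j : ℂ) * z)) * ((∏ j ∈ t \ s, (1 + (β j : ℂ) * z)) - 1) := by
    rw [mul_sub, mul_one, ← Finset.prod_sdiff hst]; ring
  rw [hsplit, norm_mul]
  have h1 : ‖∏ j ∈ s, (1 + (β j : ℂ) * z)‖ ≤ Real.exp ((∑' j, β j) * ‖z‖) := by
    calc ‖∏ j ∈ s, (1 + (β j : ℂ) * z)‖ = ∏ j ∈ s, ‖1 + (β j : ℂ) * z‖ := norm_prod _ _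
      _ ≤ ∏ j ∈ s, (1 + β j * ‖z‖) := by
          refine Finset.prod_le_prod (fun j _ => norm_nonneg _) fun j _ => ?_
          calc ‖1 + (β j : ℂ) * z‖ ≤ ‖(1:ℂ)‖ + ‖(β j : ℂ) * z‖ := norm_add_le _ _
            _ = 1 + β j * ‖z‖ := by rw [norm_one, hnorm]
      _ ≤ Real.exp (∑ j ∈ s, β j * ‖z‖) :=
          aux_prod_one_add_le_exp s _ (fun j => mul_nonneg (hβ0 j) (norm_nonneg z))
      _ ≤ Real.exp ((∑' j, β j) * ‖z‖) := by
          apply Real.exp_le_exp.2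
          rw [← Finset.sum_mul]
          exact mul_le_mul_of_nonneg_right
            (Summable.sum_le_tsum s (fun j _ => hβ0 j) hs) (norm_nonneg z)
  have h2 : ‖(∏ j ∈ t \ s, (1 + (β j : ℂ) * z)) - 1‖ ≤
      Real.exp ((∑ j ∈ t \ s, β j) * ‖z‖) - 1 := by
    calc ‖(∏ j ∈ t \ s, (1 + (β j : ℂ) * z)) - 1‖
        ≤ (∏ j ∈ t \ s, (1 + ‖(β j : ℂ) * z‖)) - 1 := aux_norm_prod_sub_one _ _
      _ ≤ Real.exp ((∑ j ∈ t \ s, β j) * ‖z‖) - 1 := by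
          have := aux_prod_one_add_le_exp (t \ s) (fun j => ‖(β j : ℂ) * z‖)
            (fun j => norm_nonneg _)
          simp only [hnorm] at this ⊢
          rw [Finset.sum_mul]
          linarith
  have hexp : (0:ℝ) ≤ Real.exp ((∑' j, β j) * ‖z‖) := (Real.exp_pos _).le
  calc ‖∏ j ∈ s, (1 + (β j : ℂ) * z)‖ * ‖(∏ j ∈ t \ s, (1 + (β j : ℂ) * z)) - 1‖
      ≤ Real.exp ((∑' j, β j) * ‖z‖) * (Real.exp ((∑ j ∈ t \ s, β j) * ‖z‖) - 1) :=
    mul_le_mul h1 h2 (norm_nonneg _) hexp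

-- combined estimate: for s ⊆ t with s ⊇ range N and elements of t\s ≥ N,
lemma aux_KE2 (β : ℕ → ℝ) (hβ0 : ∀ j, 0 ≤ β j) (hs : Summable β) {z : ℂ} {R : ℝ}
    (hz : ‖z‖ ≤ R) (N : ℕ) (s t : Finset ℕ) (hst : s ⊆ t) (hN : ∀ j ∈ t \ s, N ≤ j) :
    ‖(∏ j ∈ t, (1 + (β j : ℂ) * z)) - ∏ j ∈ s, (1 + (β j : ℂ) * z)‖ ≤
      Real.exp ((∑' j, β j) * R) * (Real.exp ((∑' k, β (k + N)) * R) - 1) := by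
  have hR : 0 ≤ R := le_trans (norm_nonneg z) hz
  have hS : 0 ≤ ∑' j, β j := tsum_nonneg hβ0
  have htail0 : 0 ≤ ∑ j ∈ t \ s, β j := Finset.sum_nonneg fun j _ => hβ0 j
  have htail : ∑ j ∈ t \ s, β j ≤ ∑' k, β (k + N) := aux_tail β hβ0 hs N _ hN
  refine (aux_KE β hβ0 hs z s t hst).trans ?_
  have e1 : Real.exp ((∑' j, β j) * ‖z‖) ≤ Real.exp ((∑' j, β j) * R) :=
    Real.exp_le_exp.2 (mul_le_mul_of_nonneg_left hz hS)
  have e2 : Real.exp ((∑ j ∈ t \ s, β j) * ‖z‖) - 1 ≤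
      Real.exp ((∑' k, β (k + N)) * R) - 1 := by
    have : (∑ j ∈ t \ s, β j) * ‖z‖ ≤ (∑' k, β (k + N)) * R :=
      mul_le_mul htail hz (norm_nonneg z) (htail0.trans htail)
    linarith [Real.exp_le_exp.2 this]
  have e3 : (0:ℝ) ≤ Real.exp ((∑ j ∈ t \ s, β j) * ‖z‖) - 1 := by
    have : (0:ℝ) ≤ (∑ j ∈ t \ s, β j) * ‖z‖ := mul_nonneg htail0 (norm_nonneg z)
    linarith [Real.one_le_exp this]
  exact mul_le_mul e1 e2 e3 (Real.exp_pos _).le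

lemma aux_Etend (β : ℕ → ℝ) (hβ0 : ∀ j, 0 ≤ β j) (hs : Summable β) (R : ℝ) :
    Tendsto (fun N => Real.exp ((∑' j, β j) * R) *
      (Real.exp ((∑' k, β (k + N)) * R) - 1)) atTop (𝓝 0) := by
  have h1 : Tendsto (fun N => ∑' k, β (k + N)) atTop (𝓝 0) := tendsto_sum_nat_add β
  have h2 : Tendsto (fun N => Real.exp ((∑' k, β (k + N)) * R) - 1) atTop (𝓝 0) := by
    have h3 : Tendsto (fun N => Real.exp ((∑' k, β (k + N)) * R)) atTop (𝓝 (Real.exp 0)) :=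
      (Real.continuous_exp.tendsto 0).comp (by simpa using (h1.mul_const R))
    have := h3.sub (tendsto_const_nhds (x := (1:ℝ)))
    simpa using this
  simpa using (h2.const_mul (Real.exp ((∑' j, β j) * R)))

lemma aux_multipliable (β : ℕ → ℝ) (hβ0 : ∀ j, 0 ≤ β j) (hs : Summable β) (z : ℂ) :
    Multipliable (fun j => (1 + (β j : ℂ) * z)) := by
  have hcs : CauchySeq (fun s : Finset ℕ => ∏ j ∈ s, (1 + (β j : ℂ) * z)) := by
    rw [Metric.cauchySeq_iff]
    intro ε hε
    obtain ⟨N, hN⟩ := (Metric.tendsto_atTop.1 (aux_Etend β hβ0 hs ‖z‖)) (ε/2) (by linarith)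
    refine ⟨Finset.range N, fun s hsN t htN => ?_⟩
    have key : ∀ u v : Finset ℕ, Finset.range N ⊆ u → u ⊆ v →
        dist (∏ j ∈ v, (1 + (β j : ℂ) * z)) (∏ j ∈ u, (1 + (β j : ℂ) * z)) ≤
          Real.exp ((∑' j, β j) * ‖z‖) * (Real.exp ((∑' k, β (k + N)) * ‖z‖) - 1) := by
      intro u v hu huv
      rw [dist_eq_norm]
      refine aux_KE2 β hβ0 hs le_rfl N u v huv fun j hj => ?_
      rw [Finset.mem_sdiff] at hj
      by_contra h
      exact hj.2 (hu (Finset.mem_range.2 (by omega)))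
    have hEN : Real.exp ((∑' j, β j) * ‖z‖) *
        (Real.exp ((∑' k, β (k + N)) * ‖z‖) - 1) < ε/2 := by
      have := hN N le_rfl
      rw [Real.dist_eq] at this
      calc _ ≤ |Real.exp ((∑' j, β j) * ‖z‖) *
            (Real.exp ((∑' k, β (k + N)) * ‖z‖) - 1) - 0| := by
            rw [sub_zero]; exact le_abs_self _
        _ < ε/2 := this
    calc dist (∏ j ∈ s, (1 + (β j : ℂ) * z)) (∏ j ∈ t, (1 + (β j : ℂ) * z))
        ≤ dist (∏ j ∈ s ∪ t, (1 + (β j : ℂ) * z)) (∏ j ∈ s, (1 + (β j : ℂ) * z)) +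
          dist (∏ j ∈ s ∪ t, (1 + (β j : ℂ) * z)) (∏ j ∈ t, (1 + (β j : ℂ) * z)) := by
          rw [dist_comm (∏ j ∈ s ∪ t, (1 + (β j : ℂ) * z))]
          exact dist_triangle _ _ _
      _ < ε/2 + ε/2 := by
          refine add_lt_add_of_le_of_lt ?_ (lt_of_le_of_lt ?_ hEN)
          · exact (key s _ hsN Finset.subset_union_left).trans hEN.le
          · exact key t _ htN Finset.subset_union_right
      _ = ε := by ring
  obtain ⟨L, hL⟩ := cauchySeq_tendsto_of_complete hcs
  exact ⟨L, hL⟩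

lemma aux_g (β : ℕ → ℝ) (hβ0 : ∀ j, 0 ≤ β j) (hs : Summable β) :
    Differentiable ℂ (fun z : ℂ => ∏' j, (1 + (β j : ℂ) * z)) ∧
    ∀ z : ℂ, ‖∏' j, (1 + (β j : ℂ) * z)‖ ≤ Real.exp ((∑' j, β j) * ‖z‖) := by
  set g : ℂ → ℂ := fun z => ∏' j, (1 + (β j : ℂ) * z) with hg
  set F : ℕ → ℂ → ℂ := fun N z => ∏ j ∈ Finset.range N, (1 + (β j : ℂ) * z) with hF
  have htend : ∀ z : ℂ, Tendsto (fun N => F N z) atTop (𝓝 (g z)) := fun z =>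
    (aux_multipliable β hβ0 hs z).hasProd.tendsto_prod_nat
  -- uniform estimate
  have hest : ∀ (R : ℝ) (N : ℕ) (z : ℂ), ‖z‖ ≤ R →
      dist (g z) (F N z) ≤
        Real.exp ((∑' j, β j) * R) * (Real.exp ((∑' k, β (k + N)) * R) - 1) := by
    intro R N z hz
    have hlim : Tendsto (fun M => dist (F M z) (F N z)) atTop (𝓝 (dist (g z) (F N z))) :=
      ((htend z).dist tendsto_const_nhds)
    refine le_of_tendsto hlim ?_
    filter_upwards [eventually_ge_atTop N] with M hM
    rw [dist_eq_norm]
    refine aux_KE2 β hβ0 hs hz N (Finset.range N) (Finset.range M)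
      (Finset.range_subset_range.2 hM) fun j hj => ?_
    rw [Finset.mem_sdiff, Finset.mem_range, Finset.mem_range] at hj
    omega
  have hunif : ∀ R : ℝ, TendstoUniformlyOn F g atTop (Metric.closedBall 0 R) := by
    intro R
    rw [Metric.tendstoUniformlyOn_iff]
    intro ε hε
    obtain ⟨N₀, hN₀⟩ := (Metric.tendsto_atTop.1 (aux_Etend β hβ0 hs R)) ε hε
    filter_upwards [eventually_ge_atTop N₀] with N hN z hz
    have hz' : ‖z‖ ≤ R := by simpa [Complex.dist_eq] using hz
    have h1 := hest R N z hz'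
    have h2 := hN₀ N hN
    rw [Real.dist_eq, sub_zero] at h2
    exact lt_of_le_of_lt h1 (lt_of_le_of_lt (le_abs_self _) h2)
  have hdiff : Differentiable ℂ g := by
    intro z₀
    have hR : ‖z₀‖ < ‖z₀‖ + 1 := by linarith
    have hopen : IsOpen (Metric.ball (0:ℂ) (‖z₀‖ + 1)) := Metric.isOpen_ball
    have hloc : TendstoLocallyUniformlyOn F g atTop (Metric.ball 0 (‖z₀‖ + 1)) :=
      ((hunif (‖z₀‖ + 1)).mono Metric.ball_subset_closedBall).tendstoLocallyUniformlyOn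
    have hFd : ∀ᶠ N in atTop, DifferentiableOn ℂ (F N) (Metric.ball 0 (‖z₀‖ + 1)) := by
      filter_upwards with N
      apply Differentiable.differentiableOn
      apply Differentiable.fun_finsetProd
      intro j _
      exact (differentiable_const _).add ((differentiable_const _).mul differentiable_id)
    have := hloc.differentiableOn hFd hopen
    exact this.differentiableAt (hopen.mem_nhds (by simpa [Complex.dist_eq] using hR))
  refine ⟨hdiff, fun z => ?_⟩
  refine le_of_tendsto (htend z).norm ?_
  filter_upwards with N
  calc ‖F N z‖ = ∏ j ∈ Finset.range N, ‖1 + (β j : ℂ) * z‖ := norm_prod _ _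
    _ ≤ ∏ j ∈ Finset.range N, (1 + β j * ‖z‖) := by
        refine Finset.prod_le_prod (fun j _ => norm_nonneg _) fun j _ => ?_
        calc ‖1 + (β j : ℂ) * z‖ ≤ ‖(1:ℂ)‖ + ‖(β j : ℂ) * z‖ := norm_add_le _ _
          _ = 1 + β j * ‖z‖ := by
              rw [norm_one, norm_mul, Complex.norm_real, Real.norm_eq_abs,
                abs_of_nonneg (hβ0 j)]
    _ ≤ Real.exp (∑ j ∈ Finset.range N, β j * ‖z‖) :=
        aux_prod_one_add_le_exp _ _ (fun j => mul_nonneg (hβ0 j) (norm_nonneg z))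
    _ ≤ Real.exp ((∑' j, β j) * ‖z‖) := by
        apply Real.exp_le_exp.2
        rw [← Finset.sum_mul]
        exact mul_le_mul_of_nonneg_right
          (Summable.sum_le_tsum _ (fun j _ => hβ0 j) hs) (norm_nonneg z)

-- Cauchy estimate for entire functions
lemma aux_cauchy {g : ℂ → ℂ} (hg : Differentiable ℂ g) {R M : ℝ} (hR : 0 < R)
    (hM : 0 ≤ M) (hb : ∀ z : ℂ, ‖z‖ = R → ‖g z‖ ≤ M) (k : ℕ) :
    ‖iteratedDeriv k g 0‖ ≤ (Nat.factorial k : ℝ) * M / R ^ k := by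
  lift R to NNReal using hR.le with R' hR'
  have hR'0 : 0 < R' := by exact_mod_cast hR
  have hps : HasFPowerSeriesOnBall g (cauchyPowerSeries g 0 R') 0 ⊤ :=
    hg.hasFPowerSeriesOnBall 0 hR'0
  have hfact := hps.factorial_smul (1:ℂ) k
  have h1 : iteratedDeriv k g 0 = iteratedFDeriv ℂ k g 0 (fun _ => 1) := by
    rw [iteratedDeriv_eq_iteratedFDeriv]
  rw [h1, ← hfact]
  have h2 : ‖(Nat.factorial k : ℕ) • (cauchyPowerSeries g 0 R' k) (fun _ => (1:ℂ))‖
      = (Nat.factorial k : ℝ) * ‖(cauchyPowerSeries g 0 R' k) (fun _ => (1:ℂ))‖ := by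
    rw [← Nat.cast_smul_eq_nsmul ℝ, norm_smul]
    simp
  rw [h2]
  have h3 : ‖(cauchyPowerSeries g 0 R' k) (fun _ => (1:ℂ))‖ ≤
      ‖cauchyPowerSeries g 0 R' k‖ := by
    have := (cauchyPowerSeries g 0 R' k).le_opNorm (fun _ => (1:ℂ))
    simpa using this
  have h4 : ‖cauchyPowerSeries g 0 (R' : ℝ) k‖ ≤
      ((2 * Real.pi)⁻¹ * ∫ θ : ℝ in (0)..2 * Real.pi, ‖g (circleMap 0 R' θ)‖) *
        |(R' : ℝ)|⁻¹ ^ k := norm_cauchyPowerSeries_le g 0 R' k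
  have hint : (∫ θ : ℝ in (0)..2 * Real.pi, ‖g (circleMap 0 R' θ)‖) ≤ 2 * Real.pi * M := by
    have hcont : Continuous fun θ : ℝ => ‖g (circleMap 0 R' θ)‖ :=
      (hg.continuous.comp (continuous_circleMap 0 R')).norm
    calc (∫ θ : ℝ in (0)..2 * Real.pi, ‖g (circleMap 0 R' θ)‖)
        ≤ ∫ _ : ℝ in (0)..2 * Real.pi, M := by
          apply intervalIntegral.integral_mono_on Real.two_pi_pos.le
            (hcont.intervalIntegrable _ _) (intervalIntegrable_const)
          intro θ _
          apply hb
          simp [norm_circleMap_zero, abs_of_nonneg R'.coe_nonneg]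
      _ = 2 * Real.pi * M := by simp [mul_comm]
  have h5 : ((2 * Real.pi)⁻¹ * ∫ θ : ℝ in (0)..2 * Real.pi, ‖g (circleMap 0 R' θ)‖) ≤ M := by
    rw [inv_mul_le_iff₀ Real.two_pi_pos]
    linarith [hint]
  have hRk : |(R' : ℝ)|⁻¹ ^ k = (R':ℝ)⁻¹ ^ k := by
    rw [abs_of_nonneg R'.coe_nonneg]
  calc (Nat.factorial k : ℝ) * ‖(cauchyPowerSeries g 0 R' k) (fun _ => (1:ℂ))‖
      ≤ (Nat.factorial k : ℝ) * (M * (R':ℝ)⁻¹ ^ k) := by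
        refine mul_le_mul_of_nonneg_left ?_ (by positivity)
        refine h3.trans (h4.trans ?_)
        rw [hRk]
        exact mul_le_mul_of_nonneg_right h5 (by positivity)
    _ = (Nat.factorial k : ℝ) * M / (R':ℝ) ^ k := by
        rw [inv_pow]
        field_simp

-- e ≤ (1 + 1/K)^(K+1) for K ≥ 1 (as reals, K : ℕ)
lemma aux_e_le (K : ℕ) (hK : 1 ≤ K) :
    Real.exp 1 ≤ ((K + 1 : ℝ) / K) ^ (K + 1) := by
  have hK0 : (0:ℝ) < K := by exact_mod_cast hK
  have hx : (0:ℝ) < (K + 1 : ℝ) / K := by positivity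
  have hlog : Real.log ((K:ℝ) / (K + 1)) ≤ (K:ℝ) / (K + 1) - 1 :=
    Real.log_le_sub_one_of_pos (by positivity)
  have hlog2 : (1:ℝ) / (K + 1) ≤ Real.log ((K + 1 : ℝ) / K) := by
    have : Real.log ((K + 1 : ℝ) / K) = - Real.log ((K:ℝ) / (K + 1)) := by
      rw [← Real.log_inv]
      congr 1
      field_simp
    rw [this]
    have h2 : (K:ℝ) / (K + 1) - 1 = -(1 / (K + 1)) := by field_simp; ring
    linarith [hlog, h2 ▸ hlog]
  have h3 : (1:ℝ) ≤ (K + 1 : ℝ) * Real.log ((K + 1 : ℝ) / K) := by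
    have := mul_le_mul_of_nonneg_left hlog2 (by positivity : (0:ℝ) ≤ (K + 1 : ℝ))
    calc (1:ℝ) = (K + 1 : ℝ) * (1 / (K + 1)) := by field_simp
      _ ≤ _ := this
  calc Real.exp 1 ≤ Real.exp ((K + 1 : ℝ) * Real.log ((K + 1 : ℝ) / K)) :=
        Real.exp_le_exp.2 h3
    _ = ((K + 1 : ℝ) / K) ^ (K + 1) := by
        rw [mul_comm, ← Real.rpow_def_of_pos hx, ← Real.rpow_natCast (((K:ℝ)+1)/K) (K+1)]
        norm_num

-- factorial bound: (k+1)! ≤ e * (k+1)^(k+2) * e^{-(k+1)}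
lemma aux_fact (k : ℕ) :
    (Nat.factorial (k + 1) : ℝ) ≤
      Real.exp 1 * (k + 1 : ℝ) ^ (k + 2) * Real.exp (-(k + 1 : ℝ)) := by
  induction k with
  | zero =>
    simp [Nat.factorial]
    rw [← Real.exp_add]
    norm_num
  | succ k ih =>
    have hstep : Real.exp 1 * (k + 1 : ℝ) ^ (k + 2) ≤ (k + 2 : ℝ) ^ (k + 2) := by
      have := aux_e_le (k + 1) (by omega)
      have h2 : ((k + 1 + 1 : ℝ) / (k + 1)) ^ (k + 2) = (k + 2 : ℝ) ^ (k+2) / (k + 1 : ℝ) ^ (k+2) := by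
        rw [div_pow]
        ring_nf
      push_cast at this
      rw [h2] at this
      have hpos : (0:ℝ) < (k + 1 : ℝ) ^ (k + 2) := by positivity
      calc Real.exp 1 * (k + 1 : ℝ) ^ (k + 2)
          ≤ ((k + 2 : ℝ) ^ (k+2) / (k + 1 : ℝ) ^ (k+2)) * (k + 1 : ℝ) ^ (k + 2) := by
            exact mul_le_mul_of_nonneg_right this hpos.le
        _ = (k + 2 : ℝ) ^ (k + 2) := by field_simp
    have hfs : (Nat.factorial (k + 2) : ℝ) = (k + 2 : ℝ) * Nat.factorial (k + 1) := by
      rw [Nat.factorial_succ]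
      push_cast
      ring
    calc (Nat.factorial (k + 2) : ℝ)
        = (k + 2 : ℝ) * Nat.factorial (k + 1) := hfs
      _ ≤ (k + 2 : ℝ) * (Real.exp 1 * (k + 1 : ℝ) ^ (k + 2) * Real.exp (-(k + 1 : ℝ))) := by
          refine mul_le_mul_of_nonneg_left ih (by positivity)
      _ = (Real.exp 1 * (k + 1 : ℝ) ^ (k + 2)) * ((k + 2 : ℝ) * Real.exp (-(k + 1 : ℝ))) := by ring
      _ ≤ (k + 2 : ℝ) ^ (k + 2) * ((k + 2 : ℝ) * Real.exp (-(k + 1 : ℝ))) := by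
          refine mul_le_mul_of_nonneg_right hstep (by positivity)
      _ = Real.exp 1 * (k + 2 : ℝ) ^ (k + 3) * Real.exp (-(k + 2 : ℝ)) := by
          rw [show (-((k:ℝ) + 1)) = 1 + (-((k:ℝ) + 2)) by ring, Real.exp_add,
            show ((k:ℝ) + 2) ^ (k + 3) = ((k:ℝ) + 2) ^ (k + 2) * ((k:ℝ) + 2) from by
              rw [pow_succ]]
          ring
      _ = Real.exp 1 * (((k+1:ℕ):ℝ) + 1) ^ (k + 1 + 2) * Real.exp (-(((k+1:ℕ):ℝ) + 1)) := by
          push_cast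
          ring_nf

lemma aux_num (a b C : ℝ) (l : ℕ) (ha : 0 < a) (hC : 0 < C) (hb : a < b) :
    ∃ K : ℝ, 0 ≤ K ∧ ∀ k : ℕ,
      (Nat.factorial k : ℝ) * (C * (max 1 (((k:ℝ)+1)/a)) ^ l *
        Real.exp (a * (((k:ℝ)+1)/a))) / ((((k:ℝ)+1)/a) ^ k * b ^ k) ≤ K := by
  have hb0 : 0 < b := ha.trans hb
  set c := Real.log (b/a) with hc
  have hba : 1 < b / a := (one_lt_div ha).2 hb
  have hc0 : 0 < c := Real.log_pos hba
  have hexpc : Real.exp c = b / a := Real.exp_log (by positivity)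
  set D : ℝ := max 1 (1/a) with hD
  have hD1 : (1:ℝ) ≤ D := le_max_left _ _
  refine ⟨C * Real.exp 1 * D ^ l * ((b/a) * (Nat.factorial (l+2)) / c^(l+2)), by positivity, ?_⟩
  intro k
  have hk1 : (0:ℝ) < (k:ℝ) + 1 := by positivity
  have hR : (0:ℝ) < ((k:ℝ)+1)/a := by positivity
  -- step A : k! * exp(k+1) ≤ e * (k+1)^(k+2)
  have hA : (Nat.factorial k : ℝ) * Real.exp ((k:ℝ)+1) ≤
      Real.exp 1 * ((k:ℝ) + 1) ^ (k + 2) := by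
    have h1 : (Nat.factorial k : ℝ) ≤ (Nat.factorial (k+1) : ℝ) := by
      exact_mod_cast Nat.factorial_le (Nat.le_succ k)
    have h2 := aux_fact k
    have h3 : (Nat.factorial k : ℝ) * Real.exp ((k:ℝ)+1) ≤
        (Real.exp 1 * ((k:ℝ) + 1) ^ (k + 2) * Real.exp (-((k:ℝ) + 1))) * Real.exp ((k:ℝ)+1) :=
      mul_le_mul_of_nonneg_right (h1.trans h2) (Real.exp_pos _).le
    calc (Nat.factorial k : ℝ) * Real.exp ((k:ℝ)+1) ≤ _ := h3
      _ = Real.exp 1 * ((k:ℝ) + 1) ^ (k + 2) := by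
          rw [mul_assoc (Real.exp 1 * ((k:ℝ) + 1) ^ (k + 2)), ← Real.exp_add]
          rw [show -((k:ℝ)+1) + ((k:ℝ)+1) = 0 by ring, Real.exp_zero, mul_one]
  -- step C : max 1 ((k+1)/a) ≤ (k+1) * D
  have hCmax : max 1 (((k:ℝ)+1)/a) ≤ ((k:ℝ)+1) * D := by
    apply max_le
    · calc (1:ℝ) ≤ D := hD1
        _ = 1 * D := (one_mul D).symm
        _ ≤ ((k:ℝ)+1) * D := by
            apply mul_le_mul_of_nonneg_right _ (by linarith)
            linarith
    · rw [div_eq_mul_one_div]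
      exact mul_le_mul_of_nonneg_left (le_max_right _ _) hk1.le
  have hCmaxl : (max 1 (((k:ℝ)+1)/a)) ^ l ≤ ((k:ℝ)+1) ^ l * D ^ l := by
    rw [← mul_pow]
    apply pow_le_pow_left₀ (le_trans zero_le_one (le_max_left _ _)) hCmax
  -- step D : (k+1)^(l+2) * (a/b)^k ≤ (b/a) * (l+2)! / c^(l+2)
  have hDD : ((k:ℝ)+1) ^ (l + 2) * (a/b) ^ k ≤
      (b/a) * (Nat.factorial (l+2)) / c^(l+2) := by
    have hab1 : a / b = Real.exp (-c) := by
      rw [← Real.exp_log (x := a/b) (by positivity)]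
      congr 1
      rw [hc, ← Real.log_inv]
      congr 1
      field_simp
    have hpow : ((k:ℝ)+1) ^ (l+2) ≤ (Nat.factorial (l+2)) / c^(l+2) * Real.exp (c * ((k:ℝ)+1)) := by
      have := Real.pow_div_factorial_le_exp (x := c * ((k:ℝ)+1)) (by positivity) (l+2)
      rw [div_le_iff₀ (by positivity : (0:ℝ) < ((l+2):ℕ).factorial)] at this
      rw [mul_pow] at this
      rw [div_mul_eq_mul_div, le_div_iff₀ (by positivity : (0:ℝ) < c^(l+2))]
      calc ((k:ℝ)+1) ^ (l+2) * c^(l+2) = c ^ (l+2) * ((k:ℝ)+1) ^ (l+2) := by ring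
        _ ≤ Real.exp (c * ((k:ℝ)+1)) * (Nat.factorial (l+2)) := this
        _ = (Nat.factorial (l+2)) * Real.exp (c * ((k:ℝ)+1)) := by ring
    have hak : (a/b) ^ k = Real.exp (-(c * k)) := by
      rw [hab1, ← Real.exp_nat_mul]
      congr 1
      ring
    calc ((k:ℝ)+1) ^ (l + 2) * (a/b) ^ k
        ≤ ((Nat.factorial (l+2)) / c^(l+2) * Real.exp (c * ((k:ℝ)+1))) * (a/b) ^ k := by
          apply mul_le_mul_of_nonneg_right hpow (by positivity)
      _ = (Nat.factorial (l+2)) / c^(l+2) * (Real.exp (c * ((k:ℝ)+1)) * Real.exp (-(c * k))) := by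
          rw [hak]; ring
      _ = (Nat.factorial (l+2)) / c^(l+2) * Real.exp c := by
          rw [← Real.exp_add]
          congr 2
          push_cast
          ring
      _ = (b/a) * (Nat.factorial (l+2)) / c^(l+2) := by rw [hexpc]; ring
  -- assemble
  have hexpR : Real.exp (a * (((k:ℝ)+1)/a)) = Real.exp ((k:ℝ)+1) := by
    congr 1
    field_simp
  have hRk : (((k:ℝ)+1)/a) ^ k = ((k:ℝ)+1)^k / a^k := div_pow _ _ _
  have hmain : (Nat.factorial k : ℝ) * (C * (max 1 (((k:ℝ)+1)/a)) ^ l *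
      Real.exp (a * (((k:ℝ)+1)/a))) / ((((k:ℝ)+1)/a) ^ k * b ^ k)
      = C * (max 1 (((k:ℝ)+1)/a)) ^ l * ((Nat.factorial k : ℝ) * Real.exp ((k:ℝ)+1)) *
        (a/b)^k / ((k:ℝ)+1)^k := by
    rw [hexpR, hRk, div_pow]
    field_simp
  rw [hmain]
  have hfin : C * (max 1 (((k:ℝ)+1)/a)) ^ l * ((Nat.factorial k : ℝ) * Real.exp ((k:ℝ)+1)) *
        (a/b)^k / ((k:ℝ)+1)^k
      ≤ C * (((k:ℝ)+1) ^ l * D ^ l) * (Real.exp 1 * ((k:ℝ) + 1) ^ (k + 2)) *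
        (a/b)^k / ((k:ℝ)+1)^k := by
    apply div_le_div_of_nonneg_right ?_ (by positivity)
    · apply mul_le_mul_of_nonneg_right _ (by positivity)
      apply mul_le_mul (mul_le_mul_of_nonneg_left hCmaxl hC.le) hA
        (by positivity) (by positivity)
  refine hfin.trans ?_
  have hsimp : C * (((k:ℝ)+1) ^ l * D ^ l) * (Real.exp 1 * ((k:ℝ) + 1) ^ (k + 2)) *
        (a/b)^k / ((k:ℝ)+1)^k
      = C * Real.exp 1 * D ^ l * (((k:ℝ)+1) ^ (l+2) * (a/b)^k) := by
    have hkk : ((k:ℝ) + 1) ^ (k + 2) = ((k:ℝ)+1)^k * ((k:ℝ)+1)^2 := by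
      rw [← pow_add]
    have hll : ((k:ℝ) + 1) ^ (l + 2) = ((k:ℝ)+1)^l * ((k:ℝ)+1)^2 := by
      rw [← pow_add]
    rw [hkk, hll]
    field_simp
  rw [hsimp]
  exact mul_le_mul_of_nonneg_left hDD (by positivity)

end Aux

open Finset in
theorem stmt_9 (a C : ℝ) (ha : 0 < a) (hC : 0 < C) (l : ℕ)
    (f : ℕ → ℂ → ℂ) (Cn : ℕ → ℂ) (ln : ℕ → ℕ) (α : ℕ → ℝ) (β : ℕ → ℕ → ℝ)
    (hβ : ∀ n j, 0 ≤ β n j) (hβs : ∀ n, Summable (β n))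
    (hrep : ∀ n z, f n z = Cn n * z ^ ln n * Complex.exp ((α n : ℂ) * z) *
      ∏' j : ℕ, (1 + (β n j : ℂ) * z))
    (hab : ∀ n, |α n| + ∑' j : ℕ, β n j ≤ a)
    (hCn : ∀ n, ‖Cn n‖ ≤ C) (hln : ∀ n, ln n ≤ l) :
    ∀ b > a, ∃ K : ℝ, ∀ n, normB b (f n) ≤ ENNReal.ofReal K := by
  intro b hba
  have hb0 : 0 < b := ha.trans hba
  obtain ⟨K, hK0, hK⟩ := aux_num a b C l ha hC hba
  refine ⟨K, fun n => ?_⟩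
  -- basic facts about f n
  have hgd := aux_g (β n) (hβ n) (hβs n)
  have hfn : f n = fun z => Cn n * z ^ ln n * Complex.exp ((α n : ℂ) * z) *
      ∏' j : ℕ, (1 + (β n j : ℂ) * z) := funext (hrep n)
  have hdiff : Differentiable ℂ (f n) := by
    rw [hfn]
    apply Differentiable.mul
    · apply Differentiable.mul
      · exact (differentiable_const _).mul (differentiable_pow _)
      · exact Complex.differentiable_exp.comp ((differentiable_const _).mul differentiable_id)
    · exact hgd.1
  have hbound : ∀ z : ℂ, ‖f n z‖ ≤ C * (max 1 ‖z‖) ^ l * Real.exp (a * ‖z‖) := by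
    intro z
    rw [hfn]
    have hm1 : (1:ℝ) ≤ max 1 ‖z‖ := le_max_left _ _
    have h1 : ‖z ^ ln n‖ ≤ (max 1 ‖z‖) ^ l := by
      rw [norm_pow]
      calc ‖z‖ ^ ln n ≤ (max 1 ‖z‖) ^ ln n :=
            pow_le_pow_left₀ (norm_nonneg z) (le_max_right _ _) _
        _ ≤ (max 1 ‖z‖) ^ l := pow_le_pow_right₀ hm1 (hln n)
    have h2 : ‖Complex.exp ((α n : ℂ) * z)‖ ≤ Real.exp (|α n| * ‖z‖) := by
      rw [Complex.norm_exp]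
      apply Real.exp_le_exp.2
      have : ((α n : ℂ) * z).re = α n * z.re := by
        simp [Complex.mul_re]
      rw [this]
      calc α n * z.re ≤ |α n * z.re| := le_abs_self _
        _ = |α n| * |z.re| := abs_mul _ _
        _ ≤ |α n| * ‖z‖ := by
            apply mul_le_mul_of_nonneg_left (Complex.abs_re_le_norm z) (abs_nonneg _)
    have h3 := hgd.2 z
    have hS0 : (0:ℝ) ≤ ∑' j, β n j := tsum_nonneg (hβ n)
    calc ‖Cn n * z ^ ln n * Complex.exp ((α n : ℂ) * z) * ∏' j : ℕ, (1 + (β n j : ℂ) * z)‖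
        = ‖Cn n‖ * ‖z ^ ln n‖ * ‖Complex.exp ((α n : ℂ) * z)‖ *
          ‖∏' j : ℕ, (1 + (β n j : ℂ) * z)‖ := by
          rw [norm_mul, norm_mul, norm_mul]
      _ ≤ C * (max 1 ‖z‖) ^ l * (Real.exp (|α n| * ‖z‖) * Real.exp ((∑' j, β n j) * ‖z‖)) := by
          have e1 : ‖Cn n‖ * ‖z ^ ln n‖ ≤ C * (max 1 ‖z‖) ^ l :=
            mul_le_mul (hCn n) h1 (norm_nonneg _) hC.le
          have e2 : ‖Complex.exp ((α n : ℂ) * z)‖ * ‖∏' j : ℕ, (1 + (β n j : ℂ) * z)‖ ≤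
              Real.exp (|α n| * ‖z‖) * Real.exp ((∑' j, β n j) * ‖z‖) :=
            mul_le_mul h2 h3 (norm_nonneg _) (Real.exp_pos _).le
          calc ‖Cn n‖ * ‖z ^ ln n‖ * ‖Complex.exp ((α n : ℂ) * z)‖ *
              ‖∏' j : ℕ, (1 + (β n j : ℂ) * z)‖
              = (‖Cn n‖ * ‖z ^ ln n‖) * (‖Complex.exp ((α n : ℂ) * z)‖ *
                ‖∏' j : ℕ, (1 + (β n j : ℂ) * z)‖) := by ring
            _ ≤ (C * (max 1 ‖z‖) ^ l) * (Real.exp (|α n| * ‖z‖) *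
                Real.exp ((∑' j, β n j) * ‖z‖)) := by
                apply mul_le_mul e1 e2 (by positivity) (by positivity)
      _ ≤ C * (max 1 ‖z‖) ^ l * Real.exp (a * ‖z‖) := by
          apply mul_le_mul_of_nonneg_left _ (by positivity)
          rw [← Real.exp_add]
          apply Real.exp_le_exp.2
          have := hab n
          nlinarith [norm_nonneg z]
  -- per-coefficient bound
  rw [normB]
  apply iSup_le
  intro k
  apply ENNReal.ofReal_le_ofReal
  set R : ℝ := ((k:ℝ)+1)/a with hR
  have hRpos : 0 < R := by positivity
  set M : ℝ := C * (max 1 R) ^ l * Real.exp (a * R) with hM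
  have hMpos : 0 ≤ M := by positivity
  have hcb : ∀ z : ℂ, ‖z‖ = R → ‖f n z‖ ≤ M := by
    intro z hz
    have := hbound z
    rw [hz] at this
    exact this
  have hcd := aux_cauchy hdiff hRpos hMpos hcb k
  calc ‖iteratedDeriv k (f n) 0‖ / b ^ k ≤ ((Nat.factorial k : ℝ) * M / R ^ k) / b ^ k :=
        div_le_div_of_nonneg_right hcd (by positivity)
    _ = (Nat.factorial k : ℝ) * M / (R ^ k * b ^ k) := by rw [div_div]
    _ ≤ K := hK k
end

section
/- Let θ ≥ 0 and let a, b > 0 satisfy ab < 1. Let φ and f be entire functions with ‖φ‖_a < ∞ and ‖f‖_b < ∞. Then for every n ∈ ℕ the series g_n = Σ_{k=0}^∞ (n!/(k!(n+k)!)) φ^{(k)}(0) f^{(n+k)}(0) q_θ^{(n+k,k)} converges absolutely, the power series Σ_{n=0}^∞ g_n z^n/n! defines an entire function g = φ(Δ_θ)f, and ‖g‖_c ≤ (1 − ab)^{−θ} ‖φ‖_a ‖f‖_b where c = b/(1 − ab). -/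
open Filter Topology
open scoped ENNReal

/-- `q_θ^{(m,k)} = ∏_{l=0}^{k-1} (m-l)(θ+m-1-l)` for `k ≤ m`, and `0` for `k > m`. -/
noncomputable def qTheta (θ : ℝ) (m k : ℕ) : ℝ :=
  if k ≤ m then ∏ l ∈ Finset.range k, ((m - l : ℝ) * (θ + m - 1 - l)) else 0

/-- The `(n,k)`-term of the Taylor coefficient series of `φ(Δ_θ)f`:
`(n!/(k!(n+k)!)) φ^{(k)}(0) f^{(n+k)}(0) q_θ^{(n+k,k)}`. -/
noncomputable def phiDeltaCoeff (θ : ℝ) (φ f : ℂ → ℂ) (n k : ℕ) : ℂ :=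
  ((n.factorial : ℂ) / ((k.factorial : ℂ) * ((n + k).factorial : ℂ))) *
    iteratedDeriv k φ 0 * iteratedDeriv (n + k) f 0 * (qTheta θ (n + k) k : ℂ)

namespace Stmt10Aux

noncomputable def cc (x : ℝ) (k : ℕ) : ℝ := (∏ l ∈ Finset.range k, (x + l)) / k.factorial

lemma cc_zero (x : ℝ) : cc x 0 = 1 := by simp [cc]

lemma cc_nonneg {x : ℝ} (hx : 0 ≤ x) (k : ℕ) : 0 ≤ cc x k := by
  apply div_nonneg _ (by positivity)
  exact Finset.prod_nonneg fun l _ => by positivity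

lemma cc_succ (x : ℝ) (k : ℕ) : cc x (k + 1) = (x + k) * cc x k / (k + 1) := by
  unfold cc
  rw [Finset.prod_range_succ, Nat.factorial_succ]
  have h1 : ((k + 1 : ℕ) : ℝ) ≠ 0 := by positivity
  have h2 : ((k.factorial : ℕ) : ℝ) ≠ 0 := by positivity
  push_cast
  field_simp

lemma tendsto_ratio (p q : ℝ) :
    Tendsto (fun k : ℕ => (p + k) / (q + k)) atTop (𝓝 1) := by
  have h1 : Tendsto (fun k : ℕ => 1 + (p - q) / (q + k)) atTop (𝓝 (1 + 0)) := by
    apply tendsto_const_nhds.add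
    apply Tendsto.div_atTop tendsto_const_nhds
    exact tendsto_atTop_add_const_left _ q tendsto_natCast_atTop_atTop
  rw [add_zero] at h1
  apply h1.congr'
  filter_upwards [tendsto_natCast_atTop_atTop.eventually_gt_atTop (-q)] with k hk
  have hq : (0:ℝ) < q + k := by linarith
  field_simp
  ring

lemma summable_dcc {x d t : ℝ} (hx : 0 ≤ x) (hd : 0 ≤ d) (ht : |t| < 1) :
    Summable fun k : ℕ => (d + k) * cc x k * t ^ k := by
  obtain ⟨r, hr1, hr2⟩ := exists_between ht
  apply summable_of_ratio_norm_eventually_le hr2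
  have hq : Tendsto (fun k : ℕ => |t| * (((d + 1) + k) / (1 + k)) * ((x + k) / (d + k)))
      atTop (𝓝 (|t| * 1 * 1)) :=
    (tendsto_const_nhds.mul (tendsto_ratio (d + 1) 1)).mul (tendsto_ratio x d)
  rw [mul_one, mul_one] at hq
  filter_upwards [hq.eventually_le_const hr1, eventually_ge_atTop 1] with k hk hk1
  have hk1' : (1:ℝ) ≤ (k:ℝ) := by exact_mod_cast hk1
  have hdk : (0:ℝ) < d + k := by linarith
  have h1k : (0:ℝ) < 1 + (k:ℝ) := by linarith
  have hcc := cc_nonneg hx k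
  have habs : (0:ℝ) ≤ |t| := abs_nonneg t
  have hnorm1 : ‖(d + ((k:ℕ)+1:ℕ)) * cc x (k+1) * t ^ (k+1)‖
      = (d + (k+1)) * cc x (k+1) * |t| ^ (k+1) := by
    push_cast
    rw [Real.norm_eq_abs, abs_mul, abs_mul, abs_pow]
    rw [abs_of_nonneg (by linarith), abs_of_nonneg (cc_nonneg hx _)]
  have hnorm2 : ‖(d + (k:ℕ)) * cc x k * t ^ k‖ = (d + k) * cc x k * |t| ^ k := by
    rw [Real.norm_eq_abs, abs_mul, abs_mul, abs_pow]
    rw [abs_of_nonneg (by linarith), abs_of_nonneg hcc]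
  rw [hnorm1, hnorm2]
  have key : (d + ((k:ℝ)+1)) * cc x (k+1) * |t| ^ (k+1)
      = (|t| * (((d + 1) + k) / (1 + k)) * ((x + k) / (d + k))) * ((d + k) * cc x k * |t| ^ k) := by
    rw [cc_succ, pow_succ]
    push_cast
    field_simp
    ring
  rw [key]
  exact mul_le_mul_of_nonneg_right hk (by positivity)

lemma summable_cc {x t : ℝ} (hx : 0 ≤ x) (ht : |t| < 1) :
    Summable fun k : ℕ => cc x k * t ^ k := by
  have h := (summable_dcc hx zero_le_one ht).abs
  apply Summable.of_norm
  apply Summable.of_nonneg_of_le (fun k => norm_nonneg _) _ h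
  intro k
  have hk1 : (1:ℝ) ≤ 1 + (k:ℝ) := by have := Nat.cast_nonneg (α := ℝ) k; linarith
  rw [Real.norm_eq_abs, abs_mul, abs_pow, abs_of_nonneg (cc_nonneg hx k),
    abs_mul, abs_mul, abs_pow, abs_of_nonneg (cc_nonneg hx k),
    abs_of_nonneg (by positivity : (0:ℝ) ≤ 1 + (k:ℝ))]
  nlinarith [cc_nonneg hx k, pow_nonneg (abs_nonneg t) k, mul_nonneg (cc_nonneg hx k) (pow_nonneg (abs_nonneg t) k)]


lemma summable_ecc {x t : ℝ} (hx : 0 ≤ x) (ht : |t| < 1) :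
    Summable fun k : ℕ => (x + k) * cc x k * t ^ k := summable_dcc hx hx ht

lemma hasSum_cc {x t : ℝ} (hx : 0 ≤ x) (ht0 : 0 ≤ t) (ht1 : t < 1) :
    HasSum (fun k : ℕ => cc x k * t ^ k) ((1 - t) ^ (-x)) := by
  set t1 : ℝ := (1 + t) / 2 with ht1def
  have htt1 : t < t1 := by rw [ht1def]; linarith
  have ht1lt : t1 < 1 := by rw [ht1def]; linarith
  have ht1pos : 0 < t1 := by rw [ht1def]; linarith
  have ht1abs : |t1| < 1 := by rw [abs_of_pos ht1pos]; exact ht1lt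
  set s : Set ℝ := Set.Ioo (-t1) t1 with hsdef
  have hs_open : IsOpen s := isOpen_Ioo
  have hs_conn : IsPreconnected s := (convex_Ioo _ _).isPreconnected
  set u : ℕ → ℝ := fun k => (x + k) * cc x k * t1 ^ k * t1⁻¹ with hudef
  have hu : Summable u := (summable_ecc hx ht1abs).mul_right t1⁻¹
  set g : ℕ → ℝ → ℝ := fun k y => cc x k * y ^ k with hgdef
  set g' : ℕ → ℝ → ℝ := fun k y => cc x k * (k * y ^ (k - 1)) with hg'def
  have hg : ∀ (k : ℕ) (y : ℝ), HasDerivAt (g k) (g' k y) y := fun k y =>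
    (hasDerivAt_pow k y).const_mul _
  have hg'bound : ∀ (k : ℕ) (y : ℝ), y ∈ s → ‖g' k y‖ ≤ u k := by
    intro k y hy
    have hyabs : |y| ≤ t1 := by
      rw [abs_le]; exact ⟨hy.1.le, hy.2.le⟩
    simp only [hg'def, hudef, Real.norm_eq_abs, abs_mul, abs_pow,
      abs_of_nonneg (cc_nonneg hx k), Nat.abs_cast]
    rcases Nat.eq_zero_or_pos k with rfl | hk
    · simp only [Nat.cast_zero, zero_mul, mul_zero, abs_zero]
      have h0 := cc_nonneg hx 0
      have hxz : (0:ℝ) ≤ x + (0:ℕ) := by simpa using hx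
      positivity
    · have h1 : |y| ^ (k - 1) ≤ t1 ^ (k - 1) := pow_le_pow_left₀ (abs_nonneg y) hyabs _
      have h2 : t1 ^ (k - 1) = t1 ^ k * t1⁻¹ := by
        have hk' : k - 1 + 1 = k := Nat.succ_pred_eq_of_pos hk
        field_simp
        rw [← pow_succ, hk']
      calc cc x k * ((k:ℝ) * |y| ^ (k - 1)) ≤ cc x k * ((k:ℝ) * t1 ^ (k - 1)) := by
            apply mul_le_mul_of_nonneg_left _ (cc_nonneg hx k)
            exact mul_le_mul_of_nonneg_left h1 (Nat.cast_nonneg k)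
        _ = (k:ℝ) * cc x k * t1 ^ k * t1⁻¹ := by rw [h2]; ring
        _ ≤ (x + k) * cc x k * t1 ^ k * t1⁻¹ := by
            have hle : (k:ℝ) ≤ x + k := by linarith
            have hrest : (0:ℝ) ≤ cc x k * t1 ^ k * t1⁻¹ := by
              have := cc_nonneg hx k; positivity
            calc (k:ℝ) * cc x k * t1 ^ k * t1⁻¹ = (k:ℝ) * (cc x k * t1 ^ k * t1⁻¹) := by ring
              _ ≤ (x + k) * (cc x k * t1 ^ k * t1⁻¹) := mul_le_mul_of_nonneg_right hle hrest
              _ = (x + k) * cc x k * t1 ^ k * t1⁻¹ := by ring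
  have h0mem : (0:ℝ) ∈ s := ⟨by linarith, ht1pos⟩
  have hg0 : Summable fun k => g k 0 := by
    apply summable_of_ne_finset_zero (s := {0})
    intro k hk
    have hkne : k ≠ 0 := by simpa using hk
    simp [hgdef, zero_pow hkne]
  have key : ∀ y ∈ s, HasDerivAt (fun z => ∑' k, g k z) (∑' k, g' k y) y := fun y hy =>
    hasDerivAt_tsum_of_isPreconnected hu hs_open hs_conn (fun k y _ => hg k y) hg'bound h0mem hg0 hy
  set F : ℝ → ℝ := fun z => ∑' k, g k z with hFdef
  have hmem_abs : ∀ y ∈ s, |y| < 1 := by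
    intro y hy
    exact lt_trans (abs_lt.2 ⟨hy.1, hy.2⟩) ht1lt
  -- derivative equals E
  have hD : ∀ y ∈ s, (∑' k, g' k y) = ∑' k, (x + k) * cc x k * y ^ k := by
    intro y hy
    have hg'S : Summable fun k => g' k y :=
      Summable.of_norm_bounded hu (fun k => hg'bound k y hy)
    rw [Summable.tsum_eq_zero_add hg'S]
    have h0 : g' 0 y = 0 := by simp [hg'def]
    rw [h0, zero_add]
    apply tsum_congr
    intro k
    have hk1 : ((k:ℝ) + 1) ≠ 0 := by positivity
    simp only [hg'def, Nat.add_sub_cancel]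
    rw [cc_succ]
    push_cast
    field_simp
  -- the ODE identity
  have hODE : ∀ y ∈ s, (∑' k, g' k y) * (1 - y) = x * F y := by
    intro y hy
    have hyabs := hmem_abs y hy
    have hSE : Summable fun k : ℕ => (x + k) * cc x k * y ^ k := summable_ecc hx hyabs
    have hS1 : Summable fun k : ℕ => cc x k * y ^ k := summable_cc hx hyabs
    have hA1 : Summable fun k : ℕ => (x + ((k:ℕ)+1:ℕ)) * cc x (k+1) * y ^ (k+1) :=
      (summable_nat_add_iff (f := fun k : ℕ => (x + k) * cc x k * y ^ k) 1).2 hSE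
    have hB1 : Summable fun k : ℕ => ((x + k) * cc x k * y ^ k) * y := hSE.mul_right y
    rw [hD y hy]
    set E : ℝ := ∑' k, (x + k) * cc x k * y ^ k with hEdef
    have step1 : E * (1 - y) = E - E * y := by ring
    have step2 : E = (x + (0:ℕ)) * cc x 0 * y ^ 0 + ∑' k : ℕ, (x + ((k:ℕ)+1:ℕ)) * cc x (k+1) * y ^ (k+1) := by
      rw [hEdef]; exact Summable.tsum_eq_zero_add hSE
    have step3 : E * y = ∑' k : ℕ, ((x + k) * cc x k * y ^ k) * y := by
      rw [hEdef, tsum_mul_right]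
    have step4 : (∑' k : ℕ, (x + ((k:ℕ)+1:ℕ)) * cc x (k+1) * y ^ (k+1))
        - ∑' k : ℕ, ((x + k) * cc x k * y ^ k) * y
        = ∑' k : ℕ, x * (cc x (k+1) * y ^ (k+1)) := by
      rw [← Summable.tsum_sub hA1 hB1]
      apply tsum_congr
      intro k
      have hk1 : ((k:ℝ) + 1) ≠ 0 := by positivity
      rw [cc_succ, pow_succ]
      push_cast
      field_simp
      ring
    have step5 : ∑' k : ℕ, x * (cc x (k+1) * y ^ (k+1)) = x * ∑' k : ℕ, cc x (k+1) * y ^ (k+1) :=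
      tsum_mul_left
    have step6 : F y = cc x 0 * y ^ 0 + ∑' k : ℕ, cc x (k+1) * y ^ (k+1) := Summable.tsum_eq_zero_add hS1
    calc E * (1 - y)
        = ((x + ((0:ℕ):ℝ)) * cc x 0 * y ^ 0 + ∑' k : ℕ, (x + ((k:ℕ)+1:ℕ)) * cc x (k+1) * y ^ (k+1))
          - ∑' k : ℕ, ((x + k) * cc x k * y ^ k) * y := by rw [← step2, ← step3]; ring
      _ = (x + ((0:ℕ):ℝ)) * cc x 0 * y ^ 0 + ((∑' k : ℕ, (x + ((k:ℕ)+1:ℕ)) * cc x (k+1) * y ^ (k+1))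
          - ∑' k : ℕ, ((x + k) * cc x k * y ^ k) * y) := by ring
      _ = (x + ((0:ℕ):ℝ)) * cc x 0 * y ^ 0 + ∑' k : ℕ, x * (cc x (k+1) * y ^ (k+1)) := by rw [step4]
      _ = (x + ((0:ℕ):ℝ)) * cc x 0 * y ^ 0 + x * ∑' k : ℕ, cc x (k+1) * y ^ (k+1) := by rw [step5]
      _ = x * (cc x 0 * y ^ 0 + ∑' k : ℕ, cc x (k+1) * y ^ (k+1)) := by push_cast; ring
      _ = x * F y := by rw [← step6]
  -- G is constant
  set G : ℝ → ℝ := fun y => F y * (1 - y) ^ x with hGdef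
  have hG : ∀ y ∈ s, HasDerivAt G 0 y := by
    intro y hy
    have h1y : 0 < 1 - y := by linarith [hy.2, ht1lt]
    have hF' : HasDerivAt F (∑' k, g' k y) y := key y hy
    have hR : HasDerivAt (fun z : ℝ => (1 - z) ^ x) (-1 * x * (1 - y) ^ (x - 1)) y := by
      have hbase : HasDerivAt (fun z : ℝ => 1 - z) (-1) y := (hasDerivAt_id y).const_sub 1
      exact hbase.rpow_const (Or.inl h1y.ne')
    have hmul := hF'.mul hR
    have hzero : (∑' k, g' k y) * (1 - y) ^ x + F y * (-1 * x * (1 - y) ^ (x - 1)) = 0 := by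
      have hkey := hODE y hy
      rw [Real.rpow_sub_one h1y.ne']
      have hne : (1 - y) ^ x ≠ 0 := (Real.rpow_pos_of_pos h1y x).ne'
      field_simp
      linear_combination (1 - y) ^ x * hkey
    rw [hzero] at hmul
    exact hmul
  have hsub : Set.Icc (0:ℝ) t ⊆ s := fun y hy => ⟨by linarith [hy.1], lt_of_le_of_lt hy.2 htt1⟩
  have hcont : ContinuousOn G (Set.Icc 0 t) := fun y hy =>
    ((hG y (hsub hy)).continuousAt).continuousWithinAt
  have hconst := constant_of_has_deriv_right_zero hcont (fun y hy =>
    ((hG y (hsub (Set.mem_Icc_of_Ico hy))).hasDerivWithinAt))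
  have hGt : G t = G 0 := hconst t (Set.right_mem_Icc.2 ht0)
  have hF0 : F 0 = 1 := by
    have h := tsum_eq_single (L := SummationFilter.unconditional ℕ) (f := fun k : ℕ => g k 0) 0 (fun k hk => by simp [hgdef, zero_pow hk])
    have h2 : F 0 = ∑' k : ℕ, g k 0 := rfl
    rw [h2, h]
    simp [hgdef, cc_zero]
  have hG0 : G 0 = 1 := by
    rw [hGdef]
    simp only [sub_zero, Real.one_rpow, mul_one, hF0]
  have h1t : 0 < 1 - t := by linarith
  have hFt : F t = (1 - t) ^ (-x) := by
    have h2 : F t * (1 - t) ^ x = 1 := hGt.trans hG0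
    rw [Real.rpow_neg h1t.le]
    have hne : (1 - t) ^ x ≠ 0 := (Real.rpow_pos_of_pos h1t x).ne'
    field_simp at h2 ⊢
    linarith [h2]
  have hsum : Summable fun k : ℕ => cc x k * t ^ k := summable_cc hx (by rw [abs_of_nonneg ht0]; exact ht1)
  have := hsum.hasSum
  rwa [show (∑' k : ℕ, cc x k * t ^ k) = (1 - t) ^ (-x) from hFt ▸ rfl] at this


lemma prod_desc (n k : ℕ) :
    (∏ l ∈ Finset.range k, (((n + k : ℕ) : ℝ) - l)) = (n + k).factorial / n.factorial := by
  have h1 : (∏ l ∈ Finset.range k, (((n + k : ℕ) : ℝ) - l)) = ((n + k).descFactorial k : ℝ) := by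
    rw [Nat.descFactorial_eq_prod_range, Nat.cast_prod]
    apply Finset.prod_congr rfl
    intro l hl
    rw [Nat.cast_sub (le_trans (Finset.mem_range.1 hl).le (Nat.le_add_left k n))]
  rw [h1]
  have h2 := Nat.factorial_mul_descFactorial (Nat.le_add_left k n)
  rw [Nat.add_sub_cancel] at h2
  have h3 : (n.factorial : ℝ) * ((n + k).descFactorial k : ℝ) = ((n + k).factorial : ℝ) := by
    exact_mod_cast congrArg (Nat.cast : ℕ → ℝ) h2
  have h4 : (n.factorial : ℝ) ≠ 0 := by positivity
  field_simp
  linarith [h3]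

lemma prod_theta (θ : ℝ) (n k : ℕ) :
    (∏ l ∈ Finset.range k, (θ + ((n + k : ℕ) : ℝ) - 1 - l)) = ∏ j ∈ Finset.range k, (θ + n + j) := by
  rw [← Finset.prod_range_reflect (fun j => θ + n + j) k]
  apply Finset.prod_congr rfl
  intro l hl
  have hl' : l < k := Finset.mem_range.1 hl
  have hc : ((k - 1 - l : ℕ) : ℝ) = (k : ℝ) - 1 - l := by
    have he : k - 1 - l = k - (1 + l) := by omega
    rw [he, Nat.cast_sub (by omega)]
    push_cast
    ring
  simp only [hc]
  push_cast
  ring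

lemma qTheta_eq (θ : ℝ) (n k : ℕ) :
    qTheta θ (n + k) k = ((n + k).factorial / n.factorial : ℝ) * ∏ j ∈ Finset.range k, (θ + n + j) := by
  rw [qTheta, if_pos (Nat.le_add_left k n), Finset.prod_mul_distrib, prod_desc, prod_theta]

lemma qTheta_nonneg {θ : ℝ} (hθ : 0 ≤ θ) (n k : ℕ) : 0 ≤ qTheta θ (n + k) k := by
  rw [qTheta_eq]
  apply mul_nonneg (by positivity)
  exact Finset.prod_nonneg fun j _ => by positivity


end Stmt10Aux

open Stmt10Aux in
theorem stmt_10 (θ a b : ℝ) (hθ : 0 ≤ θ) (ha : 0 < a) (hb : 0 < b) (hab : a * b < 1)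
    (φ f : ℂ → ℂ) (hφd : Differentiable ℂ φ) (hfd : Differentiable ℂ f)
    (hφ : normB a φ < ⊤) (hf : normB b f < ⊤) :
    (∀ n : ℕ, Summable fun k : ℕ => ‖phiDeltaCoeff θ φ f n k‖) ∧
    ∃ g : ℂ → ℂ, Differentiable ℂ g ∧
      (∀ z : ℂ, g z =
        ∑' n : ℕ, (∑' k : ℕ, phiDeltaCoeff θ φ f n k) * z ^ n / (n.factorial : ℂ)) ∧
      normB (b / (1 - a * b)) g ≤
        ENNReal.ofReal ((1 - a * b) ^ (-θ)) * (normB a φ * normB b f) := by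
  have hab0 : 0 < a * b := mul_pos ha hb
  have h1ab : 0 < 1 - a * b := by linarith
  set A : ℝ := (normB a φ).toReal with hAdef
  set B : ℝ := (normB b f).toReal with hBdef
  have hA0 : 0 ≤ A := ENNReal.toReal_nonneg
  have hB0 : 0 ≤ B := ENNReal.toReal_nonneg
  have hAb : ∀ k : ℕ, ‖iteratedDeriv k φ 0‖ ≤ A * a ^ k := by
    intro k
    have h1 : ENNReal.ofReal (‖iteratedDeriv k φ 0‖ / a ^ k) ≤ normB a φ :=
      le_iSup (fun k : ℕ => ENNReal.ofReal (‖iteratedDeriv k φ 0‖ / a ^ k)) k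
    rw [ENNReal.ofReal_le_iff_le_toReal hφ.ne] at h1
    rw [div_le_iff₀ (pow_pos ha k)] at h1
    linarith [h1]
  have hBb : ∀ k : ℕ, ‖iteratedDeriv k f 0‖ ≤ B * b ^ k := by
    intro k
    have h1 : ENNReal.ofReal (‖iteratedDeriv k f 0‖ / b ^ k) ≤ normB b f :=
      le_iSup (fun k : ℕ => ENNReal.ofReal (‖iteratedDeriv k f 0‖ / b ^ k)) k
    rw [ENNReal.ofReal_le_iff_le_toReal hf.ne] at h1
    rw [div_le_iff₀ (pow_pos hb k)] at h1
    linarith [h1]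
  -- the coefficient bound
  have hbound : ∀ n k : ℕ, ‖phiDeltaCoeff θ φ f n k‖ ≤
      A * B * b ^ n * (cc (θ + n) k * (a * b) ^ k) := by
    intro n k
    have hθn : (0:ℝ) ≤ θ + n := by positivity
    have hq : qTheta θ (n + k) k =
        ((n + k).factorial / n.factorial : ℝ) * ∏ j ∈ Finset.range k, (θ + n + j) := qTheta_eq θ n k
    have hqn : 0 ≤ qTheta θ (n + k) k := qTheta_nonneg hθ n k
    have hnorm : ‖phiDeltaCoeff θ φ f n k‖ =
        ((n.factorial : ℝ) / ((k.factorial : ℝ) * ((n + k).factorial : ℝ))) *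
          ‖iteratedDeriv k φ 0‖ * ‖iteratedDeriv (n + k) f 0‖ * qTheta θ (n + k) k := by
      rw [phiDeltaCoeff]
      rw [norm_mul, norm_mul, norm_mul, norm_div, norm_mul]
      simp only [Complex.norm_natCast, Complex.norm_real, Real.norm_eq_abs,
        abs_of_nonneg hqn]
    rw [hnorm]
    have hP : (0:ℝ) ≤ ∏ j ∈ Finset.range k, (θ + n + j) :=
      Finset.prod_nonneg fun j _ => by positivity
    have hcoef : (0:ℝ) ≤ (n.factorial : ℝ) / ((k.factorial : ℝ) * ((n + k).factorial : ℝ)) := by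
      positivity
    calc ((n.factorial : ℝ) / ((k.factorial : ℝ) * ((n + k).factorial : ℝ))) *
          ‖iteratedDeriv k φ 0‖ * ‖iteratedDeriv (n + k) f 0‖ * qTheta θ (n + k) k
        ≤ ((n.factorial : ℝ) / ((k.factorial : ℝ) * ((n + k).factorial : ℝ))) *
          (A * a ^ k) * (B * b ^ (n + k)) * qTheta θ (n + k) k := by
          gcongr
          exacts [hAb k, hBb (n + k)]
      _ = A * B * b ^ n * (cc (θ + n) k * (a * b) ^ k) := by
          rw [hq, cc]
          have h1 : ((n.factorial : ℕ) : ℝ) ≠ 0 := by positivity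
          have h2 : ((k.factorial : ℕ) : ℝ) ≠ 0 := by positivity
          have h3 : (((n + k).factorial : ℕ) : ℝ) ≠ 0 := by positivity
          rw [pow_add, mul_pow]
          field_simp
  have habs : |a * b| < 1 := by rw [abs_of_pos hab0]; exact hab
  have hsummable : ∀ n : ℕ, Summable fun k : ℕ => ‖phiDeltaCoeff θ φ f n k‖ := by
    intro n
    have hθn : (0:ℝ) ≤ θ + n := by positivity
    apply Summable.of_nonneg_of_le (fun k => norm_nonneg _) (hbound n)
    exact (summable_cc hθn habs).mul_left _
  refine ⟨hsummable, ?_⟩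
  -- coefficient bound for the sums
  set c' : ℝ := b / (1 - a * b) with hc'def
  have hc'pos : 0 < c' := by positivity
  set C : ℝ := (1 - a * b) ^ (-θ) * (A * B) with hCdef
  have hC0 : 0 ≤ C := by positivity
  have hgn : ∀ n : ℕ, ‖∑' k : ℕ, phiDeltaCoeff θ φ f n k‖ ≤ C * c' ^ n := by
    intro n
    have hθn : (0:ℝ) ≤ θ + n := by positivity
    have hs := hasSum_cc hθn hab0.le hab
    calc ‖∑' k : ℕ, phiDeltaCoeff θ φ f n k‖ ≤ ∑' k : ℕ, ‖phiDeltaCoeff θ φ f n k‖ :=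
          norm_tsum_le_tsum_norm (hsummable n)
      _ ≤ ∑' k : ℕ, A * B * b ^ n * (cc (θ + n) k * (a * b) ^ k) :=
          Summable.tsum_le_tsum (hbound n) (hsummable n) ((hs.summable).mul_left _)
      _ = A * B * b ^ n * ((1 - a * b) ^ (-(θ + n))) := by
          rw [tsum_mul_left, hs.tsum_eq]
      _ = C * c' ^ n := by
          rw [hCdef, hc'def]
          rw [neg_add, Real.rpow_add h1ab, Real.rpow_neg h1ab.le (n:ℝ), Real.rpow_natCast]
          rw [div_pow]
          field_simp
  -- the power series
  set coeff : ℕ → ℂ := fun n => (∑' k : ℕ, phiDeltaCoeff θ φ f n k) / (n.factorial : ℂ) with hcoeffdef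
  set p : FormalMultilinearSeries ℂ ℂ ℂ :=
    fun n => ContinuousMultilinearMap.mkPiRing ℂ (Fin n) (coeff n) with hpdef
  have hpnorm : ∀ n, ‖p n‖ = ‖∑' k : ℕ, phiDeltaCoeff θ φ f n k‖ / (n.factorial : ℝ) := by
    intro n
    rw [hpdef]
    rw [ContinuousMultilinearMap.norm_mkPiRing]
    rw [hcoeffdef]
    rw [norm_div, Complex.norm_natCast]
  have hradius : p.radius = ⊤ := by
    apply p.radius_eq_top_of_summable_norm
    intro r
    refine Summable.of_nonneg_of_le (fun n => by positivity) ?_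
      ((Real.summable_pow_div_factorial (c' * r)).mul_left C)
    · intro n
      rw [hpnorm]
      have h1 : ‖∑' k : ℕ, phiDeltaCoeff θ φ f n k‖ / (n.factorial : ℝ) * (r:ℝ) ^ n
          ≤ (C * c' ^ n) / (n.factorial : ℝ) * (r:ℝ) ^ n := by
        gcongr
        exact hgn n
      refine le_trans h1 (le_of_eq ?_)
      rw [mul_pow]
      field_simp
  have hrpos : 0 < p.radius := by rw [hradius]; exact ENNReal.zero_lt_top
  have hps : HasFPowerSeriesOnBall p.sum p 0 p.radius := p.hasFPowerSeriesOnBall hrpos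
  refine ⟨p.sum, ?_, ?_, ?_⟩
  · have hdo : DifferentiableOn ℂ p.sum (Metric.eball 0 p.radius) := hps.differentiableOn
    rw [hradius, Metric.eball_top_eq_univ] at hdo
    exact differentiableOn_univ.1 hdo
  · intro z
    have h1 : p.sum z = ∑' n : ℕ, p n fun _ => z := rfl
    rw [h1]
    apply tsum_congr
    intro n
    rw [hpdef]
    rw [ContinuousMultilinearMap.mkPiRing_apply]
    simp only [Finset.prod_const, Finset.card_univ, Fintype.card_fin, smul_eq_mul, hcoeffdef]
    ring
  · -- norm bound
    have hderiv : ∀ n : ℕ, iteratedDeriv n p.sum 0 = (n.factorial : ℂ) * coeff n := by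
      intro n
      have h := hps.factorial_smul (y := (1:ℂ)) n
      rw [iteratedDeriv_eq_iteratedFDeriv]
      rw [← h]
      rw [hpdef]
      rw [ContinuousMultilinearMap.mkPiRing_apply]
      simp [smul_eq_mul]
    rw [normB]
    apply iSup_le
    intro n
    have hnfac : (0:ℝ) < (n.factorial : ℝ) := by positivity
    have hnormit : ‖iteratedDeriv n p.sum 0‖ = ‖∑' k : ℕ, phiDeltaCoeff θ φ f n k‖ := by
      rw [hderiv n, norm_mul, Complex.norm_natCast, hcoeffdef]
      simp only [norm_div, Complex.norm_natCast]
      field_simp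
    rw [hnormit]
    have hle : ‖∑' k : ℕ, phiDeltaCoeff θ φ f n k‖ / c' ^ n ≤ C := by
      rw [div_le_iff₀ (pow_pos hc'pos n)]
      exact hgn n
    calc ENNReal.ofReal (‖∑' k : ℕ, phiDeltaCoeff θ φ f n k‖ / c' ^ n)
        ≤ ENNReal.ofReal C := ENNReal.ofReal_le_ofReal hle
      _ = ENNReal.ofReal ((1 - a * b) ^ (-θ)) * (normB a φ * normB b f) := by
          rw [hCdef, ENNReal.ofReal_mul (by positivity), ENNReal.ofReal_mul hA0,
            hAdef, hBdef, ENNReal.ofReal_toReal hφ.ne, ENNReal.ofReal_toReal hf.ne]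
end

section
/- Let Q_0 be a function holomorphic on an open set containing the closed right half-plane Ā = {z ∈ ℂ : Re z ≥ 0}, and let Q_1 be a polynomial. If Q_0(w) + v·Q_1(w) ≠ 0 for all v, w ∈ Ā, then Q_0(z) + Q_1'(z) ≠ 0 for all z ∈ Ā. -/
open Polynomial

lemma logderiv_re_nonneg : ∀ (n : ℕ) (p : ℂ[X]), p.natDegree = n →
    (∀ r ∈ p.roots, r.re ≤ 0) → ∀ z : ℂ, 0 ≤ z.re → p.eval z ≠ 0 →
    0 ≤ ((p.derivative.eval z) / p.eval z).re := by
  intro n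
  induction n with
  | zero =>
    intro p hdeg _ z _ _
    obtain ⟨a, rfl⟩ := Polynomial.natDegree_eq_zero.mp hdeg
    simp
  | succ n ih =>
    intro p hdeg hroots z hz hpz
    have hp0 : p ≠ 0 := fun hp => hpz (by simp [hp])
    obtain ⟨r, hr⟩ := Complex.exists_root (f := p)
      (by rw [Polynomial.degree_eq_natDegree hp0, hdeg]; exact_mod_cast Nat.succ_pos n)
    obtain ⟨q, hq⟩ := Polynomial.dvd_iff_isRoot.mpr hr
    have hq0 : q ≠ 0 := fun hq' => hp0 (by simp [hq, hq'])
    have hXr : (X - C r) ≠ 0 := Polynomial.X_sub_C_ne_zero r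
    have hqdeg : q.natDegree = n := by
      have := Polynomial.natDegree_mul hXr hq0
      rw [← hq, hdeg, Polynomial.natDegree_X_sub_C] at this
      omega
    have hqroots : ∀ s ∈ q.roots, s.re ≤ 0 := by
      intro s hs
      exact hroots s (Multiset.mem_of_le (Polynomial.roots.le_of_dvd hp0 ⟨X - C r, by rw [hq]; ring⟩) hs)
    have hrre : r.re ≤ 0 := hroots r (by
      rw [Polynomial.mem_roots hp0]; exact hr)
    have hev : p.eval z = (z - r) * q.eval z := by simp [hq]
    have hzr : z - r ≠ 0 := fun h' => hpz (by rw [hev, h', zero_mul])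
    have hqz : q.eval z ≠ 0 := fun h' => hpz (by rw [hev, h', mul_zero])
    have hder : p.derivative.eval z = q.eval z + (z - r) * q.derivative.eval z := by
      rw [hq]; simp [Polynomial.derivative_mul]
    have key : p.derivative.eval z / p.eval z = (z - r)⁻¹ + q.derivative.eval z / q.eval z := by
      rw [hder, hev]; field_simp
    rw [key, Complex.add_re]
    have h1 : 0 ≤ ((z - r)⁻¹).re := by
      rw [Complex.inv_re]
      apply div_nonneg _ (Complex.normSq_nonneg _)
      simp only [Complex.sub_re]; linarith
    have h2 := ih q hqdeg hqroots z hz hqz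
    linarith

theorem stmt_12 (U : Set ℂ) (hU : IsOpen U) (hUA : {z : ℂ | 0 ≤ z.re} ⊆ U)
    (Q₀ : ℂ → ℂ) (hQ₀ : DifferentiableOn ℂ Q₀ U) (Q₁ : Polynomial ℂ)
    (h : ∀ v w : ℂ, 0 ≤ v.re → 0 ≤ w.re → Q₀ w + v * Q₁.eval w ≠ 0) :
    ∀ z : ℂ, 0 ≤ z.re → Q₀ z + (Polynomial.derivative Q₁).eval z ≠ 0 := by
  -- Fact A: Q₀ has no zeros on the closed right half-plane.
  have hA : ∀ w : ℂ, 0 ≤ w.re → Q₀ w ≠ 0 := by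
    intro w hw
    have := h 0 w (by simp) hw
    simpa using this
  -- Fact B: Re (Q₀ w / Q₁ w) > 0 wherever Q₁ w ≠ 0 on the half-plane.
  have hB : ∀ w : ℂ, 0 ≤ w.re → Q₁.eval w ≠ 0 → 0 < (Q₀ w / Q₁.eval w).re := by
    intro w hw hQ1w
    by_contra hc
    push_neg at hc
    have hv : (0 : ℝ) ≤ (-(Q₀ w / Q₁.eval w)).re := by
      rw [Complex.neg_re]; linarith
    exact h _ w hv hw (by field_simp; ring)
  -- Fact C: Re (Q₁ w / Q₀ w) ≥ 0 on the half-plane, with equality only at zeros of Q₁.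
  have hC : ∀ w : ℂ, 0 ≤ w.re → 0 ≤ (Q₁.eval w / Q₀ w).re := by
    intro w hw
    by_cases hQ1w : Q₁.eval w = 0
    · simp [hQ1w]
    · have h1 := hB w hw hQ1w
      have : Q₁.eval w / Q₀ w = (Q₀ w / Q₁.eval w)⁻¹ := by
        rw [inv_div]
      rw [this, Complex.inv_re]
      exact div_nonneg (le_of_lt h1) (Complex.normSq_nonneg _)
  have hCpos : ∀ w : ℂ, 0 ≤ w.re → Q₁.eval w ≠ 0 → 0 < (Q₁.eval w / Q₀ w).re := by
    intro w hw hQ1w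
    have h1 := hB w hw hQ1w
    have : Q₁.eval w / Q₀ w = (Q₀ w / Q₁.eval w)⁻¹ := by rw [inv_div]
    rw [this, Complex.inv_re]
    apply div_pos h1
    rw [Complex.normSq_pos]
    exact div_ne_zero (hA w hw) hQ1w
  -- The open set V where Q₀ is holomorphic and nonvanishing.
  set V : Set ℂ := U ∩ Q₀ ⁻¹' {0}ᶜ with hVdef
  have hVopen : IsOpen V := hQ₀.continuousOn.isOpen_inter_preimage hU isOpen_compl_singleton
  have hAV : {z : ℂ | 0 ≤ z.re} ⊆ V := fun w hw => ⟨hUA hw, hA w hw⟩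
  set g : ℂ → ℂ := fun w => Q₁.eval w / Q₀ w with hgdef
  have hg : DifferentiableOn ℂ g V :=
    DifferentiableOn.div (Polynomial.differentiable Q₁).differentiableOn
      (hQ₀.mono Set.inter_subset_left) (fun w hw => hw.2)
  -- Step 1: if Q₁ ≠ 0 it has no root with positive real part.
  have hL2 : Q₁ ≠ 0 → ∀ r : ℂ, 0 < r.re → Q₁.eval r ≠ 0 := by
    intro hQ1ne r hr hroot
    have hrV : r ∈ V := hAV (le_of_lt hr)
    have hW : IsOpen (V ∩ {w : ℂ | 0 < w.re}) :=
      hVopen.inter (isOpen_lt continuous_const Complex.continuous_re)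
    obtain ⟨ε, hε, hball⟩ := Metric.isOpen_iff.mp hW r ⟨hrV, hr⟩
    set f : ℂ → ℂ := fun w => Complex.exp (-g w) with hfdef
    have hgr : g r = 0 := by simp [hgdef, hroot]
    have hmax : IsMaxOn (norm ∘ f) (Metric.ball r ε) r := by
      intro w hw
      have hw' := hball hw
      have hge := hC w (le_of_lt hw'.2)
      have e1 : ‖f w‖ = Real.exp (-(g w).re) := by
        simp [hfdef, Complex.norm_exp]
      have e2 : ‖f r‖ = 1 := by simp [hfdef, hgr]
      simp only [Function.comp_apply, Set.mem_setOf_eq]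
      rw [e1, e2]
      calc Real.exp (-(g w).re) ≤ Real.exp 0 := Real.exp_le_exp.mpr (by linarith)
        _ = 1 := Real.exp_zero
    have hfd : DifferentiableOn ℂ f (Metric.ball r ε) :=
      ((hg.mono (fun w hw => (hball hw).1)).neg).cexp
    have heq := Complex.eqOn_of_isPreconnected_of_isMaxOn_norm
      (convex_ball r ε).isPreconnected Metric.isOpen_ball hfd (Metric.mem_ball_self hε) hmax
    -- every point of the ball is a root of Q₁
    have hroots : ∀ w ∈ Metric.ball r ε, Q₁.eval w = 0 := by
      intro w hw
      by_contra hne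
      have hw' := hball hw
      have hpos := hCpos w (le_of_lt hw'.2) hne
      have h1 : f w = f r := heq hw
      have h2 : ‖f w‖ = 1 := by
        rw [h1]; simp [hfdef, hgr]
      rw [hfdef] at h2
      simp only [Complex.norm_exp, Complex.neg_re] at h2
      have h3 := congrArg Real.log h2
      rw [Real.log_exp, Real.log_one] at h3
      linarith
    -- hence Q₁ = 0, contradiction
    apply hQ1ne
    apply Polynomial.eq_zero_of_infinite_isRoot
    apply Set.Infinite.mono (s := (fun t : ℝ => r + (t : ℂ)) '' Set.Ioo 0 ε)
    · rintro _ ⟨t, ht, rfl⟩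
      refine hroots _ ?_
      simp only [Metric.mem_ball, dist_eq_norm, add_sub_cancel_left, Complex.norm_real,
        Real.norm_eq_abs, abs_of_pos ht.1]
      exact ht.2
    · apply Set.Infinite.image
      · intro a _ b _ hab
        have := add_left_cancel hab
        exact_mod_cast this
      · exact Set.Ioo_infinite hε
  -- Main argument
  intro z hz heq
  by_cases hQ1 : Q₁ = 0
  · subst hQ1
    simp only [map_zero, Polynomial.eval_zero, add_zero] at heq
    exact hA z hz heq
  have hd1 : Q₁.derivative.eval z = -Q₀ z := by linear_combination heq
  by_cases hz1 : Q₁.eval z = 0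
  · -- boundary case: z is a root of Q₁; derivative of g along the real direction is -1
    have hzV : z ∈ V := hAV hz
    have hQ₀at : DifferentiableAt ℂ Q₀ z := (hQ₀.differentiableAt (hU.mem_nhds (hUA hz)))
    have hQ₀d : HasDerivAt Q₀ (deriv Q₀ z) z := hQ₀at.hasDerivAt
    have hQ0z : Q₀ z ≠ 0 := hA z hz
    have hgd : HasDerivAt g (-1) z := by
      have := (Polynomial.hasDerivAt Q₁ z).div hQ₀d hQ0z
      refine HasDerivAt.congr_deriv this ?_
      rw [hz1, hd1]
      field_simp
      try ring
    -- compose with t ↦ z + t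
    set ψ : ℂ → ℂ := fun w => g (z + w) with hψdef
    have hψd : HasDerivAt ψ (-1) 0 := by
      have hinner : HasDerivAt (fun w : ℂ => z + w) 1 0 := by
        simpa using (hasDerivAt_id (0 : ℂ)).const_add z
      have := HasDerivAt.comp (0 : ℂ) (by simpa using hgd) hinner
      rw [mul_one] at this; exact this
    have hψr : HasDerivAt (fun t : ℝ => ψ t) (-1) 0 := by
      exact HasDerivAt.comp_ofReal (by simpa using hψd)
    have hslope := hasDerivAt_iff_tendsto_slope.mp hψr
    have hslope' : Filter.Tendsto (fun t : ℝ => (slope (fun t : ℝ => ψ t) 0 t).re)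
        (nhdsWithin 0 (Set.Ioi 0)) (nhds (-1 : ℝ)) := by
      have : Filter.Tendsto (slope (fun t : ℝ => ψ t) 0) (nhdsWithin 0 (Set.Ioi 0))
          (nhds (-1 : ℂ)) :=
        hslope.mono_left (nhdsWithin_mono 0 (fun t ht => ne_of_gt ht))
      have := (Complex.continuous_re.tendsto _).comp this
      exact this
    have hnonneg : ∀ t ∈ Set.Ioi (0 : ℝ), 0 ≤ (slope (fun t : ℝ => ψ t) 0 t).re := by
      intro t ht
      have ht' : (0:ℝ) < t := ht
      have hre : 0 ≤ (z + (t : ℂ)).re := by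
        simp only [Complex.add_re, Complex.ofReal_re]; linarith
      have hψ0 : ψ (0 : ℝ) = 0 := by simp [hψdef, hgdef, hz1]
      rw [slope_def_module]
      simp only [hψ0, sub_zero, sub_zero]
      rw [Complex.real_smul, Complex.re_ofReal_mul]
      have := hC (z + (t : ℂ)) hre
      positivity
    have : (0:ℝ) ≤ -1 := by
      refine ge_of_tendsto hslope' ?_
      filter_upwards [self_mem_nhdsWithin] using hnonneg
    linarith
  · -- interior case: use the logarithmic derivative estimate
    have hroots : ∀ r ∈ Q₁.roots, r.re ≤ 0 := by
      intro r hr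
      by_contra hc
      push_neg at hc
      exact hL2 hQ1 r hc ((Polynomial.mem_roots hQ1).mp hr)
    have hlog := logderiv_re_nonneg Q₁.natDegree Q₁ rfl hroots z hz hz1
    rw [hd1] at hlog
    have := hB z hz hz1
    rw [neg_div, Complex.neg_re] at hlog
    have : (Q₀ z / Q₁.eval z).re ≤ 0 := by linarith
    linarith [hB z hz hz1]
end

section
/- Let Q_0 be a function holomorphic on the open right half-plane A = {z ∈ ℂ : Re z > 0}, and let Q_1 be a polynomial. If Q_0(w) + v·Q_1(w) ≠ 0 for all v, w ∈ A, then the function S(z) = Q_0(z) + Q_1'(z) either has no zeros in A or vanishes identically on A. -/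
open Polynomial Filter Metric Set

private lemma logderiv_zero_deg (Q : Polynomial ℂ) (hd : Q.natDegree = 0) (z : ℂ) :
    (Polynomial.derivative Q).eval z / Q.eval z = 0 := by
  obtain ⟨a, rfl⟩ := Polynomial.natDegree_eq_zero.mp hd
  simp

private lemma logderiv_aux : ∀ n : ℕ, ∀ Q : Polynomial ℂ, Q.natDegree ≤ n →
    (∀ z : ℂ, 0 < z.re → Q.eval z ≠ 0) → ∀ z : ℂ, 0 < z.re →
    0 ≤ ((Polynomial.derivative Q).eval z / Q.eval z).re ∧
      (0 < Q.natDegree → 0 < ((Polynomial.derivative Q).eval z / Q.eval z).re) := by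
  intro n
  induction n with
  | zero =>
    intro Q hdeg _ z _
    have hd : Q.natDegree = 0 := Nat.le_zero.mp hdeg
    rw [logderiv_zero_deg Q hd]
    simp [hd]
  | succ n ih =>
    intro Q hdeg hQ z hz
    rcases Nat.eq_zero_or_pos Q.natDegree with hd | hd
    · rw [logderiv_zero_deg Q hd]
      simp [hd]
    · obtain ⟨a, ha⟩ := Complex.exists_root (Polynomial.natDegree_pos_iff_degree_pos.mp hd)
      set R := Q /ₘ (X - C a) with hRdef
      have hfac : (X - C a) * R = Q := Polynomial.mul_divByMonic_eq_iff_isRoot.mpr ha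
      have haRe : a.re ≤ 0 := by
        by_contra hc
        exact hQ a (lt_of_not_ge hc) ha
      have hu : z - a ≠ 0 := by
        intro hza
        rw [sub_eq_zero] at hza
        subst hza
        linarith
      have hRz : ∀ w : ℂ, 0 < w.re → R.eval w ≠ 0 := by
        intro w hw hRw
        apply hQ w hw
        rw [← hfac, Polynomial.eval_mul, hRw, mul_zero]
      have hdegR : R.natDegree ≤ n := by
        have := Polynomial.natDegree_divByMonic Q (Polynomial.monic_X_sub_C a)
        rw [← hRdef, Polynomial.natDegree_X_sub_C] at this
        omega
      have hkey : (Polynomial.derivative Q).eval z / Q.eval z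
          = (z - a)⁻¹ + (Polynomial.derivative R).eval z / R.eval z := by
        rw [← hfac, Polynomial.derivative_mul, Polynomial.derivative_X_sub_C]
        simp only [Polynomial.eval_mul, Polynomial.eval_add, Polynomial.eval_one,
          Polynomial.eval_sub, Polynomial.eval_X, Polynomial.eval_C, one_mul]
        field_simp [hRz z hz]
      have h1 : 0 < ((z - a)⁻¹).re := by
        rw [Complex.inv_re]
        apply div_pos
        · simp only [Complex.sub_re]; linarith
        · have : z - a ≠ 0 := hu
          simpa [Complex.normSq_pos] using this
      have h2 := (ih R hdegR hRz z hz).1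
      constructor
      · rw [hkey, Complex.add_re]; linarith
      · intro _
        rw [hkey, Complex.add_re]; linarith

theorem stmt_13 (Q₀ : ℂ → ℂ) (hQ₀ : DifferentiableOn ℂ Q₀ {z : ℂ | 0 < z.re})
    (Q₁ : Polynomial ℂ)
    (h : ∀ v w : ℂ, 0 < v.re → 0 < w.re → Q₀ w + v * Q₁.eval w ≠ 0) :
    (∀ z : ℂ, 0 < z.re → Q₀ z + (Polynomial.derivative Q₁).eval z ≠ 0) ∨
    (∀ z : ℂ, 0 < z.re → Q₀ z + (Polynomial.derivative Q₁).eval z = 0) := by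
  have hAopen : IsOpen {z : ℂ | 0 < z.re} := by
    exact isOpen_lt continuous_const Complex.continuous_re
  have hQ₀A : AnalyticOnNhd ℂ Q₀ {z : ℂ | 0 < z.re} := hQ₀.analyticOnNhd hAopen
  -- trivial case: Q₁ = 0
  by_cases hQ1 : Q₁ = 0
  · left
    intro z hz
    have := h 1 z (by norm_num) hz
    simpa [hQ1] using this
  -- Q₁ does not vanish on the half-plane
  have hC : ∀ w : ℂ, 0 < w.re → Q₁.eval w ≠ 0 := by
    intro w₀ hw₀ hv
    have hQ₀w₀ : Q₀ w₀ ≠ 0 := by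
      have := h 1 w₀ (by norm_num) hw₀
      simpa [hv] using this
    set g : ℂ → ℂ := fun z => -Q₁.eval z / Q₀ z with hgdef
    have hganal : AnalyticAt ℂ g w₀ := by
      exact ((Q₁.differentiable.analyticAt w₀).neg).div (hQ₀A w₀ hw₀) hQ₀w₀
    have hg0 : g w₀ = 0 := by simp [hgdef, hv]
    have hQ₀ne : ∀ᶠ z in nhds w₀, Q₀ z ≠ 0 :=
      (hQ₀A w₀ hw₀).continuousAt.eventually_ne hQ₀w₀
    rcases hganal.eventually_constant_or_nhds_le_map_nhds with hcst | hmap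
    · -- g is locally 0, so Q₁ has infinitely many roots, so Q₁ = 0
      rw [hg0] at hcst
      have hroot : ∀ᶠ z in nhds w₀, Q₁.IsRoot z := by
        filter_upwards [hcst, hQ₀ne] with z h1 h2
        have : -Q₁.eval z = 0 := by
          rcases div_eq_zero_iff.mp h1 with h | h
          · exact h
          · exact absurd h h2
        simpa [Polynomial.IsRoot] using neg_eq_zero.mp this
      exact hQ1 (Polynomial.eq_zero_of_infinite_isRoot Q₁
        (infinite_of_mem_nhds w₀ (Filter.eventually_iff.mp hroot)))
    · -- open mapping: g takes a small positive real value t, contradiction with h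
      rw [hg0] at hmap
      set U : Set ℂ := {z : ℂ | 0 < z.re} ∩ {z : ℂ | Q₀ z ≠ 0} with hUdef
      have hU : U ∈ nhds w₀ :=
        Filter.inter_mem (hAopen.mem_nhds hw₀) hQ₀ne
      have himg : g '' U ∈ nhds 0 := by
        apply hmap
        rw [Filter.mem_map]
        exact Filter.mem_of_superset hU (Set.subset_preimage_image g U)
      obtain ⟨ε, hε, hball⟩ := Metric.mem_nhds_iff.mp himg
      have htball : ((ε / 2 : ℝ) : ℂ) ∈ Metric.ball (0 : ℂ) ε := by
        rw [mem_ball_zero_iff, Complex.norm_real, Real.norm_eq_abs,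
          abs_of_pos (by linarith : (0:ℝ) < ε / 2)]
        linarith
      obtain ⟨w, hwU, hgw⟩ := hball htball
      have hwA : 0 < w.re := hwU.1
      have hQ₀w : Q₀ w ≠ 0 := hwU.2
      have ht : (ε / 2 : ℝ) ≠ 0 := by positivity
      have hQ₁w : Q₁.eval w = -((ε / 2 : ℝ) : ℂ) * Q₀ w := by
        have h1 : -Q₁.eval w / Q₀ w = ((ε / 2 : ℝ) : ℂ) := hgw
        rw [div_eq_iff hQ₀w] at h1
        linear_combination -h1
      have hvre : 0 < ((((ε / 2)⁻¹ : ℝ)) : ℂ).re := by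
        simp only [Complex.ofReal_re]
        positivity
      apply h ((((ε / 2)⁻¹ : ℝ)) : ℂ) w hvre hwA
      have hne : ((ε / 2 : ℝ) : ℂ) ≠ 0 := by exact_mod_cast ht
      rw [hQ₁w, Complex.ofReal_inv, neg_mul, mul_neg, ← mul_assoc,
        inv_mul_cancel₀ hne, one_mul, add_neg_cancel]
  -- Re (Q₀ / Q₁) ≥ 0 on the half-plane
  have hRe : ∀ w : ℂ, 0 < w.re → 0 ≤ (Q₀ w / Q₁.eval w).re := by
    intro w hw
    by_contra hneg
    push_neg at hneg
    have hvre : 0 < (-(Q₀ w / Q₁.eval w)).re := by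
      rw [Complex.neg_re]; linarith
    apply h (-(Q₀ w / Q₁.eval w)) w hvre hw
    rw [neg_mul, div_mul_cancel₀ _ (hC w hw), add_neg_cancel]
  rcases Nat.eq_zero_or_pos Q₁.natDegree with hd | hd
  · -- Q₁ is a nonzero constant c ; S = Q₀ and Re (Q₀ / c) ≥ 0
    have hQ1C : Q₁ = C (Q₁.coeff 0) := Polynomial.eq_C_of_natDegree_eq_zero hd
    set c : ℂ := Q₁.coeff 0 with hcdef
    have hc : c ≠ 0 := by
      intro h0
      apply hQ1
      rw [hQ1C, h0, map_zero]
    have hder : Polynomial.derivative Q₁ = 0 := by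
      rw [hQ1C]; simp
    by_cases hzero : ∃ z : ℂ, 0 < z.re ∧ Q₀ z = 0
    · right
      obtain ⟨z₀, hz₀, hQz₀⟩ := hzero
      rcases (hQ₀A z₀ hz₀).eventually_constant_or_nhds_le_map_nhds with hcst | hmap
      · -- Q₀ is locally 0, hence identically 0 on the half-plane
        rw [hQz₀] at hcst
        have hEq : Set.EqOn Q₀ 0 {z : ℂ | 0 < z.re} := by
          apply hQ₀A.eqOn_zero_of_preconnected_of_eventuallyEq_zero
            ((convex_halfSpace_re_gt 0).isPreconnected) hz₀
          exact hcst
        intro z hz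
        rw [hder]
        simp [hEq hz]
      · -- open mapping: Q₀ takes a value p with Re (p / c) < 0, contradiction
        exfalso
        rw [hQz₀] at hmap
        have himg : Q₀ '' {z : ℂ | 0 < z.re} ∈ nhds 0 := by
          apply hmap
          rw [Filter.mem_map]
          exact Filter.mem_of_superset (hAopen.mem_nhds hz₀)
            (Set.subset_preimage_image Q₀ _)
        obtain ⟨ε, hε, hball⟩ := Metric.mem_nhds_iff.mp himg
        set p : ℂ := -((ε / 2 : ℝ) : ℂ) * (c / ((‖c‖ : ℝ) : ℂ)) with hpdef
        have hcnorm : (‖c‖ : ℝ) ≠ 0 := by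
          simpa using hc
        have hpball : p ∈ Metric.ball (0 : ℂ) ε := by
          rw [mem_ball_zero_iff, hpdef]
          rw [norm_mul, norm_div, norm_neg, Complex.norm_real, Complex.norm_real,
            Real.norm_eq_abs, Real.norm_eq_abs,
            abs_of_pos (by linarith : (0:ℝ) < ε / 2), abs_of_nonneg (norm_nonneg c),
            div_self hcnorm, mul_one]
          linarith
        obtain ⟨w, hwA, hQw⟩ := hball hpball
        have hre := hRe w hwA
        rw [hQ1C, Polynomial.eval_C, hQw] at hre
        have : -((ε / 2 : ℝ) : ℂ) * (c / ((‖c‖ : ℝ) : ℂ)) / c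
            = ((-(ε / 2) / ‖c‖ : ℝ) : ℂ) := by
          rw [mul_div_assoc, div_div, mul_comm (((‖c‖ : ℝ) : ℂ)) c, ← div_div,
            div_self hc]
          push_cast
          ring
        rw [this] at hre
        simp only [Complex.ofReal_re] at hre
        have : -(ε / 2) / ‖c‖ < 0 := by
          apply div_neg_of_neg_of_pos
          · linarith
          · exact lt_of_le_of_ne (norm_nonneg c) (Ne.symm hcnorm)
        linarith
    · left
      push_neg at hzero
      intro z hz
      rw [hder]
      simpa using hzero z hz
  · -- deg Q₁ ≥ 1 : Re ((Q₀ + Q₁')/Q₁) > 0 on the half-plane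
    left
    intro z hz hS
    have hlog := (logderiv_aux Q₁.natDegree Q₁ le_rfl hC z hz).2 hd
    have hre := hRe z hz
    have : ((Q₀ z + (Polynomial.derivative Q₁).eval z) / Q₁.eval z).re
        = (Q₀ z / Q₁.eval z).re + ((Polynomial.derivative Q₁).eval z / Q₁.eval z).re := by
      rw [add_div, Complex.add_re]
    rw [hS] at this
    simp only [zero_div, Complex.zero_re] at this
    linarith
end
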